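/- arXiv:2410.13417 — 13 statements merged into one kernel-verified Lean document; each statement's English description precedes it below -/
import Mathlib

section
/- Let K be a second countable compact topological group with Haar probability measure μ, let K₀ ≤ K be a closed subgroup, and let λ : K → K/K₀ be the map sending x to its left coset xK₀. If 𝒰 ⊆ K is a Borel set with μ(𝒰) > 0 such that the restriction of λ to 𝒰 is finite-to-one (each fiber λ⁻¹(y) ∩ 𝒰 is finite), then K₀ is finite. -/
/-!
Suppose `K₀` is infinite and let `ν` be a Haar measure on the compact group `K₀`.
Finitely many points of an infinite group admit arbitrarily many pairwise disjoint translates,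
so `ν` vanishes on finite measurable sets; in particular on `{k ∈ K₀ | x k ∈ 𝒰}`, which embeds
into the fibre of `𝒰` over `x K₀`. A compact group is unimodular, so by Fubini
`∫ ν {k | x k ∈ 𝒰} dμ(x) = ∫ μ (𝒰 k⁻¹) dν(k) = μ 𝒰 · ν K₀ > 0`, a contradiction.
-/

open MeasureTheory
open scoped Pointwise

theorem Set.Finite.exists_finset_card_pairwiseDisjoint_smul {G : Type*} [Group G] [Infinite G]
    {S : Set G} (hS : S.Finite) (n : ℕ) :
    ∃ F : Finset G, F.card = n ∧ (F : Set G).PairwiseDisjoint (· • S) := by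
  classical
  induction n with
  | zero => exact ⟨∅, rfl, by simp⟩
  | succ n ih =>
    obtain ⟨F, hcard, hdisj⟩ := ih
    have hbad : ((F : Set G) ∪ (F : Set G) * S * S⁻¹).Finite :=
      F.finite_toSet.union ((F.finite_toSet.mul hS).mul hS.inv)
    obtain ⟨g, hg⟩ := hbad.exists_notMem
    rw [Set.mem_union, not_or] at hg
    refine ⟨insert g F, by rw [Finset.card_insert_of_notMem hg.1, hcard], ?_⟩
    rw [Finset.coe_insert]
    refine hdisj.insert fun f hf _ => Set.disjoint_left.mpr ?_
    rintro _ ⟨s, hs, rfl⟩ ⟨t, ht, hts⟩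
    exact hg.2 ⟨f * t, ⟨f, hf, t, ht, rfl⟩, s⁻¹, Set.inv_mem_inv.mpr hs, by
      simp only [smul_eq_mul] at hts; simp [hts]⟩

theorem Set.Finite.measure_eq_zero_of_isMulLeftInvariant {G : Type*} [Group G] [Infinite G]
    [MeasurableSpace G] [MeasurableMul G] (ν : Measure G) [IsFiniteMeasure ν]
    [ν.IsMulLeftInvariant] {S : Set G} (hfin : S.Finite) (hS : MeasurableSet S) :
    ν S = 0 := by
  by_contra hpos
  obtain ⟨n, hn⟩ := ENNReal.exists_nat_mul_gt hpos (measure_ne_top ν Set.univ)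
  obtain ⟨F, hcard, hdisj⟩ := hfin.exists_finset_card_pairwiseDisjoint_smul n
  have htranslates : ν (⋃ g ∈ F, g • S) = n * ν S := by
    rw [measure_biUnion_finset hdisj fun g _ => hS.const_smul g]
    simp [measure_smul, hcard]
  exact (htranslates ▸ measure_mono (Set.subset_univ _)).not_gt hn

theorem MeasureTheory.Measure.IsHaarMeasure.isMulRightInvariant_of_isProbabilityMeasure
    {G : Type*} [Group G] [TopologicalSpace G] [IsTopologicalGroup G] [LocallyCompactSpace G]
    [MeasurableSpace G] [BorelSpace G] (μ : Measure G) [μ.IsHaarMeasure]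
    [IsProbabilityMeasure μ] : μ.IsMulRightInvariant where
  map_mul_right_eq_self g := by
    have : IsProbabilityMeasure (μ.map (· * g)) :=
      Measure.isProbabilityMeasure_map (measurable_mul_const g).aemeasurable
    exact Measure.isHaarMeasure_eq_of_isProbabilityMeasure _ _

theorem MeasureTheory.lintegral_measure_setOf_mul_mem {G α : Type*} [Group G]
    [MeasurableSpace G] [MeasurableMul₂ G] [MeasurableSpace α] (μ : Measure G) [SFinite μ]
    [μ.IsMulRightInvariant] (ν : Measure α) [SFinite ν] {φ : α → G} (hφ : Measurable φ)
    {U : Set G} (hU : MeasurableSet U) :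
    ∫⁻ x, ν {a | x * φ a ∈ U} ∂μ = μ U * ν Set.univ := by
  have hmeas : MeasurableSet {p : G × α | p.1 * φ p.2 ∈ U} :=
    (measurable_fst.mul (hφ.comp measurable_snd)) hU
  calc ∫⁻ x, ν {a | x * φ a ∈ U} ∂μ
      = μ.prod ν {p | p.1 * φ p.2 ∈ U} := (Measure.prod_apply hmeas).symm
    _ = ∫⁻ a, μ ((· * φ a) ⁻¹' U) ∂ν := Measure.prod_apply_symm hmeas
    _ = μ U * ν Set.univ := by simp [measure_preimage_mul_right]

/-- If `K` is a second countable compact group with Haar probability measure `μ`,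
`K₀ ≤ K` is a closed subgroup, `𝒰 ⊆ K` is a Borel set of positive measure on which the
coset map `K → K/K₀` is finite-to-one, then `K₀` is finite. -/
theorem finite_subgroup_of_finite_to_one_on_nonnull
    {K : Type*} [Group K] [TopologicalSpace K] [IsTopologicalGroup K]
    [CompactSpace K] [SecondCountableTopology K]
    [MeasurableSpace K] [BorelSpace K]
    (μ : Measure K) [μ.IsHaarMeasure] [IsProbabilityMeasure μ]
    (K₀ : Subgroup K) (hK₀ : IsClosed (K₀ : Set K))
    (𝒰 : Set K) (h𝒰 : MeasurableSet 𝒰) (hpos : 0 < μ 𝒰)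
    (hfin : ∀ y : K ⧸ K₀, (𝒰 ∩ QuotientGroup.mk ⁻¹' {y}).Finite) :
    Finite K₀ := by
  by_contra hinf
  have : Infinite K₀ := not_finite_iff_infinite.mp hinf
  have : CompactSpace K₀ := isCompact_iff_compactSpace.mp hK₀.isCompact
  have : BorelSpace K₀ := Subtype.borelSpace _
  have := Measure.IsHaarMeasure.isMulRightInvariant_of_isProbabilityMeasure μ
  let ν : Measure K₀ := Measure.haar
  have hslice_null (x : K) : ν {k | x * (k : K) ∈ 𝒰} = 0 := by
    have hslice_fin : {k : K₀ | x * (k : K) ∈ 𝒰}.Finite := by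
      have hinj : Function.Injective fun k : K₀ => x * (k : K) :=
        (mul_right_injective x).comp Subtype.val_injective
      refine ((hfin x).preimage hinj.injOn).subset fun k hk => ⟨hk, ?_⟩
      simp [QuotientGroup.mk_mul_of_mem x k.2]
    exact hslice_fin.measure_eq_zero_of_isMulLeftInvariant ν
      ((measurable_const_mul x).comp measurable_subtype_coe h𝒰)
  have hfubini := lintegral_measure_setOf_mul_mem μ ν measurable_subtype_coe h𝒰
  simp only [hslice_null, lintegral_zero] at hfubini
  exact (ENNReal.mul_pos hpos.ne' (isOpen_univ.measure_pos ν Set.univ_nonempty).ne').ne hfubini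
end

section
/- Let G be a countable group that has only countably many finite index subgroups. Let G₀ ≤ G be a finite index subgroup and let G₀ᵃᵇ = G₀/[G₀,G₀] denote its abelianization, written additively. Then for every integer n ≥ 1, the subgroup n·G₀ᵃᵇ = {n·x : x ∈ G₀ᵃᵇ} has finite index in G₀ᵃᵇ. -/
/-!
Write `A` for the abelianization of `G₀` and `A^m` for its subgroup of `m`-th powers. Finite
index subgroups of `G₀` are finite index subgroups of `G`, and those of `A` pull back to `G₀`,
so `A` has only countably many finite index subgroups. As `[A : A^{mk}] = [A^m : A^{mk}] [A : A^m]`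
and `x ↦ x^m` maps `A^k` onto `A^{mk}`, it suffices to treat a prime `n = p`. If `A^p` had
infinite index, `A / A^p` would be an infinite-dimensional `𝔽_p`-vector space; the kernels of
the functionals taking the value `1` on a subset `S` of a basis and `0` off it are distinct
finite index subgroups, one for each `S`, hence uncountably many.
-/

open Function

instance Set.instUncountableOfInfinite {α : Type*} [Infinite α] : Uncountable (Set α) :=
  Cardinal.aleph0_lt_mk_iff.mp <|
    (Cardinal.aleph0_le_mk α).trans_lt <| by rw [Cardinal.mk_set]; exact Cardinal.cantor _

namespace Subgroup

variable {G G' : Type*} [Group G] [Group G']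

theorem countable_finiteIndex_of_surjective {f : G →* G'} (hf : Surjective f)
    (h : Countable {H : Subgroup G // H.FiniteIndex}) :
    Countable {H : Subgroup G' // H.FiniteIndex} := by
  refine Injective.countable (f := fun H ↦
    (⟨H.1.comap f, ⟨by rw [index_comap_of_surjective _ hf]; exact H.2.1⟩⟩ :
      {H : Subgroup G // H.FiniteIndex})) fun H K hHK ↦ ?_
  exact Subtype.ext (comap_injective hf (congrArg Subtype.val hHK))

theorem countable_finiteIndex_of_finiteIndex {K : Subgroup G} (hK : K.FiniteIndex)
    (h : Countable {H : Subgroup G // H.FiniteIndex}) :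
    Countable {H : Subgroup K // H.FiniteIndex} := by
  refine Injective.countable (f := fun H ↦
    (⟨H.1.map K.subtype, ⟨by rw [index_map_subtype]; exact mul_ne_zero H.2.1 hK.1⟩⟩ :
      {H : Subgroup G // H.FiniteIndex})) fun H H' hHH' ↦ ?_
  exact Subtype.ext (map_injective K.subtype_injective (congrArg Subtype.val hHH'))

end Subgroup

theorem AddSubgroup.uncountable_finiteIndex_of_module (K V : Type*) [Field K] [Finite K]
    [AddCommGroup V] [Module K V] [Infinite V] :
    Uncountable {H : AddSubgroup V // H.FiniteIndex} := by
  let b := Module.Basis.ofVectorSpace K V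
  have : Infinite (Module.Basis.ofVectorSpaceIndex K V) := by
    by_contra hfin
    have : Finite (Module.Basis.ofVectorSpaceIndex K V) := not_infinite_iff_finite.mp hfin
    have : Module.Finite K V := Module.Finite.of_basis b
    have : Finite V := Module.finite_of_finite K
    exact not_finite V
  let φ : Set (Module.Basis.ofVectorSpaceIndex K V) → V →ₗ[K] K :=
    fun S ↦ b.constr K (S.indicator 1)
  have mem_ker (S i) : b i ∈ (φ S).toAddMonoidHom.ker ↔ i ∉ S := by
    simp [φ, Set.indicator_apply_eq_zero]
  refine Injective.uncountable (f := fun S ↦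
    (⟨(φ S).toAddMonoidHom.ker, inferInstance⟩ : {H : AddSubgroup V // H.FiniteIndex}))
    fun S T hST ↦ ?_
  ext i
  simpa [mem_ker, not_iff_not] using congrArg (b i ∈ ·.1) hST

namespace CommGroup

variable {A : Type*} [CommGroup A]

theorem uncountable_finiteIndex_of_pow_prime_eq_one [Infinite A] {p : ℕ} [Fact p.Prime]
    (h : ∀ x : A, x ^ p = 1) : Uncountable {H : Subgroup A // H.FiniteIndex} := by
  let _ : Module (ZMod p) (Additive A) := AddCommGroup.zmodModule fun x ↦ h x.toMul
  have : Infinite (Additive A) := ‹Infinite A›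
  have := AddSubgroup.uncountable_finiteIndex_of_module (ZMod p) (Additive A)
  exact Injective.uncountable (f := fun H : {H : AddSubgroup (Additive A) // H.FiniteIndex} ↦
    (⟨AddSubgroup.toSubgroup' H.1, ⟨H.2.1⟩⟩ : {H : Subgroup A // H.FiniteIndex}))
    fun H K hHK ↦ Subtype.ext (AddSubgroup.toSubgroup'.injective (congrArg Subtype.val hHK))

theorem finiteIndex_range_powMonoidHom_mul {m k : ℕ}
    (hm : (powMonoidHom m : A →* A).range.FiniteIndex)
    (hk : (powMonoidHom k : A →* A).range.FiniteIndex) :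
    (powMonoidHom (m * k) : A →* A).range.FiniteIndex := by
  have hle : (powMonoidHom (m * k) : A →* A).range ≤ (powMonoidHom m).range := by
    rintro _ ⟨x, rfl⟩
    exact ⟨x ^ k, (pow_mul' x m k).symm⟩
  have hmap : (powMonoidHom k : A →* A).range.map (powMonoidHom m).rangeRestrict =
      (powMonoidHom (m * k) : A →* A).range.subgroupOf (powMonoidHom m).range := by
    ext ⟨_, x, rfl⟩
    simp [Subgroup.mem_subgroupOf, Subtype.ext_iff, ← pow_mul']
  have hrel : ((powMonoidHom (m * k) : A →* A).range.relIndex (powMonoidHom m).range) ∣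
      (powMonoidHom k : A →* A).range.index := by
    rw [Subgroup.relIndex, ← hmap]
    exact Subgroup.index_map_dvd _ (MonoidHom.rangeRestrict_surjective _)
  rw [Subgroup.finiteIndex_iff, ← Subgroup.relIndex_mul_index hle]
  exact mul_ne_zero (ne_zero_of_dvd_ne_zero hk.1 hrel) hm.1

theorem finiteIndex_range_powMonoidHom_of_forall_prime
    (h : ∀ p : ℕ, p.Prime → (powMonoidHom p : A →* A).range.FiniteIndex) {n : ℕ}
    (hn : n ≠ 0) :
    (powMonoidHom n : A →* A).range.FiniteIndex := by
  induction n using Nat.recOnMul with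
  | zero => exact (hn rfl).elim
  | one =>
    rw [MonoidHom.range_eq_top.mpr fun x ↦ ⟨x, pow_one x⟩]
    infer_instance
  | prime p hp => exact h p hp
  | mul m k ihm ihk =>
    obtain ⟨hm, hk⟩ := mul_ne_zero_iff.mp hn
    exact finiteIndex_range_powMonoidHom_mul (ihm hm) (ihk hk)

theorem finiteIndex_range_powMonoidHom (hA : Countable {H : Subgroup A // H.FiniteIndex})
    {n : ℕ} (hn : n ≠ 0) : (powMonoidHom n : A →* A).range.FiniteIndex := by
  refine finiteIndex_range_powMonoidHom_of_forall_prime (fun p hp ↦ ?_) hn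
  have : Fact p.Prime := ⟨hp⟩
  set P := (powMonoidHom p : A →* A).range
  by_contra hP
  have : Infinite (A ⧸ P) := by
    rwa [Subgroup.finiteIndex_iff_finite_quotient, not_finite_iff_infinite] at hP
  have hexp (x : A ⧸ P) : x ^ p = 1 := by
    induction x using QuotientGroup.induction_on with
    | H x => exact (QuotientGroup.eq_one_iff _).mpr ⟨x, rfl⟩
  exact (uncountable_finiteIndex_of_pow_prime_eq_one hexp).not_countable
    (Subgroup.countable_finiteIndex_of_surjective (QuotientGroup.mk'_surjective P) hA)

end CommGroup

theorem finiteIndex_nsmul_abelianization_general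
    (G : Type*) [Group G]
    (hcnt : Countable {H : Subgroup G // H.FiniteIndex})
    (G₀ : Subgroup G) (hG₀ : G₀.FiniteIndex) (n : ℕ) (hn : 1 ≤ n) :
    ((powMonoidHom n : Abelianization G₀ →* Abelianization G₀).range).FiniteIndex :=
  CommGroup.finiteIndex_range_powMonoidHom
    (Subgroup.countable_finiteIndex_of_surjective (QuotientGroup.mk'_surjective _)
      (Subgroup.countable_finiteIndex_of_finiteIndex hG₀ hcnt))
    (Nat.one_le_iff_ne_zero.mp hn)

/-- If `G` is a countable group with only countably many finite index subgroups,
`G₀ ≤ G` has finite index, and `n ≥ 1`, then the subgroup of `n`-th multiples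
(i.e. the image of the `n`-th power map) of the abelianization of `G₀`
has finite index in the abelianization of `G₀`. -/
theorem finiteIndex_nsmul_abelianization
    (G : Type*) [Group G] [Countable G]
    (hcnt : Countable {H : Subgroup G // H.FiniteIndex})
    (G₀ : Subgroup G) (hG₀ : G₀.FiniteIndex) (n : ℕ) (hn : 1 ≤ n) :
    ((powMonoidHom n : Abelianization G₀ →* Abelianization G₀).range).FiniteIndex :=
  finiteIndex_nsmul_abelianization_general G hcnt G₀ hG₀ n hn
end

section
/- Let a group Γ act by automorphisms α on a group Σ, let C be an abelian group, and let G = Σ ⋊ Γ be the semidirect product with multiplication (a,g)·(b,h) = (a α_g(b), gh). Let 𝒵(Γ↷Σ,C) be the abelian group of maps η : Γ × Σ → C satisfying η(g,ab) = η(g,a) + η(g,b) and η(gh,a) = η(g,α_h(a)) + η(h,a) for all g,h ∈ Γ, a,b ∈ Σ; let ℬ(Γ↷Σ,C) ≤ 𝒵(Γ↷Σ,C) be the subgroup of maps of the form η(g,a) = φ(α_g(a)) − φ(a) for some group homomorphism φ : Σ → C, and let ℋ(Γ↷Σ,C) be the quotient group. Then the map Ψ : H²(Γ,C) ⊕ ℋ(Γ↷Σ,C)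 → H²(G,C) induced by (Ψ(ω,η))((a,g),(b,h)) = ω(g,h) + η(g,b) is a well-defined injective group homomorphism, and its image is exactly the kernel of the restriction homomorphism H²(G,C) → H²(Σ,C) obtained by restricting cocycles to the subgroup Σ × {e} of G. -/
/-- A normalized 2-cocycle on a group `G` with values in an abelian group `C`. -/
def IsCocycle {G C : Type*} [Group G] [AddCommGroup C] (Ω : G → G → C) : Prop :=
  (∀ g h k, Ω g h + Ω (g * h) k = Ω g (h * k) + Ω h k) ∧
  (∀ g, Ω g 1 = 0) ∧ (∀ g, Ω 1 g = 0)

/-- A 2-coboundary on a group `G` with values in an abelian group `C`. -/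
def IsCoboundary {G C : Type*} [Group G] [AddCommGroup C] (Ω : G → G → C) : Prop :=
  ∃ F : G → C, F 1 = 0 ∧ ∀ g h, Ω g h = F g + F h - F (g * h)

/-- An element of `𝒵(Γ ↷ Σ, C)` for the action `α` of `Γ` on `N`. -/
def IsActionCocycle {Γ N C : Type*} [Group Γ] [Group N] [AddCommGroup C]
    (α : Γ →* MulAut N) (η : Γ → N → C) : Prop :=
  (∀ (g : Γ) (a b : N), η g (a * b) = η g a + η g b) ∧
  (∀ (g h : Γ) (a : N), η (g * h) a = η g (α h a) + η h a)

/-- An element of `ℬ(Γ ↷ Σ, C)` for the action `α` of `Γ` on `N`. -/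
def IsActionCoboundary {Γ N C : Type*} [Group Γ] [Group N] [AddCommGroup C]
    (α : Γ →* MulAut N) (η : Γ → N → C) : Prop :=
  ∃ φ : N → C, (∀ a b : N, φ (a * b) = φ a + φ b) ∧
    ∀ (g : Γ) (a : N), η g a = φ (α g a) - φ a

/-!
Every cocycle `Ω` on `G = N ⋊ Γ` whose restriction to `N` is a coboundary `∂F₀` becomes, after
subtracting `∂F` with `F (a, g) = F₀ a - Ω ((a, 1), (1, g))`, a cocycle vanishing on every pair
whose first entry lies in `N`. The cocycle identity then forces such a normalized cocycle to be
`Ψ(ω, η)`, with `ω` its restriction to `Γ` and `η g b = Ω ((1, g), (b, 1))`, and `η` inherits the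
identities of `𝒵` from the cocycle identity. If `Ψ(ω, η) = ∂F`, the restrictions of `F` to `Γ` and
to `N` witness that `ω` is a coboundary and `η ∈ ℬ`; conversely `F (a, g) = f g - φ a` is a
primitive of `Ψ(ω, η)`.
-/

open SemidirectProduct

section Cocycle

variable {G H C : Type*} [Group G] [Group H] [AddCommGroup C] {Ω : G → G → C}

theorem IsCocycle.comp (hΩ : IsCocycle Ω) (f : H →* G) :
    IsCocycle fun x y => Ω (f x) (f y) := by
  obtain ⟨hc, hr, hl⟩ := hΩ
  refine ⟨fun x y z => ?_, fun x => ?_, fun x => ?_⟩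
  · simpa only [map_mul] using hc (f x) (f y) (f z)
  · simpa only [map_one] using hr (f x)
  · simpa only [map_one] using hl (f x)

theorem IsCoboundary.comp (hΩ : IsCoboundary Ω) (f : H →* G) :
    IsCoboundary fun x y => Ω (f x) (f y) := by
  obtain ⟨F, hF1, hF⟩ := hΩ
  exact ⟨fun x => F (f x), by simpa only [map_one] using hF1,
    fun x y => by simpa only [map_mul] using hF (f x) (f y)⟩

theorem isCoboundary_zero : IsCoboundary fun _ _ : G => (0 : C) :=
  ⟨0, rfl, fun _ _ => by simp⟩

theorem IsCocycle.sub_coboundary (hΩ : IsCocycle Ω) {F : G → C} (hF : F 1 = 0) :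
    IsCocycle fun x y => Ω x y - (F x + F y - F (x * y)) := by
  obtain ⟨hc, hr, hl⟩ := hΩ
  refine ⟨fun x y z => ?_, fun x => ?_, fun x => ?_⟩
  · dsimp only
    rw [mul_assoc]
    linear_combination (norm := abel) hc x y z
  · simp [hr, hF]
  · simp [hl, hF]

end Cocycle

section SemidirectProduct

variable {Γ N C : Type*} [Group Γ] [Group N] [AddCommGroup C] {α : Γ →* MulAut N}

theorem SemidirectProduct.inr_mul_inl (g : Γ) (b : N) :
    (inr g * inl b : N ⋊[α] Γ) = inl (α g b) * inr g := by
  ext <;> simp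

namespace IsActionCocycle

variable {η : Γ → N → C}

theorem map_one_right (hη : IsActionCocycle α η) (g : Γ) : η g 1 = 0 := by
  simpa using hη.1 g 1 1

theorem map_one_left (hη : IsActionCocycle α η) (a : N) : η 1 a = 0 := by
  simpa using hη.2 1 1 a

end IsActionCocycle

variable (α) in
/-- The cocycle `Ψ(ω, η)` on `N ⋊ Γ`. -/
def semidirectCocycle (ω : Γ → Γ → C) (η : Γ → N → C) : N ⋊[α] Γ → N ⋊[α] Γ → C :=
  fun x y => ω x.right y.right + η x.right y.left

section SemidirectCocycle

variable {ω : Γ → Γ → C} {η : Γ → N → C}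

theorem semidirectCocycle_inr_inr (hη : IsActionCocycle α η) (g h : Γ) :
    semidirectCocycle α ω η (inr g) (inr h) = ω g h := by
  simp [semidirectCocycle, hη.map_one_right]

theorem semidirectCocycle_inl_inl (hω : IsCocycle ω) (hη : IsActionCocycle α η) (a b : N) :
    semidirectCocycle α ω η (inl a) (inl b) = 0 := by
  simp [semidirectCocycle, hω.2.2, hη.map_one_left]

theorem isCocycle_semidirectCocycle (hω : IsCocycle ω) (hη : IsActionCocycle α η) :
    IsCocycle (semidirectCocycle α ω η) := by
  refine ⟨fun x y z => ?_, fun x => ?_, fun x => ?_⟩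
  · simp only [semidirectCocycle, mul_right, mul_left, hη.1, hη.2]
    linear_combination (norm := abel) hω.1 x.right y.right z.right
  · simp [semidirectCocycle, hω.2.1, hη.map_one_right]
  · simp [semidirectCocycle, hω.2.2, hη.map_one_left]

theorem IsActionCocycle.of_isCocycle_semidirectCocycle (hω : IsCocycle ω)
    (hΨ : IsCocycle (semidirectCocycle α ω η)) : IsActionCocycle α η := by
  have hη1 (g : Γ) : η g 1 = 0 := by
    simpa [semidirectCocycle, hω.2.1] using hΨ.2.1 ⟨1, g⟩
  have h1η (a : N) : η 1 a = 0 := by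
    simpa [semidirectCocycle, hω.2.2] using hΨ.2.2 ⟨a, 1⟩
  refine ⟨fun g a b => ?_, fun g h a => ?_⟩
  · have := hΨ.1 ⟨1, g⟩ ⟨a, 1⟩ ⟨b, 1⟩
    simp only [semidirectCocycle, mul_right, mul_left, map_one, MulAut.one_apply, mul_one,
      hω.2.1, h1η] at this
    linear_combination (norm := abel) (-1 : ℤ) • this
  · have := hΨ.1 ⟨1, g⟩ ⟨1, h⟩ ⟨a, 1⟩
    simp only [semidirectCocycle, mul_right, mul_left, one_mul, mul_one, hω.2.1, hη1] at this
    linear_combination (norm := abel) this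

theorem isCoboundary_semidirectCocycle (hω : IsCoboundary ω) (hη : IsActionCoboundary α η) :
    IsCoboundary (semidirectCocycle α ω η) := by
  obtain ⟨f, hf1, hf⟩ := hω
  obtain ⟨φ, hφ, hηφ⟩ := hη
  have hφ1 : φ 1 = 0 := by simpa using hφ 1 1
  refine ⟨fun x => f x.right - φ x.left, by simp [hf1, hφ1], fun x y => ?_⟩
  simp only [semidirectCocycle, mul_right, mul_left, hf, hηφ, hφ]
  abel

theorem IsCoboundary.isActionCoboundary_of_semidirectCocycle (hω : IsCocycle ω)
    (hη : IsActionCocycle α η) (hΨ : IsCoboundary (semidirectCocycle α ω η)) :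
    IsActionCoboundary α η := by
  obtain ⟨F, -, hF⟩ := hΨ
  have hFinl (a b : N) : F (inl (a * b)) = F (inl a) + F (inl b) := by
    have := hF (inl a) (inl b)
    rw [semidirectCocycle_inl_inl hω hη, ← map_mul] at this
    linear_combination (norm := abel) this
  have hFinl_mul_inr (c : N) (g : Γ) : F (inl c * inr g) = F (inl c) + F (inr g) := by
    have := hF (inl c) (inr g)
    simp only [semidirectCocycle, right_inl, left_inr, right_inr, hω.2.2,
      hη.map_one_left, add_zero] at this
    linear_combination (norm := abel) this
  refine ⟨fun a => -F (inl a), fun a b => by simp only [hFinl]; abel, fun g b => ?_⟩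
  have := hF (inr g) (inl b)
  simp only [semidirectCocycle, left_inl, right_inl, right_inr, hω.2.1, zero_add, inr_mul_inl,
    hFinl_mul_inr] at this
  change η g b = -F (inl (α g b)) - -F (inl b)
  rw [this]
  abel

theorem isCoboundary_semidirectCocycle_iff (hω : IsCocycle ω) (hη : IsActionCocycle α η) :
    IsCoboundary (semidirectCocycle α ω η) ↔ IsCoboundary ω ∧ IsActionCoboundary α η := by
  refine ⟨fun hΨ => ⟨?_, hΨ.isActionCoboundary_of_semidirectCocycle hω hη⟩,
    fun h => isCoboundary_semidirectCocycle h.1 h.2⟩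
  simpa only [semidirectCocycle_inr_inr hη] using hΨ.comp (inr : Γ →* N ⋊[α] Γ)

end SemidirectCocycle

namespace IsCocycle

variable {Ω : N ⋊[α] Γ → N ⋊[α] Γ → C} (hΩ : IsCocycle Ω)
  (hinl : ∀ a b, Ω (inl a) (inl b) = 0) (hinl_inr : ∀ a g, Ω (inl a) (inr g) = 0)
include hΩ hinl hinl_inr

theorem apply_inl_left (a : N) (z : N ⋊[α] Γ) : Ω (inl a) z = 0 := by
  have := hΩ.1 (inl a) (inl z.left) (inr z.right)
  simp only [← map_mul, hinl, hinl_inr, inl_left_mul_inr_right, add_zero] at this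
  exact this.symm

theorem apply_inl_mul_inr_left (c : N) (g : Γ) (z : N ⋊[α] Γ) :
    Ω (inl c * inr g) z = Ω (inr g) z := by
  have := hΩ.1 (inl c) (inr g) z
  rwa [hinl_inr, apply_inl_left hΩ hinl hinl_inr, zero_add, zero_add] at this

theorem eq_semidirectCocycle :
    Ω = semidirectCocycle α (fun g h => Ω (inr g) (inr h)) (fun g b => Ω (inr g) (inl b)) := by
  ext x y
  have := hΩ.1 (inr x.right) (inl y.left) (inr y.right)
  rw [inr_mul_inl, apply_inl_mul_inr_left hΩ hinl hinl_inr, hinl_inr, add_zero,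
    inl_left_mul_inr_right] at this
  rw [← inl_left_mul_inr_right x, apply_inl_mul_inr_left hΩ hinl hinl_inr, semidirectCocycle,
    ← this, add_comm]
  simp

end IsCocycle

theorem IsCocycle.exists_sub_coboundary_inl_eq_zero {Ω : N ⋊[α] Γ → N ⋊[α] Γ → C}
    (hΩ : IsCocycle Ω) (hres : IsCoboundary fun a b : N => Ω (inl a) (inl b)) :
    ∃ F : N ⋊[α] Γ → C, F 1 = 0 ∧
      (∀ a b, Ω (inl a) (inl b) - (F (inl a) + F (inl b) - F (inl a * inl b)) = 0) ∧
      ∀ a g, Ω (inl a) (inr g) - (F (inl a) + F (inr g) - F (inl a * inr g)) = 0 := by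
  obtain ⟨F₀, hF₀1, hF₀⟩ := hres
  refine ⟨fun x => F₀ x.left - Ω (inl x.left) (inr x.right), ?_, fun a b => ?_, fun a g => ?_⟩
  · simp [hF₀1, hΩ.2.1]
  · simp only [← map_mul, left_inl, right_inl, map_one, hΩ.2.1, hF₀ a b]
    abel
  · simp [hΩ.2.1, hΩ.2.2, hF₀1]

theorem IsCocycle.exists_isCoboundary_sub_semidirectCocycle {Ω : N ⋊[α] Γ → N ⋊[α] Γ → C}
    (hΩ : IsCocycle Ω) (hres : IsCoboundary fun a b : N => Ω (inl a) (inl b)) :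
    ∃ (ω : Γ → Γ → C) (η : Γ → N → C), IsCocycle ω ∧ IsActionCocycle α η ∧
      IsCoboundary fun x y => Ω x y - semidirectCocycle α ω η x y := by
  obtain ⟨F, hF1, hinl, hinl_inr⟩ := hΩ.exists_sub_coboundary_inl_eq_zero hres
  have hΩ' := hΩ.sub_coboundary hF1
  have hΨ := hΩ'.eq_semidirectCocycle hinl hinl_inr
  have hω := hΩ'.comp (inr : Γ →* N ⋊[α] Γ)
  refine ⟨_, _, hω, .of_isCocycle_semidirectCocycle hω (hΨ ▸ hΩ'), F, hF1, fun x y => ?_⟩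
  dsimp only
  rw [← congrFun₂ hΨ x y]
  abel

end SemidirectProduct

/-- The map `Ψ : H²(Γ,C) ⊕ ℋ(Γ↷Σ,C) → H²(G,C)`, `(Ψ(ω,η))((a,g),(b,h)) = ω(g,h) + η(g,b)`,
for the semidirect product `G = Σ ⋊ Γ`, is a well-defined injective group homomorphism
whose image is the kernel of the restriction map `H²(G,C) → H²(Σ,C)`. Expressed at the level
of cocycles: `Ψ(ω,η)` is a cocycle; it is a coboundary iff `ω` is a coboundary and `η ∈ ℬ`;
its restriction to `Σ` is a coboundary; and every cocycle on `G` whose restriction to `Σ` is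
a coboundary is cohomologous to some `Ψ(ω,η)`. -/
theorem semidirectProduct_secondCohomology_exact
    {Γ N C : Type*} [Group Γ] [Group N] [AddCommGroup C] (α : Γ →* MulAut N) :
    (∀ (ω : Γ → Γ → C) (η : Γ → N → C), IsCocycle ω → IsActionCocycle α η →
      IsCocycle (fun x y : N ⋊[α] Γ => ω x.right y.right + η x.right y.left))
    ∧
    (∀ (ω : Γ → Γ → C) (η : Γ → N → C), IsCocycle ω → IsActionCocycle α η →
      (IsCoboundary (fun x y : N ⋊[α] Γ => ω x.right y.right + η x.right y.left)
        ↔ (IsCoboundary ω ∧ IsActionCoboundary α η)))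
    ∧
    (∀ (ω : Γ → Γ → C) (η : Γ → N → C), IsCocycle ω → IsActionCocycle α η →
      IsCoboundary (fun a b : N =>
        (fun x y : N ⋊[α] Γ => ω x.right y.right + η x.right y.left)
          (SemidirectProduct.inl a) (SemidirectProduct.inl b)))
    ∧
    (∀ Ω : (N ⋊[α] Γ) → (N ⋊[α] Γ) → C, IsCocycle Ω →
      IsCoboundary (fun a b : N => Ω (SemidirectProduct.inl a) (SemidirectProduct.inl b)) →
      ∃ (ω : Γ → Γ → C) (η : Γ → N → C), IsCocycle ω ∧ IsActionCocycle α η ∧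
        IsCoboundary (fun x y : N ⋊[α] Γ =>
          Ω x y - (ω x.right y.right + η x.right y.left))) := by
  refine ⟨fun ω η hω hη => isCocycle_semidirectCocycle hω hη,
    fun ω η hω hη => isCoboundary_semidirectCocycle_iff hω hη, fun ω η hω hη => ?_,
    fun Ω hΩ hres => hΩ.exists_isCoboundary_sub_semidirectCocycle hres⟩
  have hzero : (fun a b : N => semidirectCocycle α ω η (inl a) (inl b)) = fun _ _ => 0 :=
    funext₂ (semidirectCocycle_inl_inl hω hη)
  exact hzero ▸ isCoboundary_zero
end

section
/- Let Σ and C be abelian groups. Assume Σ is the union of an increasing sequence of subgroups Σ₁ ≤ Σ₂ ≤ ⋯ with Σ₁ = {0} such that for every n, the quotient Σₙ₊₁/Σₙ is either isomorphic to ℤ, or isomorphic to ℤ/Nₙℤ for some integer Nₙ ≥ 1 such that C is p-divisible for every prime divisor p of Nₙ. Then every short exact sequence of abelian groups 0 → C → B → Σ → 0 splits: if B is an abelian group and q : B → Σ is a surjective group homomorphism whose kernel is isomorphic to C, then there exists a group homomorphism θ : Σ → B with q ∘ θ = id. -/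
private lemma div_of_primes {C : Type*} [AddCommGroup C] :
    ∀ N : ℕ, 1 ≤ N → (∀ p : ℕ, p.Prime → p ∣ N → ∀ c : C, ∃ d : C, p • d = c) →
    ∀ c : C, ∃ d : C, N • d = c := by
  intro N
  induction N using Nat.strong_induction_on with
  | _ N ih =>
    intro hN hp c
    rcases eq_or_lt_of_le hN with h1 | h1
    · exact ⟨c, by simp [← h1]⟩
    · have hpf := Nat.minFac_prime (by omega : N ≠ 1)
      have hdvd := Nat.minFac_dvd N
      set p := N.minFac with hp'
      have hlt : N / p < N := Nat.div_lt_self (by omega) hpf.one_lt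
      have h1le : 1 ≤ N / p := Nat.one_le_div_iff hpf.pos |>.mpr (Nat.le_of_dvd (by omega) hdvd)
      obtain ⟨d₁, hd₁⟩ := ih (N / p) hlt h1le
        (fun r hr hrd => hp r hr (hrd.trans (Nat.div_dvd_of_dvd hdvd))) c
      obtain ⟨d, hd⟩ := hp p hpf hdvd d₁
      refine ⟨d, ?_⟩
      have : N = (N / p) * p := (Nat.div_mul_cancel hdvd).symm
      rw [this, mul_smul, hd, hd₁]

private lemma ext_step {Sg B : Type*} [AddCommGroup Sg] [AddCommGroup B] (q : B →+ Sg)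
    (hq : Function.Surjective q)
    (A A' : AddSubgroup Sg) (hAA' : A ≤ A')
    (hcase : Nonempty ((↥A' ⧸ A.addSubgroupOf A') ≃+ ℤ) ∨
      ∃ N : ℕ, 1 ≤ N ∧ (∀ x : q.ker, ∃ d : q.ker, N • d = x) ∧
        Nonempty ((↥A' ⧸ A.addSubgroupOf A') ≃+ ZMod N))
    (θ : ↥A →+ B) (hθ : ∀ a : ↥A, q (θ a) = a) :
    ∃ θ' : ↥A' →+ B, (∀ a : ↥A', q (θ' a) = a) ∧
      ∀ (a : Sg) (h : a ∈ A) (h' : a ∈ A'), θ' ⟨a, h'⟩ = θ ⟨a, h⟩ := by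
  rcases hcase with he | ⟨N, hN1, hdiv, he⟩
  · -- ℤ case
    obtain ⟨e⟩ := he
    set π : ↥A' →+ ℤ := e.toAddMonoidHom.comp (QuotientAddGroup.mk' (A.addSubgroupOf A')) with hπ
    have hker_π : ∀ x : ↥A', π x = 0 ↔ (x : Sg) ∈ A := by
      intro x
      simp only [hπ, AddMonoidHom.comp_apply, AddEquiv.coe_toAddMonoidHom,
        EmbeddingLike.map_eq_zero_iff, QuotientAddGroup.mk'_apply]
      rw [QuotientAddGroup.eq_zero_iff]
      exact AddSubgroup.mem_addSubgroupOf
    have hsurj : Function.Surjective π :=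
      e.surjective.comp (QuotientAddGroup.mk'_surjective _)
    obtain ⟨t, ht⟩ := hsurj 1
    obtain ⟨b, hb⟩ := hq (t : Sg)
    have hmem : ∀ x : ↥A', ((x - (π x) • t : ↥A') : Sg) ∈ A := by
      intro x
      rw [← hker_π]
      simp [ht]
    refine ⟨AddMonoidHom.mk' (fun x => (π x) • b + θ ⟨_, hmem x⟩) ?_, ?_, ?_⟩
    · intro x y
      have harg : (⟨_, hmem (x + y)⟩ : ↥A) = ⟨_, hmem x⟩ + ⟨_, hmem y⟩ := by
        ext
        push_cast
        rw [map_add π, add_zsmul]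
        abel
      rw [harg, map_add θ, map_add π, add_zsmul]
      abel
    · intro a
      simp only [AddMonoidHom.mk'_apply, map_add, map_zsmul, hb, hθ]
      push_cast
      abel
    · intro a h h'
      have hπ0 : π ⟨a, h'⟩ = 0 := (hker_π _).mpr h
      have harg : (⟨_, hmem ⟨a, h'⟩⟩ : ↥A) = ⟨a, h⟩ := by
        ext; simp [hπ0]
      simp [hπ0, harg]
  · -- ZMod N case
    obtain ⟨e⟩ := he
    haveI : NeZero N := ⟨by omega⟩
    set π : ↥A' →+ ZMod N := e.toAddMonoidHom.comp (QuotientAddGroup.mk' (A.addSubgroupOf A'))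
      with hπ
    have hker_π : ∀ x : ↥A', π x = 0 ↔ (x : Sg) ∈ A := by
      intro x
      simp only [hπ, AddMonoidHom.comp_apply, AddEquiv.coe_toAddMonoidHom,
        EmbeddingLike.map_eq_zero_iff, QuotientAddGroup.mk'_apply]
      rw [QuotientAddGroup.eq_zero_iff]
      exact AddSubgroup.mem_addSubgroupOf
    have hsurj : Function.Surjective π :=
      e.surjective.comp (QuotientAddGroup.mk'_surjective _)
    obtain ⟨t, ht⟩ := hsurj 1
    obtain ⟨b₀, hb₀⟩ := hq (t : Sg)
    have hNt : ((N • t : ↥A') : Sg) ∈ A := by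
      rw [← hker_π]
      simp [ht]
    have hc : N • b₀ - θ ⟨_, hNt⟩ ∈ q.ker := by
      rw [AddMonoidHom.mem_ker]
      simp only [map_sub, map_nsmul, hb₀, hθ]
      push_cast
      abel
    obtain ⟨d, hd⟩ := hdiv ⟨_, hc⟩
    have hdB : N • (d : B) = N • b₀ - θ ⟨_, hNt⟩ := by
      have := congrArg Subtype.val hd
      simpa using this
    set b : B := b₀ - (d : B) with hbdef
    have hqb : q b = (t : Sg) := by
      have hd0 : q (d : B) = 0 := d.2
      simp [hbdef, hb₀, hd0]
    have hNb : N • b = θ ⟨_, hNt⟩ := by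
      rw [hbdef, smul_sub, hdB]
      abel
    have hval : ∀ x : ↥A', (((π x).val : ℕ) : ZMod N) = π x := by
      intro x; simp [ZMod.natCast_val, ZMod.cast_id]
    have hmem : ∀ x : ↥A', ((x - ((π x).val) • t : ↥A') : Sg) ∈ A := by
      intro x
      rw [← hker_π]
      simp [ht, hval]
    refine ⟨AddMonoidHom.mk' (fun x => ((π x).val) • b + θ ⟨_, hmem x⟩) ?_, ?_, ?_⟩
    · intro x y
      set k := (π x).val with hk
      set k' := (π y).val with hk'
      set k'' := (π (x + y)).val with hk''
      set j := (k + k') / N with hj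
      have hvadd : k + k' = k'' + N * j := by
        have h1 : k'' = (k + k') % N := by
          simp only [hk'', hk, hk', map_add]
          exact ZMod.val_add _ _
        rw [h1, hj]
        exact (Nat.mod_add_div _ _).symm
      have harg : (⟨_, hmem x⟩ : ↥A) + ⟨_, hmem y⟩
          = ⟨_, hmem (x + y)⟩ - j • ⟨_, hNt⟩ := by
        ext
        push_cast
        have h2 : k • (t : Sg) + k' • (t : Sg) = k'' • (t : Sg) + (j * N) • (t : Sg) := by
          rw [← add_smul, ← add_smul, hvadd, mul_comm]
        have h3 : ((x : Sg) - k • t) + ((y : Sg) - k' • t)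
            = (x : Sg) + y - (k • (t : Sg) + k' • t) := by abel
        rw [h3, h2, smul_smul]
        abel
      have h4 : θ ⟨_, hmem x⟩ + θ ⟨_, hmem y⟩ = θ ⟨_, hmem (x + y)⟩ - j • (N • b) := by
        rw [← map_add θ, harg, map_sub θ, map_nsmul θ, hNb]
      have h5 : k • b + k' • b = k'' • b + j • (N • b) := by
        rw [smul_smul, ← add_smul, ← add_smul, hvadd, mul_comm]
      have h6 : k • b + θ ⟨_, hmem x⟩ + (k' • b + θ ⟨_, hmem y⟩)
          = (k • b + k' • b) + (θ ⟨_, hmem x⟩ + θ ⟨_, hmem y⟩) := by abel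
      rw [h6, h4, h5]
      abel
    · intro a
      simp only [AddMonoidHom.mk'_apply, map_add, map_nsmul, hqb, hθ]
      push_cast
      abel
    · intro a h h'
      have hπ0 : π ⟨a, h'⟩ = 0 := (hker_π _).mpr h
      have harg : (⟨_, hmem ⟨a, h'⟩⟩ : ↥A) = ⟨a, h⟩ := by
        ext; simp [hπ0]
      simp [hπ0, harg]

private noncomputable def chain {Sg B : Type*} [AddCommGroup Sg] [AddCommGroup B]
    (q : B →+ Sg) (S : ℕ → AddSubgroup Sg)
    (base : {θ : ↥(S 0) →+ B // ∀ a, q (θ a) = a})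
    (hstep : ∀ n (θ : ↥(S n) →+ B), (∀ a, q (θ a) = a) →
      ∃ θ' : ↥(S (n + 1)) →+ B, (∀ a, q (θ' a) = a) ∧
        ∀ (a : Sg) (h : a ∈ S n) (h' : a ∈ S (n + 1)), θ' ⟨a, h'⟩ = θ ⟨a, h⟩) :
    ∀ n, {θ : ↥(S n) →+ B // ∀ a, q (θ a) = a}
  | 0 => base
  | (n + 1) =>
    let p := chain q S base hstep n
    ⟨(hstep n p.1 p.2).choose, (hstep n p.1 p.2).choose_spec.1⟩

private lemma chain_succ {Sg B : Type*} [AddCommGroup Sg] [AddCommGroup B]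
    (q : B →+ Sg) (S : ℕ → AddSubgroup Sg)
    (base : {θ : ↥(S 0) →+ B // ∀ a, q (θ a) = a})
    (hstep : ∀ n (θ : ↥(S n) →+ B), (∀ a, q (θ a) = a) →
      ∃ θ' : ↥(S (n + 1)) →+ B, (∀ a, q (θ' a) = a) ∧
        ∀ (a : Sg) (h : a ∈ S n) (h' : a ∈ S (n + 1)), θ' ⟨a, h'⟩ = θ ⟨a, h⟩)
    (n : ℕ) (a : Sg) (h : a ∈ S n) (h' : a ∈ S (n + 1)) :
    (chain q S base hstep (n + 1)).1 ⟨a, h'⟩ = (chain q S base hstep n).1 ⟨a, h⟩ := by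
  exact (hstep n (chain q S base hstep n).1 (chain q S base hstep n).2).choose_spec.2 a h h'

private lemma chain_compat {Sg B : Type*} [AddCommGroup Sg] [AddCommGroup B]
    (q : B →+ Sg) (S : ℕ → AddSubgroup Sg) (hmono : Monotone S)
    (base : {θ : ↥(S 0) →+ B // ∀ a, q (θ a) = a})
    (hstep : ∀ n (θ : ↥(S n) →+ B), (∀ a, q (θ a) = a) →
      ∃ θ' : ↥(S (n + 1)) →+ B, (∀ a, q (θ' a) = a) ∧
        ∀ (a : Sg) (h : a ∈ S n) (h' : a ∈ S (n + 1)), θ' ⟨a, h'⟩ = θ ⟨a, h⟩)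
    (m n : ℕ) (hmn : m ≤ n) (a : Sg) (h : a ∈ S m) (h' : a ∈ S n) :
    (chain q S base hstep n).1 ⟨a, h'⟩ = (chain q S base hstep m).1 ⟨a, h⟩ := by
  induction n, hmn using Nat.le_induction with
  | base => rfl
  | succ n hmn ih =>
    have hn : a ∈ S n := hmono hmn h
    rw [chain_succ q S base hstep n a hn h', ih hn]

/-- Let `Σ` and `C` be abelian groups, and suppose `Σ` is the union of an increasing sequence
of subgroups starting at `{0}` whose successive quotients are isomorphic to `ℤ`, or to
`ℤ/Nℤ` with `C` being `p`-divisible for every prime `p ∣ N`. Then every short exact sequence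
`0 → C → B → Σ → 0` of abelian groups splits. -/
theorem splits_of_filtration
    {Sg C B : Type*} [AddCommGroup Sg] [AddCommGroup C] [AddCommGroup B]
    (S : ℕ → AddSubgroup Sg) (hmono : Monotone S) (h0 : S 0 = ⊥)
    (hunion : ∀ x : Sg, ∃ n, x ∈ S n)
    (hquot : ∀ n : ℕ,
      Nonempty ((↥(S (n + 1)) ⧸ (S n).addSubgroupOf (S (n + 1))) ≃+ ℤ) ∨
      ∃ N : ℕ, 1 ≤ N ∧
        (∀ p : ℕ, p.Prime → p ∣ N → ∀ c : C, ∃ d : C, p • d = c) ∧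
        Nonempty ((↥(S (n + 1)) ⧸ (S n).addSubgroupOf (S (n + 1))) ≃+ ZMod N))
    (q : B →+ Sg) (hq : Function.Surjective q)
    (hker : Nonempty (q.ker ≃+ C)) :
    ∃ θ : Sg →+ B, q.comp θ = AddMonoidHom.id Sg := by
  classical
  obtain ⟨eC⟩ := hker
  -- translate divisibility of C into divisibility of the kernel
  have hcase : ∀ n : ℕ,
      Nonempty ((↥(S (n + 1)) ⧸ (S n).addSubgroupOf (S (n + 1))) ≃+ ℤ) ∨
      ∃ N : ℕ, 1 ≤ N ∧ (∀ x : q.ker, ∃ d : q.ker, N • d = x) ∧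
        Nonempty ((↥(S (n + 1)) ⧸ (S n).addSubgroupOf (S (n + 1))) ≃+ ZMod N) := by
    intro n
    rcases hquot n with h | ⟨N, hN1, hp, he⟩
    · exact Or.inl h
    · refine Or.inr ⟨N, hN1, ?_, he⟩
      intro x
      obtain ⟨d, hd⟩ := div_of_primes N hN1 hp (eC x)
      refine ⟨eC.symm d, ?_⟩
      have : eC (N • eC.symm d) = eC x := by
        rw [map_nsmul, AddEquiv.apply_symm_apply, hd]
      exact eC.injective this
  -- base splitting on `S 0 = ⊥`
  have hbase : ∀ a : ↥(S 0), q ((0 : ↥(S 0) →+ B) a) = a := by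
    intro a
    have h1 : (a : Sg) ∈ (⊥ : AddSubgroup Sg) := h0 ▸ a.2
    rw [AddSubgroup.mem_bot] at h1
    simp [h1]
  -- step
  have hstep : ∀ n (θ : ↥(S n) →+ B), (∀ a, q (θ a) = a) →
      ∃ θ' : ↥(S (n + 1)) →+ B, (∀ a, q (θ' a) = a) ∧
        ∀ (a : Sg) (h : a ∈ S n) (h' : a ∈ S (n + 1)), θ' ⟨a, h'⟩ = θ ⟨a, h⟩ :=
    fun n θ hθ =>
      ext_step q hq (S n) (S (n + 1)) (hmono (Nat.le_succ n)) (hcase n) θ hθ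
  set Θ := chain q S ⟨0, hbase⟩ hstep with hΘ
  -- gluing
  set f : Sg → B := fun x => (Θ (hunion x).choose).1 ⟨x, (hunion x).choose_spec⟩ with hf
  have hindep : ∀ (x : Sg) (n : ℕ) (h : x ∈ S n), f x = (Θ n).1 ⟨x, h⟩ := by
    intro x n h
    set m := (hunion x).choose with hm
    have hxm : x ∈ S m := (hunion x).choose_spec
    have h1 : (Θ (max m n)).1 ⟨x, hmono (le_max_left m n) hxm⟩ = (Θ m).1 ⟨x, hxm⟩ :=
      chain_compat q S hmono ⟨0, hbase⟩ hstep m (max m n) (le_max_left m n) x hxm _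
    have h2 : (Θ (max m n)).1 ⟨x, hmono (le_max_left m n) hxm⟩ = (Θ n).1 ⟨x, h⟩ :=
      chain_compat q S hmono ⟨0, hbase⟩ hstep n (max m n) (le_max_right m n) x h _
    have h3 : f x = (Θ m).1 ⟨x, hxm⟩ := rfl
    exact h3.trans (h1.symm.trans h2)
  have hadd : ∀ x y : Sg, f (x + y) = f x + f y := by
    intro x y
    obtain ⟨n₁, h₁⟩ := hunion x
    obtain ⟨n₂, h₂⟩ := hunion y
    set n := max n₁ n₂ with hn
    have hx : x ∈ S n := hmono (le_max_left n₁ n₂) h₁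
    have hy : y ∈ S n := hmono (le_max_right n₁ n₂) h₂
    have hxy : x + y ∈ S n := add_mem hx hy
    rw [hindep x n hx, hindep y n hy, hindep (x + y) n hxy]
    have : (⟨x + y, hxy⟩ : ↥(S n)) = ⟨x, hx⟩ + ⟨y, hy⟩ := rfl
    rw [this, map_add]
  refine ⟨AddMonoidHom.mk' f hadd, ?_⟩
  ext x
  obtain ⟨n, hx⟩ := hunion x
  simp only [AddMonoidHom.comp_apply, AddMonoidHom.mk'_apply, AddMonoidHom.id_apply]
  rw [hindep x n hx]
  exact (Θ n).2 ⟨x, hx⟩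
end

section
/- Let Σ and C be abelian groups. Assume Σ is the union of an increasing sequence of subgroups Σ₁ ≤ Σ₂ ≤ ⋯ with Σ₁ = {0} such that for every n, the quotient Σₙ₊₁/Σₙ is either isomorphic to ℤ, or isomorphic to ℤ/Nₙℤ for some integer Nₙ ≥ 1 such that C is p-divisible for every prime divisor p of Nₙ. Then every normalized 2-cocycle Ω : Σ × Σ → C that is symmetric, i.e., Ω(a,b) = Ω(b,a) for all a,b ∈ Σ, is a coboundary. -/
/-!
A symmetric normalized 2-cocycle `Ω` turns `C × Σ` with the twisted addition
`(c, x) + (d, y) = (c + d + Ω x y, x + y)` into an abelian group `E`, an extension of `Σ` by `C`,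
and `Ω` is a coboundary as soon as the projection `E → Σ` has a homomorphic section.
Such a section is built along the filtration. If `Σₙ₊₁ / Σₙ ≅ ℤ/N` (with `N = 0` for `ℤ`) is
generated by the class of `t`, the section `s` on `Σₙ` extends to `Σₙ₊₁` once `t` has a lift `e`
with `N • e = s (N • t)`; lifts of `t` differ by elements of `C`, so such an `e` exists when
`C` is `N`-divisible, which follows from its `p`-divisibility for the primes `p ∣ N`.
-/

/-- A normalized 2-cocycle on an (additive) abelian group `A` with values in `C`. -/
def IsAddCocycle {A C : Type*} [AddCommGroup A] [AddCommGroup C] (Ω : A → A → C) : Prop :=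
  (∀ a b c, Ω a b + Ω (a + b) c = Ω a (b + c) + Ω b c) ∧
  (∀ a, Ω a 0 = 0) ∧ (∀ a, Ω 0 a = 0)

/-- A 2-coboundary on an (additive) abelian group `A` with values in `C`. -/
def IsAddCoboundary {A C : Type*} [AddCommGroup A] [AddCommGroup C] (Ω : A → A → C) : Prop :=
  ∃ F : A → C, F 0 = 0 ∧ ∀ a b, Ω a b = F a + F b - F (a + b)

section Sections

variable {G E : Type*} [AddCommGroup G] [AddCommGroup E] (π : E →+ G)

theorem exists_section_extension_of_generator {B A : AddSubgroup G} (hBA : B ≤ A) {N : ℕ}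
    (t : A) (hgen : ∀ a : A, ∃ j : ℤ, (a : G) - j • (t : G) ∈ B)
    (hord : ∀ j : ℤ, j • (t : G) ∈ B → (N : ℤ) ∣ j)
    (s : B →+ E) (hs : π.comp s = B.subtype) (w : B) (hw : (w : G) = N • (t : G))
    (e : E) (he : π e = t) (hNe : N • e = s w) :
    ∃ s' : A →+ E, π.comp s' = A.subtype ∧ s'.comp (AddSubgroup.inclusion hBA) = s := by
  have hsb (b : B) : π (s b) = b := DFunLike.congr_fun hs b
  -- `A = (B × ℤ) / ker φ`, and a pair `(b, j)` in that kernel is `(-q • w, q * N)`, on which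
  -- `s` and `e` cancel because `N • e = s w`.
  let φ : B × ℤ →+ A := (AddSubgroup.inclusion hBA).coprod (zmultiplesHom A t)
  let φE : B × ℤ →+ E := s.coprod (zmultiplesHom E e)
  have hφ : Function.Surjective φ := by
    intro a
    obtain ⟨j, hb⟩ := hgen a
    exact ⟨(⟨_, hb⟩, j), by ext; simp [φ]⟩
  have hker : φ.ker ≤ φE.ker := by
    rintro ⟨b, j⟩ hbj
    have hjt : j • (t : G) = -b := by
      rw [eq_neg_iff_add_eq_zero, add_comm]
      simpa [φ] using congrArg Subtype.val hbj
    obtain ⟨q, rfl⟩ := hord j (hjt ▸ neg_mem b.2)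
    have hbw : b = -(q • w) := by
      ext
      rw [← neg_neg (b : G), ← hjt]
      simp [hw, mul_comm (N : ℤ), mul_zsmul, natCast_zsmul]
    simp [φE, hbw, ← hNe, mul_comm (N : ℤ), mul_zsmul, natCast_zsmul]
  let s' := φ.liftOfSurjective hφ ⟨φE, hker⟩
  have hs'φ : s'.comp φ = φE := φ.liftOfRightInverse_comp _ _ _
  refine ⟨s', (AddMonoidHom.cancel_right hφ).mp ?_, ?_⟩
  · rw [AddMonoidHom.comp_assoc, hs'φ]
    ext
    simp [φ, φE, he, hsb]
  · ext b
    simpa [φ, φE] using DFunLike.congr_fun hs'φ (b, 0)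

theorem exists_section_extension_of_quotient_equiv_zmod {B A : AddSubgroup G} (hBA : B ≤ A)
    {N : ℕ} (ψ : (A ⧸ B.addSubgroupOf A) ≃+ ZMod N) (hπ : Function.Surjective π)
    (hdiv : N = 0 ∨ ∀ u ∈ π.ker, ∃ v ∈ π.ker, N • v = u)
    (s : B →+ E) (hs : π.comp s = B.subtype) :
    ∃ s' : A →+ E, π.comp s' = A.subtype ∧ s'.comp (AddSubgroup.inclusion hBA) = s := by
  have hsb (b : B) : π (s b) = b := DFunLike.congr_fun hs b
  let mk := QuotientAddGroup.mk' (B.addSubgroupOf A)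
  have mk_eq_zero (a : A) : mk a = 0 ↔ (a : G) ∈ B := by
    simp [mk, QuotientAddGroup.eq_zero_iff, AddSubgroup.mem_addSubgroupOf]
  obtain ⟨t, ht⟩ := QuotientAddGroup.mk'_surjective (B.addSubgroupOf A) (ψ.symm 1)
  have zsmul_mem_iff (j : ℤ) : j • (t : G) ∈ B ↔ (N : ℤ) ∣ j := by
    rw [← ZMod.intCast_zmod_eq_zero_iff_dvd, ← AddSubgroup.coe_zsmul, ← mk_eq_zero,
      ← ψ.map_eq_zero_iff, map_zsmul, ht, map_zsmul, ψ.apply_symm_apply, zsmul_one]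
  have hgen (a : A) : ∃ j : ℤ, (a : G) - j • (t : G) ∈ B := by
    obtain ⟨j, hj⟩ := ZMod.intCast_surjective (ψ (mk a))
    refine ⟨j, ?_⟩
    rw [← AddSubgroup.coe_zsmul, ← AddSubgroup.coe_sub, ← mk_eq_zero, ← ψ.map_eq_zero_iff,
      map_sub, map_sub, map_zsmul, ht, map_zsmul, ψ.apply_symm_apply, zsmul_one, hj, sub_self]
  let w : B := ⟨(N : ℤ) • (t : G), (zsmul_mem_iff N).mpr dvd_rfl⟩
  obtain ⟨e₀, he₀⟩ := hπ t
  obtain ⟨d, hd, hNd⟩ : ∃ d ∈ π.ker, N • d = N • e₀ - s w := by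
    rcases hdiv with rfl | hdiv
    · have hw : w = 0 := Subtype.ext (zero_smul ℤ _)
      exact ⟨0, π.ker.zero_mem, by simp [hw]⟩
    · exact hdiv _ (by simp [AddMonoidHom.mem_ker, he₀, hsb, w])
  exact exists_section_extension_of_generator π hBA t hgen (fun j => (zsmul_mem_iff j).mp) s hs
    w (natCast_zsmul _ _) (e₀ - d) (by simp_all [AddMonoidHom.mem_ker])
    (by rw [nsmul_sub, hNd, sub_sub_cancel])

theorem exists_addMonoidHom_comp_subtype_eq_of_monotone {S : ℕ → AddSubgroup G} (hS : Monotone S)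
    (hunion : ∀ x, ∃ n, x ∈ S n) (s : ∀ n, S n →+ E)
    (hs : ∀ n, (s (n + 1)).comp (AddSubgroup.inclusion (hS n.le_succ)) = s n) :
    ∃ σ : G →+ E, ∀ n, σ.comp (S n).subtype = s n := by
  classical
  have compat {m n : ℕ} (hmn : m ≤ n) (x : G) (hx : x ∈ S m) :
      s n ⟨x, hS hmn hx⟩ = s m ⟨x, hx⟩ := by
    induction n, hmn using Nat.le_induction with
    | base => rfl
    | succ n hmn ih => exact (DFunLike.congr_fun (hs n) ⟨x, hS hmn hx⟩).trans ih
  let idx x := Nat.find (hunion x)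
  have eval (n : ℕ) (x : G) (hx : x ∈ S n) :
      s (idx x) ⟨x, Nat.find_spec (hunion x)⟩ = s n ⟨x, hx⟩ :=
    (compat (le_max_left _ n) x _).symm.trans (compat (le_max_right _ n) x hx)
  refine ⟨AddMonoidHom.mk' (fun x => s (idx x) ⟨x, Nat.find_spec (hunion x)⟩) fun x y => ?_,
    fun n => ?_⟩
  · have hx : x ∈ S (max (idx x) (idx y)) := hS (le_max_left _ _) (Nat.find_spec (hunion x))
    have hy : y ∈ S (max (idx x) (idx y)) := hS (le_max_right _ _) (Nat.find_spec (hunion y))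
    simp only [eval _ _ hx, eval _ _ hy, eval _ _ (add_mem hx hy), ← map_add]
    rfl
  · ext ⟨x, hx⟩
    exact eval n x hx

theorem exists_section_of_filtration {S : ℕ → AddSubgroup G} (hS : Monotone S)
    (h0 : S 0 = ⊥) (hunion : ∀ x, ∃ n, x ∈ S n)
    (hstep : ∀ n (s : S n →+ E), π.comp s = (S n).subtype →
      ∃ s' : S (n + 1) →+ E, π.comp s' = (S (n + 1)).subtype ∧
        s'.comp (AddSubgroup.inclusion (hS n.le_succ)) = s) :
    ∃ σ : G →+ E, π.comp σ = .id G := by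
  choose extend hextend_section hextend_comp using hstep
  have hbase : π.comp 0 = (S 0).subtype := by
    ext ⟨x, hx⟩
    rw [h0, AddSubgroup.mem_bot] at hx
    simp [hx]
  let sections (n : ℕ) : {s : S n →+ E // π.comp s = (S n).subtype} :=
    Nat.rec ⟨0, hbase⟩ (fun n s => ⟨extend n s.1 s.2, hextend_section n s.1 s.2⟩) n
  obtain ⟨σ, hσ⟩ := exists_addMonoidHom_comp_subtype_eq_of_monotone hS hunion
    (fun n => (sections n).1) fun n => hextend_comp n _ _
  refine ⟨σ, AddMonoidHom.ext fun x => ?_⟩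
  obtain ⟨n, hx⟩ := hunion x
  calc π (σ x) = π ((sections n).1 ⟨x, hx⟩) := congrArg π (DFunLike.congr_fun (hσ n) ⟨x, hx⟩)
    _ = x := DFunLike.congr_fun (sections n).2 ⟨x, hx⟩

end Sections

theorem nsmul_surjective_of_prime_dvd {C : Type*} [AddMonoid C] {N : ℕ} (hN : N ≠ 0)
    (h : ∀ p : ℕ, p.Prime → p ∣ N → Function.Surjective fun c : C => p • c) :
    Function.Surjective fun c : C => N • c := by
  induction N using Nat.recOnMul with
  | zero => exact absurd rfl hN
  | one => simp only [one_nsmul]; exact Function.surjective_id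
  | prime p hp => exact h p hp dvd_rfl
  | mul a b iha ihb =>
    have hab : a ≠ 0 ∧ b ≠ 0 := by simpa using hN
    have ha := iha hab.1 fun p hp hpa => h p hp (hpa.mul_right b)
    have hb := ihb hab.2 fun p hp hpb => h p hp (hpb.mul_left a)
    simp only [mul_nsmul']
    exact ha.comp hb

structure SymmAddCocycle (G C : Type*) [AddCommGroup G] [AddCommGroup C] where
  toFun : G → G → C
  isAddCocycle : IsAddCocycle toFun
  symm : ∀ a b, toFun a b = toFun b a

namespace SymmAddCocycle

variable {G C : Type*} [AddCommGroup G] [AddCommGroup C] (Ω : SymmAddCocycle G C)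

instance : CoeFun (SymmAddCocycle G C) fun _ => G → G → C := ⟨toFun⟩

theorem cocycle_condition (a b c : G) : Ω a b + Ω (a + b) c = Ω a (b + c) + Ω b c :=
  Ω.isAddCocycle.1 a b c

@[simp] theorem apply_zero_right (a : G) : Ω a 0 = 0 := Ω.isAddCocycle.2.1 a

@[simp] theorem apply_zero_left (a : G) : Ω 0 a = 0 := Ω.isAddCocycle.2.2 a

@[ext] structure Extension (Ω : SymmAddCocycle G C) where
  fib : C
  base : G

namespace Extension

variable {Ω}

instance : Add Ω.Extension := ⟨fun u v => ⟨u.fib + v.fib + Ω u.base v.base, u.base + v.base⟩⟩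
instance : Zero Ω.Extension := ⟨⟨0, 0⟩⟩
instance : Neg Ω.Extension := ⟨fun u => ⟨-u.fib - Ω u.base (-u.base), -u.base⟩⟩

@[simp] theorem add_fib (u v : Ω.Extension) : (u + v).fib = u.fib + v.fib + Ω u.base v.base := rfl
@[simp] theorem add_base (u v : Ω.Extension) : (u + v).base = u.base + v.base := rfl
@[simp] theorem zero_fib : (0 : Ω.Extension).fib = 0 := rfl
@[simp] theorem zero_base : (0 : Ω.Extension).base = 0 := rfl
@[simp] theorem neg_fib (u : Ω.Extension) : (-u).fib = -u.fib - Ω u.base (-u.base) := rfl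
@[simp] theorem neg_base (u : Ω.Extension) : (-u).base = -u.base := rfl

instance : AddCommGroup Ω.Extension where
  add_assoc u v w := by
    ext
    · calc _ = u.fib + v.fib + w.fib + (Ω u.base v.base + Ω (u.base + v.base) w.base) := by
            simp only [add_fib, add_base]; abel
        _ = _ := by rw [Ω.cocycle_condition]; simp only [add_fib, add_base]; abel
    · exact add_assoc _ _ _
  zero_add u := by ext <;> simp
  add_zero u := by ext <;> simp
  neg_add_cancel u := by
    ext
    · simp only [add_fib, neg_fib, neg_base, zero_fib, Ω.symm (-u.base)]; abel
    · exact neg_add_cancel _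
  add_comm u v := by
    ext
    · simp only [add_fib, Ω.symm u.base]; abel
    · exact add_comm _ _
  nsmul := nsmulRec
  zsmul := zsmulRec

end Extension

def proj : Ω.Extension →+ G where
  toFun := Extension.base
  map_zero' := rfl
  map_add' _ _ := rfl

def incl : C →+ Ω.Extension where
  toFun c := ⟨c, 0⟩
  map_zero' := rfl
  map_add' a b := by ext <;> simp

theorem proj_surjective : Function.Surjective Ω.proj := fun x => ⟨⟨0, x⟩, rfl⟩

theorem exists_nsmul_eq_of_mem_ker_proj {N : ℕ} (hN : Function.Surjective fun c : C => N • c) :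
    ∀ u ∈ Ω.proj.ker, ∃ v ∈ Ω.proj.ker, N • v = u := by
  intro u hu
  obtain ⟨c, hc⟩ := hN u.fib
  refine ⟨Ω.incl c, rfl, ?_⟩
  rw [← map_nsmul]
  ext
  · exact hc
  · exact hu.symm

theorem isAddCoboundary_of_section (σ : G →+ Ω.Extension) (hσ : Ω.proj.comp σ = .id G) :
    IsAddCoboundary Ω := by
  have hbase (x : G) : (σ x).base = x := DFunLike.congr_fun hσ x
  refine ⟨fun x => -(σ x).fib, by simp, fun a b => ?_⟩
  have := congrArg Extension.fib (σ.map_add a b)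
  rw [Extension.add_fib, hbase, hbase] at this
  simp only [this]
  abel

end SymmAddCocycle

/-- Let `Σ` and `C` be abelian groups, and suppose `Σ` is the union of an increasing sequence
of subgroups starting at `{0}` whose successive quotients are isomorphic to `ℤ`, or to
`ℤ/Nℤ` with `C` being `p`-divisible for every prime `p ∣ N`. Then every symmetric normalized
2-cocycle `Ω : Σ × Σ → C` is a coboundary. -/
theorem symm_cocycle_is_coboundary_of_filtration
    {Sg C : Type*} [AddCommGroup Sg] [AddCommGroup C]
    (S : ℕ → AddSubgroup Sg) (hmono : Monotone S) (h0 : S 0 = ⊥)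
    (hunion : ∀ x : Sg, ∃ n, x ∈ S n)
    (hquot : ∀ n : ℕ,
      Nonempty ((↥(S (n + 1)) ⧸ (S n).addSubgroupOf (S (n + 1))) ≃+ ℤ) ∨
      ∃ N : ℕ, 1 ≤ N ∧
        (∀ p : ℕ, p.Prime → p ∣ N → ∀ c : C, ∃ d : C, p • d = c) ∧
        Nonempty ((↥(S (n + 1)) ⧸ (S n).addSubgroupOf (S (n + 1))) ≃+ ZMod N))
    (Ω : Sg → Sg → C) (hΩ : IsAddCocycle Ω) (hsym : ∀ a b, Ω a b = Ω b a) :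
    IsAddCoboundary Ω := by
  let Ω' : SymmAddCocycle Sg C := ⟨Ω, hΩ, hsym⟩
  obtain ⟨σ, hσ⟩ := exists_section_of_filtration Ω'.proj hmono h0 hunion fun n s hs => by
    rcases hquot n with ⟨⟨ψ⟩⟩ | ⟨N, hN, hdiv, ⟨ψ⟩⟩
    -- `ZMod 0` is `ℤ` by definition
    · exact exists_section_extension_of_quotient_equiv_zmod Ω'.proj (hmono n.le_succ) (N := 0) ψ
        Ω'.proj_surjective (.inl rfl) s hs
    · have hNdiv := nsmul_surjective_of_prime_dvd (by omega) hdiv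
      exact exists_section_extension_of_quotient_equiv_zmod Ω'.proj (hmono n.le_succ) ψ
        Ω'.proj_surjective (.inr (Ω'.exists_nsmul_eq_of_mem_ker_proj hNdiv)) s hs
  exact Ω'.isAddCoboundary_of_section σ hσ
end

section
/- Let Γ₁ and Γ₂ be groups and C an abelian group. Then the map Θ₁ : H²(Γ₁,C) ⊕ H²(Γ₂,C) ⊕ BHom(Γ₁,Γ₂,C) → H²(Γ₁ × Γ₂,C) induced by sending (ω₁,ω₂,γ) to the cocycle Ω((g₁,g₂),(h₁,h₂)) = ω₁(g₁,h₁) + ω₂(g₂,h₂) + γ(g₂,h₁) is a well-defined group isomorphism. -/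
/-- A bihomomorphism `Γ₁ × Γ₂ → C`: a map which is a group homomorphism in each variable. -/
def IsBihom {Γ₁ Γ₂ C : Type*} [Group Γ₁] [Group Γ₂] [AddCommGroup C]
    (γ : Γ₁ → Γ₂ → C) : Prop :=
  (∀ g g' h, γ (g * g') h = γ g h + γ g' h) ∧ (∀ g h h', γ g (h * h') = γ g h + γ g h')

/-!
A cocycle `Ω` on `Γ₁ × Γ₂` restricts to cocycles `ω₁`, `ω₂` on the two factors, and the
elements `(g, 1)` and `(1, h)` commute, so the asymmetry
`γ(g, h) = Ω((1, h), (g, 1)) - Ω((g, 1), (1, h))` vanishes when `Ω` is a coboundary.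
Adding the coboundary of `F(g₁, g₂) = Ω((g₁, 1), (1, g₂))` turns `Ω` into the product-form
cocycle built from `(ω₁, ω₂, γ)`, and the cocycle identity of a product-form cocycle, evaluated
on elements of the two factors, says exactly that `γ` is a bihomomorphism.
-/

section Cochains

variable {G H C : Type*} [Group G] [Group H] [AddCommGroup C]

theorem isCocycle_coboundary {F : G → C} (hF : F 1 = 0) :
    IsCocycle (fun g h => F g + F h - F (g * h)) := by
  refine ⟨fun g h k => ?_, fun g => ?_, fun g => ?_⟩
  · beta_reduce
    rw [mul_assoc]
    abel
  · simp [hF]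
  · simp [hF]

namespace IsCocycle

theorem add {Ω Ω' : G → G → C} (hΩ : IsCocycle Ω) (hΩ' : IsCocycle Ω') :
    IsCocycle (fun g h => Ω g h + Ω' g h) := by
  refine ⟨fun g h k => ?_, fun g => ?_, fun g => ?_⟩
  · beta_reduce
    linear_combination (norm := abel) hΩ.1 g h k + hΩ'.1 g h k
  · simp [hΩ.2.1, hΩ'.2.1]
  · simp [hΩ.2.2, hΩ'.2.2]

theorem comp_monoidHom {Ω : H → H → C} (hΩ : IsCocycle Ω) (f : G →* H) :
    IsCocycle (fun g h => Ω (f g) (f h)) := by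
  refine ⟨fun g h k => ?_, fun g => ?_, fun g => ?_⟩
  · simpa only [map_mul] using hΩ.1 (f g) (f h) (f k)
  · simpa only [map_one] using hΩ.2.1 (f g)
  · simpa only [map_one] using hΩ.2.2 (f g)

end IsCocycle

namespace IsCoboundary

theorem add {Ω Ω' : G → G → C} (hΩ : IsCoboundary Ω) (hΩ' : IsCoboundary Ω') :
    IsCoboundary (fun g h => Ω g h + Ω' g h) := by
  obtain ⟨F, hF1, hF⟩ := hΩ
  obtain ⟨F', hF'1, hF'⟩ := hΩ'
  refine ⟨F + F', by simp [hF1, hF'1], fun g h => ?_⟩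
  simp only [hF, hF', Pi.add_apply]
  abel

theorem comp_monoidHom {Ω : H → H → C} (hΩ : IsCoboundary Ω) (f : G →* H) :
    IsCoboundary (fun g h => Ω (f g) (f h)) := by
  obtain ⟨F, hF1, hF⟩ := hΩ
  exact ⟨F ∘ f, by simp [hF1], fun g h => by simp [hF]⟩

theorem apply_comm {Ω : G → G → C} (hΩ : IsCoboundary Ω) {g h : G} (hgh : Commute g h) :
    Ω g h = Ω h g := by
  obtain ⟨F, -, hF⟩ := hΩ
  rw [hF, hF, hgh.eq]
  abel

end IsCoboundary

end Cochains

section Product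

variable {Γ₁ Γ₂ C : Type*} [Group Γ₁] [Group Γ₂] [AddCommGroup C]

namespace IsBihom

variable {γ : Γ₁ → Γ₂ → C}

theorem map_one_left (hγ : IsBihom γ) (h : Γ₂) : γ 1 h = 0 := by
  simpa using (hγ.1 1 1 h).symm

theorem map_one_right (hγ : IsBihom γ) (g : Γ₁) : γ g 1 = 0 := by
  simpa using (hγ.2 g 1 1).symm

theorem isCocycle_prod (hγ : IsBihom γ) :
    IsCocycle (fun x y : Γ₁ × Γ₂ => γ y.1 x.2) := by
  refine ⟨fun x y z => ?_, fun x => hγ.map_one_left x.2, fun y => hγ.map_one_right y.1⟩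
  simp only [Prod.fst_mul, Prod.snd_mul, hγ.1, hγ.2]
  abel

end IsBihom

def prodCocycle (ω₁ : Γ₁ → Γ₁ → C) (ω₂ : Γ₂ → Γ₂ → C) (γ : Γ₁ → Γ₂ → C) :
    Γ₁ × Γ₂ → Γ₁ × Γ₂ → C :=
  fun x y => ω₁ x.1 y.1 + ω₂ x.2 y.2 + γ y.1 x.2

variable {ω₁ : Γ₁ → Γ₁ → C} {ω₂ : Γ₂ → Γ₂ → C} {γ : Γ₁ → Γ₂ → C}

theorem isCocycle_prodCocycle (hω₁ : IsCocycle ω₁) (hω₂ : IsCocycle ω₂) (hγ : IsBihom γ) :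
    IsCocycle (prodCocycle ω₁ ω₂ γ) :=
  ((hω₁.comp_monoidHom (MonoidHom.fst Γ₁ Γ₂)).add
    (hω₂.comp_monoidHom (MonoidHom.snd Γ₁ Γ₂))).add hγ.isCocycle_prod

theorem isCoboundary_prodCocycle_iff (hω₁ : IsCocycle ω₁) (hω₂ : IsCocycle ω₂)
    (hγ : IsBihom γ) :
    IsCoboundary (prodCocycle ω₁ ω₂ γ) ↔
      IsCoboundary ω₁ ∧ IsCoboundary ω₂ ∧ ∀ g h, γ g h = 0 := by
  constructor
  · intro hΩ
    have hfst : (fun g h => prodCocycle ω₁ ω₂ γ (MonoidHom.inl Γ₁ Γ₂ g)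
        (MonoidHom.inl Γ₁ Γ₂ h)) = ω₁ := by
      ext g h
      simp [prodCocycle, hω₂.2.1, hγ.map_one_right]
    have hsnd : (fun g h => prodCocycle ω₁ ω₂ γ (MonoidHom.inr Γ₁ Γ₂ g)
        (MonoidHom.inr Γ₁ Γ₂ h)) = ω₂ := by
      ext g h
      simp [prodCocycle, hω₁.2.1, hγ.map_one_left]
    refine ⟨hfst ▸ hΩ.comp_monoidHom _, hsnd ▸ hΩ.comp_monoidHom _, fun g h => ?_⟩
    have hcomm : Commute ((1 : Γ₁), h) (g, (1 : Γ₂)) := by ext <;> simp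
    simpa [prodCocycle, hω₁.2.1, hω₁.2.2, hω₂.2.1, hω₂.2.2, hγ.map_one_left] using
      hΩ.apply_comm hcomm
  · rintro ⟨h₁, h₂, hγ0⟩
    obtain rfl : γ = fun _ _ => 0 := funext₂ hγ0
    unfold prodCocycle
    simpa using
      (h₁.comp_monoidHom (MonoidHom.fst Γ₁ Γ₂)).add (h₂.comp_monoidHom (MonoidHom.snd Γ₁ Γ₂))

theorem IsCocycle.isBihom_of_prodCocycle (hω₁ : IsCocycle ω₁) (hω₂ : IsCocycle ω₂)
    (hΩ : IsCocycle (prodCocycle ω₁ ω₂ γ)) : IsBihom γ := by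
  have hleft (h : Γ₂) : γ 1 h = 0 := by
    simpa [prodCocycle, hω₁.2.1, hω₂.2.1] using hΩ.2.1 (1, h)
  have hright (g : Γ₁) : γ g 1 = 0 := by
    simpa [prodCocycle, hω₁.2.2, hω₂.2.2] using hΩ.2.2 (g, 1)
  constructor
  · intro g g' h
    have := hΩ.1 (1, h) (g, 1) (g', 1)
    simp only [prodCocycle, Prod.mk_mul_mk, one_mul, mul_one, hω₁.2.2, hω₂.2.1, hright] at this
    linear_combination (norm := abel) -this
  · intro g h h'
    have := hΩ.1 (1, h) (1, h') (g, 1)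
    simp only [prodCocycle, Prod.mk_mul_mk, one_mul, mul_one, hω₁.2.1, hω₁.2.2, hω₂.2.1,
      hleft] at this
    linear_combination (norm := abel) this

def crossTerm (Ω : Γ₁ × Γ₂ → Γ₁ × Γ₂ → C) : Γ₁ → Γ₂ → C :=
  fun g h => Ω (1, h) (g, 1) - Ω (g, 1) (1, h)

variable {Ω : Γ₁ × Γ₂ → Γ₁ × Γ₂ → C}

theorem IsCocycle.prodCocycle_eq_add_coboundary (hΩ : IsCocycle Ω) (x y : Γ₁ × Γ₂) :
    let F : Γ₁ × Γ₂ → C := fun p => Ω (p.1, 1) (1, p.2)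
    prodCocycle (fun g h => Ω (g, 1) (h, 1)) (fun g h => Ω (1, g) (1, h)) (crossTerm Ω) x y =
      Ω x y + (F x + F y - F (x * y)) := by
  obtain ⟨g₁, g₂⟩ := x
  obtain ⟨h₁, h₂⟩ := y
  have hA := hΩ.1 (g₁, 1) (1, g₂) (h₁, h₂)
  have hB := hΩ.1 (1, g₂) (h₁, 1) (1, h₂)
  have hC := hΩ.1 (h₁, 1) (1, g₂) (1, h₂)
  have hD := hΩ.1 (g₁, 1) (h₁, 1) (1, g₂ * h₂)
  simp only [Prod.mk_mul_mk, one_mul, mul_one] at hA hB hC hD ⊢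
  simp only [prodCocycle, crossTerm]
  linear_combination (norm := abel) -hA + hB - hC + hD

theorem IsCocycle.exists_prodCocycle_sub_isCoboundary (hΩ : IsCocycle Ω) :
    ∃ (ω₁ : Γ₁ → Γ₁ → C) (ω₂ : Γ₂ → Γ₂ → C) (γ : Γ₁ → Γ₂ → C),
      IsCocycle ω₁ ∧ IsCocycle ω₂ ∧ IsBihom γ ∧
        IsCoboundary (fun x y => Ω x y - prodCocycle ω₁ ω₂ γ x y) := by
  set F : Γ₁ × Γ₂ → C := fun p => Ω (p.1, 1) (1, p.2)
  have hF : F 1 = 0 := hΩ.2.2 _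
  have hω₁ := hΩ.comp_monoidHom (MonoidHom.inl Γ₁ Γ₂)
  have hω₂ := hΩ.comp_monoidHom (MonoidHom.inr Γ₁ Γ₂)
  have hprod : IsCocycle (prodCocycle (fun g h => Ω (g, 1) (h, 1))
      (fun g h => Ω (1, g) (1, h)) (crossTerm Ω)) := by
    rw [funext₂ hΩ.prodCocycle_eq_add_coboundary]
    exact hΩ.add (isCocycle_coboundary hF)
  refine ⟨fun g h => Ω (g, 1) (h, 1), fun g h => Ω (1, g) (1, h), crossTerm Ω, hω₁, hω₂,
    hω₁.isBihom_of_prodCocycle hω₂ hprod, -F, by simp [hF], fun x y => ?_⟩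
  beta_reduce
  rw [hΩ.prodCocycle_eq_add_coboundary]
  simp only [Pi.neg_apply]
  abel

end Product

/-- The map `Θ₁ : H²(Γ₁,C) ⊕ H²(Γ₂,C) ⊕ BHom(Γ₁,Γ₂,C) → H²(Γ₁ × Γ₂,C)` induced by
`(ω₁,ω₂,γ) ↦ Ω` with `Ω((g₁,g₂),(h₁,h₂)) = ω₁(g₁,h₁) + ω₂(g₂,h₂) + γ(g₂,h₁)` is a
well-defined group isomorphism. Expressed at the level of cocycles: the image of a triple is
a cocycle; it is a coboundary iff `ω₁`, `ω₂` are coboundaries and `γ = 0` (well-definedness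
and injectivity); and every cocycle on `Γ₁ × Γ₂` is cohomologous to the image of some triple
(surjectivity). -/
theorem secondCohomology_prod_iso
    {Γ₁ Γ₂ C : Type*} [Group Γ₁] [Group Γ₂] [AddCommGroup C] :
    (∀ (ω₁ : Γ₁ → Γ₁ → C) (ω₂ : Γ₂ → Γ₂ → C) (γ : Γ₁ → Γ₂ → C),
      IsCocycle ω₁ → IsCocycle ω₂ → IsBihom γ →
      IsCocycle (fun x y : Γ₁ × Γ₂ => ω₁ x.1 y.1 + ω₂ x.2 y.2 + γ y.1 x.2))
    ∧
    (∀ (ω₁ : Γ₁ → Γ₁ → C) (ω₂ : Γ₂ → Γ₂ → C) (γ : Γ₁ → Γ₂ → C),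
      IsCocycle ω₁ → IsCocycle ω₂ → IsBihom γ →
      (IsCoboundary (fun x y : Γ₁ × Γ₂ => ω₁ x.1 y.1 + ω₂ x.2 y.2 + γ y.1 x.2)
        ↔ (IsCoboundary ω₁ ∧ IsCoboundary ω₂ ∧ ∀ g h, γ g h = 0)))
    ∧
    (∀ Ω : (Γ₁ × Γ₂) → (Γ₁ × Γ₂) → C, IsCocycle Ω →
      ∃ (ω₁ : Γ₁ → Γ₁ → C) (ω₂ : Γ₂ → Γ₂ → C) (γ : Γ₁ → Γ₂ → C),
        IsCocycle ω₁ ∧ IsCocycle ω₂ ∧ IsBihom γ ∧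
        IsCoboundary (fun x y : Γ₁ × Γ₂ =>
          Ω x y - (ω₁ x.1 y.1 + ω₂ x.2 y.2 + γ y.1 x.2))) :=
  ⟨fun _ _ _ hω₁ hω₂ hγ => isCocycle_prodCocycle hω₁ hω₂ hγ,
    fun _ _ _ hω₁ hω₂ hγ => isCoboundary_prodCocycle_iff hω₁ hω₂ hγ,
    fun _ hΩ => hΩ.exists_prodCocycle_sub_isCoboundary⟩
end

section
/- Let Γ₁ and Γ₂ be groups and C an abelian group. Then the homomorphism Θ₂ : H²(Γ₁ ∗ Γ₂, C) → H²(Γ₁,C) ⊕ H²(Γ₂,C) given by restricting a 2-cocycle along the two canonical embeddings Γᵢ → Γ₁ ∗ Γ₂ is a group isomorphism. -/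
namespace SCA

variable {Γ C : Type*} [Group Γ] [AddCommGroup C]

@[ext]
structure Ext (Ω : Γ → Γ → C) : Type _ where
  c : C
  g : Γ

namespace Ext

variable {Ω : Γ → Γ → C} [hΩ : Fact (IsCocycle Ω)]

instance : Group (Ext Ω) where
  mul x y := ⟨x.c + y.c + Ω x.g y.g, x.g * y.g⟩
  one := ⟨0, 1⟩
  inv x := ⟨-x.c - Ω x.g x.g⁻¹, x.g⁻¹⟩
  mul_assoc x y z := by
    ext
    · show x.c + y.c + Ω x.g y.g + z.c + Ω (x.g * y.g) z.g
        = x.c + (y.c + z.c + Ω y.g z.g) + Ω x.g (y.g * z.g)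
      have := hΩ.out.1 x.g y.g z.g
      abel_nf
      linear_combination (norm := abel) this
    · show x.g * y.g * z.g = x.g * (y.g * z.g); exact mul_assoc _ _ _
  one_mul x := by
    ext
    · show 0 + x.c + Ω 1 x.g = x.c
      rw [hΩ.out.2.2]; abel
    · exact one_mul x.g
  mul_one x := by
    ext
    · show x.c + 0 + Ω x.g 1 = x.c
      rw [hΩ.out.2.1]; abel
    · exact mul_one x.g
  inv_mul_cancel x := by
    have key : Ω x.g x.g⁻¹ = Ω x.g⁻¹ x.g := by
      have := hΩ.out.1 x.g x.g⁻¹ x.g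
      rw [mul_inv_cancel, inv_mul_cancel, hΩ.out.2.1, hΩ.out.2.2] at this
      simpa using this
    ext
    · show -x.c - Ω x.g x.g⁻¹ + x.c + Ω x.g⁻¹ x.g = 0
      rw [← key]; abel
    · exact inv_mul_cancel x.g


@[simp] theorem mul_def (x y : Ext Ω) :
    x * y = ⟨x.c + y.c + Ω x.g y.g, x.g * y.g⟩ := rfl

@[simp] theorem one_def : (1 : Ext Ω) = ⟨0, 1⟩ := rfl

/-- Projection to `Γ`. -/
def proj : Ext Ω →* Γ where
  toFun x := x.g
  map_one' := rfl
  map_mul' _ _ := rfl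

/-- Embedding of `Multiplicative C`. -/
def emb : Multiplicative C →* Ext Ω where
  toFun c := ⟨c.toAdd, 1⟩
  map_one' := rfl
  map_mul' a b := by
    ext
    · show a.toAdd + b.toAdd = a.toAdd + b.toAdd + Ω 1 1
      rw [hΩ.out.2.1]; abel
    · exact (one_mul 1).symm

theorem emb_injective : Function.Injective (emb (Ω := Ω)) := by
  intro a b h
  have := congrArg Ext.c h
  exact Multiplicative.toAdd.injective this

theorem emb_mul_aux (c : C) (x : Ext Ω) :
    emb (Multiplicative.ofAdd c) * x = ⟨c + x.c, x.g⟩ := by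
  ext
  · show c + x.c + Ω 1 x.g = c + x.c
    rw [hΩ.out.2.2]; abel
  · exact one_mul x.g

theorem emb_comm (c : Multiplicative C) (x : Ext Ω) : emb c * x = x * emb c := by
  ext
  · show c.toAdd + x.c + Ω 1 x.g = x.c + c.toAdd + Ω x.g 1
    rw [hΩ.out.2.2, hΩ.out.2.1]; abel
  · show 1 * x.g = x.g * 1
    rw [one_mul, mul_one]

theorem decomp (x : Ext Ω) : x = emb (Multiplicative.ofAdd x.c) * ⟨0, x.g⟩ := by
  rw [emb_mul_aux]; ext <;> simp

end Ext
end SCA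

namespace SCA

open Monoid Monoid.Coprod

variable {Γ₁ Γ₂ C : Type*} [Group Γ₁] [Group Γ₂] [AddCommGroup C]

theorem part1 (Ω : Coprod Γ₁ Γ₂ → Coprod Γ₁ Γ₂ → C) (hΩ : IsCocycle Ω) :
    IsCocycle (fun g h : Γ₁ => Ω (inl g) (inl h)) ∧
    IsCocycle (fun g h : Γ₂ => Ω (inr g) (inr h)) := by
  obtain ⟨hc, h1, h2⟩ := hΩ
  refine ⟨⟨fun g h k => ?_, fun g => ?_, fun g => ?_⟩,
          ⟨fun g h k => ?_, fun g => ?_, fun g => ?_⟩⟩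
  · simpa [map_mul] using hc (inl g) (inl h) (inl k)
  · simpa using h1 (inl g)
  · simpa using h2 (inl g)
  · simpa [map_mul] using hc (inr g) (inr h) (inr k)
  · simpa using h1 (inr g)
  · simpa using h2 (inr g)

theorem part2 (Ω : Coprod Γ₁ Γ₂ → Coprod Γ₁ Γ₂ → C) (hΩ : IsCocycle Ω) :
    IsCoboundary Ω ↔
      (IsCoboundary (fun g h : Γ₁ => Ω (inl g) (inl h)) ∧
       IsCoboundary (fun g h : Γ₂ => Ω (inr g) (inr h))) := by
  constructor
  · rintro ⟨F, hF1, hF⟩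
    exact ⟨⟨fun g => F (inl g), by simpa using hF1, fun g h => by
        simpa [map_mul] using hF (inl g) (inl h)⟩,
      ⟨fun g => F (inr g), by simpa using hF1, fun g h => by
        simpa [map_mul] using hF (inr g) (inr h)⟩⟩
  · rintro ⟨⟨F₁, hF₁1, hF₁⟩, ⟨F₂, hF₂1, hF₂⟩⟩
    haveI : Fact (IsCocycle Ω) := ⟨hΩ⟩
    -- splitting homomorphisms
    let s₁ : Γ₁ →* Ext Ω :=
      { toFun := fun g => ⟨-F₁ g, inl g⟩
        map_one' := by ext <;> simp [hF₁1]
        map_mul' := fun g h => by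
          ext
          · show -F₁ (g * h) = -F₁ g + -F₁ h + Ω (inl g) (inl h)
            rw [show Ω (inl g) (inl h) = F₁ g + F₁ h - F₁ (g*h) from hF₁ g h]; abel
          · exact (map_mul inl g h) }
    let s₂ : Γ₂ →* Ext Ω :=
      { toFun := fun g => ⟨-F₂ g, inr g⟩
        map_one' := by ext <;> simp [hF₂1]
        map_mul' := fun g h => by
          ext
          · show -F₂ (g * h) = -F₂ g + -F₂ h + Ω (inr g) (inr h)
            rw [show Ω (inr g) (inr h) = F₂ g + F₂ h - F₂ (g*h) from hF₂ g h]; abel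
          · exact (map_mul inr g h) }
    let Φ : Coprod Γ₁ Γ₂ →* Ext Ω := Coprod.lift s₁ s₂
    have hproj : ∀ x, (Φ x).g = x := by
      intro x
      have : (Ext.proj.comp Φ) = MonoidHom.id _ := by
        apply Coprod.hom_ext <;> ext g <;> rfl
      exact DFunLike.congr_fun this x
    refine ⟨fun x => -(Φ x).c, ?_, fun g h => ?_⟩
    · simp [map_one Φ]
    · have := congrArg Ext.c (map_mul Φ g h)
      simp only [Ext.mul_def] at this
      rw [hproj g, hproj h] at this
      simp only []
      rw [eq_comm] at this
      linear_combination (norm := abel) this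

end SCA

namespace Part3

open Monoid Monoid.Coprod SCA

universe u v w

variable {Γ₁ : Type u} {Γ₂ : Type v} {C : Type w}
variable [Group Γ₁] [Group Γ₂] [AddCommGroup C]
variable (ω₁ : Γ₁ → Γ₁ → C) (ω₂ : Γ₂ → Γ₂ → C)
variable [Fact (IsCocycle ω₁)] [Fact (IsCocycle ω₂)]

/-- The two factor groups, as a `Bool`-indexed family in a common universe. -/
def Fac : Bool → Type (max u v w) :=
  fun b => cond b (ULift.{v} (Ext ω₁)) (ULift.{u} (Ext ω₂))

instance : ∀ b, Group (Fac ω₁ ω₂ b)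
  | true => inferInstanceAs (Group (ULift (Ext ω₁)))
  | false => inferInstanceAs (Group (ULift (Ext ω₂)))

/-- The diagram maps. -/
def phi : ∀ b, Multiplicative C →* Fac ω₁ ω₂ b
  | true => (MulEquiv.ulift.symm.toMonoidHom.comp (Ext.emb (Ω := ω₁)) :
      Multiplicative C →* ULift (Ext ω₁))
  | false => (MulEquiv.ulift.symm.toMonoidHom.comp (Ext.emb (Ω := ω₂)) :
      Multiplicative C →* ULift (Ext ω₂))

/-- The amalgamated product `E₁ ∗_C E₂`. -/
abbrev Q := PushoutI (phi ω₁ ω₂)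

/-- Inclusion of the first factor. -/
def of₁ : Ext ω₁ →* Q ω₁ ω₂ :=
  (PushoutI.of (φ := phi ω₁ ω₂) true).comp
    (MulEquiv.ulift.symm.toMonoidHom : Ext ω₁ →* ULift (Ext ω₁))

/-- Inclusion of the second factor. -/
def of₂ : Ext ω₂ →* Q ω₁ ω₂ :=
  (PushoutI.of (φ := phi ω₁ ω₂) false).comp
    (MulEquiv.ulift.symm.toMonoidHom : Ext ω₂ →* ULift (Ext ω₂))

/-- The projection to the free product. -/
def pr : Q ω₁ ω₂ →* Coprod Γ₁ Γ₂ :=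
  PushoutI.lift
    (fun b => match b with
      | true => ((inl.comp (Ext.proj (Ω := ω₁))).comp
          (MulEquiv.ulift.toMonoidHom : ULift (Ext ω₁) →* Ext ω₁) :
            Fac ω₁ ω₂ true →* Coprod Γ₁ Γ₂)
      | false => ((inr.comp (Ext.proj (Ω := ω₂))).comp
          (MulEquiv.ulift.toMonoidHom : ULift (Ext ω₂) →* Ext ω₂) :
            Fac ω₁ ω₂ false →* Coprod Γ₁ Γ₂))
    1
    (by
      intro b
      cases b
      · exact MonoidHom.ext fun c => map_one inr
      · exact MonoidHom.ext fun c => map_one inl)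

@[simp] theorem pr_of₁ (x : Ext ω₁) : pr ω₁ ω₂ (of₁ ω₁ ω₂ x) = inl x.g := by
  simp only [pr, of₁, MonoidHom.comp_apply, PushoutI.lift_of]
  rfl

@[simp] theorem pr_of₂ (x : Ext ω₂) : pr ω₁ ω₂ (of₂ ω₁ ω₂ x) = inr x.g := by
  simp only [pr, of₂, MonoidHom.comp_apply, PushoutI.lift_of]
  rfl

/-- The embedding of `C`. -/
def j : C → Q ω₁ ω₂ := fun c => PushoutI.base (phi ω₁ ω₂) (Multiplicative.ofAdd c)

@[simp] theorem pr_j (c : C) : pr ω₁ ω₂ (j ω₁ ω₂ c) = 1 := by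
  simp [pr, j]

theorem of₁_emb (c : C) : of₁ ω₁ ω₂ (Ext.emb (Multiplicative.ofAdd c)) = j ω₁ ω₂ c := by
  simp only [of₁, j, MonoidHom.comp_apply]
  exact PushoutI.of_apply_eq_base (phi ω₁ ω₂) true (Multiplicative.ofAdd c)

theorem of₂_emb (c : C) : of₂ ω₁ ω₂ (Ext.emb (Multiplicative.ofAdd c)) = j ω₁ ω₂ c := by
  simp only [of₂, j, MonoidHom.comp_apply]
  exact PushoutI.of_apply_eq_base (phi ω₁ ω₂) false (Multiplicative.ofAdd c)

theorem j_injective : Function.Injective (j ω₁ ω₂) := by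
  have hb : Function.Injective (PushoutI.base (phi ω₁ ω₂)) :=
    PushoutI.base_injective (fun b => by
      cases b
      · exact MulEquiv.ulift.symm.injective.comp (Ext.emb_injective (Ω := ω₂))
      · exact MulEquiv.ulift.symm.injective.comp (Ext.emb_injective (Ω := ω₁)))
  intro a b h
  exact Multiplicative.ofAdd.injective (hb h)

theorem j_add (a b : C) : j ω₁ ω₂ (a + b) = j ω₁ ω₂ a * j ω₁ ω₂ b := by
  simp only [j, ← map_mul]; rfl

theorem j_zero : j ω₁ ω₂ 0 = 1 := by
  simp [j]

theorem j_comm (c : C) (q : Q ω₁ ω₂) : j ω₁ ω₂ c * q = q * j ω₁ ω₂ c := by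
  unfold j
  generalize Multiplicative.ofAdd c = d
  induction q using PushoutI.induction_on with
  | of b x =>
    rw [← PushoutI.of_apply_eq_base (φ := phi ω₁ ω₂) b, ← map_mul, ← map_mul]
    congr 1
    cases b
    · exact congrArg ULift.up (Ext.emb_comm d x.down)
    · exact congrArg ULift.up (Ext.emb_comm d x.down)
  | base h => rw [← map_mul, ← map_mul, mul_comm]
  | mul x y hx hy =>
    rw [← mul_assoc, hx, mul_assoc, hy, mul_assoc]

/-- The central copy of `C` inside `Q`. -/
def Z : Subgroup (Q ω₁ ω₂) := (PushoutI.base (phi ω₁ ω₂)).range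

theorem j_mem_Z (c : C) : j ω₁ ω₂ c ∈ Z ω₁ ω₂ := ⟨Multiplicative.ofAdd c, rfl⟩

instance : (Z ω₁ ω₂).Normal := by
  constructor
  rintro n ⟨c, rfl⟩ g
  have : PushoutI.base (phi ω₁ ω₂) c = j ω₁ ω₂ (Multiplicative.toAdd c) := rfl
  rw [this, ← j_comm, mul_assoc, mul_inv_cancel, mul_one]
  exact j_mem_Z ω₁ ω₂ _

theorem mk_j_mul (c : C) (q : Q ω₁ ω₂) :
    (QuotientGroup.mk (j ω₁ ω₂ c * q) : Q ω₁ ω₂ ⧸ Z ω₁ ω₂) = QuotientGroup.mk q := by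
  rw [QuotientGroup.mk_mul]
  have : (QuotientGroup.mk (j ω₁ ω₂ c) : Q ω₁ ω₂ ⧸ Z ω₁ ω₂) = 1 :=
    (QuotientGroup.eq_one_iff _).2 (j_mem_Z ω₁ ω₂ c)
  rw [this, one_mul]

theorem of₁_decomp (x : Ext ω₁) :
    of₁ ω₁ ω₂ x = j ω₁ ω₂ x.c * of₁ ω₁ ω₂ ⟨0, x.g⟩ := by
  conv_lhs => rw [Ext.decomp x]
  rw [map_mul, of₁_emb]

theorem of₂_decomp (x : Ext ω₂) :
    of₂ ω₁ ω₂ x = j ω₁ ω₂ x.c * of₂ ω₁ ω₂ ⟨0, x.g⟩ := by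
  conv_lhs => rw [Ext.decomp x]
  rw [map_mul, of₂_emb]

/-- Section homs into the quotient. -/
def sig₁ : Γ₁ →* Q ω₁ ω₂ ⧸ Z ω₁ ω₂ where
  toFun g := QuotientGroup.mk (of₁ ω₁ ω₂ ⟨0, g⟩)
  map_one' := by
    show (QuotientGroup.mk (of₁ ω₁ ω₂ ⟨0, 1⟩) : Q ω₁ ω₂ ⧸ Z ω₁ ω₂) = 1
    have h : (⟨0, 1⟩ : Ext ω₁) = 1 := rfl
    rw [h, map_one, QuotientGroup.mk_one]
  map_mul' g h := by
    have hm : (⟨0, g⟩ : Ext ω₁) * ⟨0, h⟩ = ⟨0 + 0 + ω₁ g h, g * h⟩ := rfl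
    rw [← QuotientGroup.mk_mul, ← map_mul, hm]
    rw [of₁_decomp ω₁ ω₂ ⟨0 + 0 + ω₁ g h, g * h⟩, mk_j_mul]

def sig₂ : Γ₂ →* Q ω₁ ω₂ ⧸ Z ω₁ ω₂ where
  toFun g := QuotientGroup.mk (of₂ ω₁ ω₂ ⟨0, g⟩)
  map_one' := by
    show (QuotientGroup.mk (of₂ ω₁ ω₂ ⟨0, 1⟩) : Q ω₁ ω₂ ⧸ Z ω₁ ω₂) = 1
    have h : (⟨0, 1⟩ : Ext ω₂) = 1 := rfl
    rw [h, map_one, QuotientGroup.mk_one]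
  map_mul' g h := by
    have hm : (⟨0, g⟩ : Ext ω₂) * ⟨0, h⟩ = ⟨0 + 0 + ω₂ g h, g * h⟩ := rfl
    rw [← QuotientGroup.mk_mul, ← map_mul, hm]
    rw [of₂_decomp ω₁ ω₂ ⟨0 + 0 + ω₂ g h, g * h⟩, mk_j_mul]

def sig : Coprod Γ₁ Γ₂ →* Q ω₁ ω₂ ⧸ Z ω₁ ω₂ := Coprod.lift (sig₁ ω₁ ω₂) (sig₂ ω₁ ω₂)

theorem sig_pr : (sig ω₁ ω₂).comp (pr ω₁ ω₂) = QuotientGroup.mk' (Z ω₁ ω₂) := by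
  apply PushoutI.hom_ext_nonempty
  intro b
  cases b
  · ext x
    obtain ⟨x⟩ := x
    have hof : (PushoutI.of (φ := phi ω₁ ω₂) false) ⟨x⟩ = of₂ ω₁ ω₂ x := rfl
    show sig ω₁ ω₂ (inr x.g) = QuotientGroup.mk (of₂ ω₁ ω₂ x)
    rw [of₂_decomp ω₁ ω₂ x, mk_j_mul]
    simp [sig, sig₂]
  · ext x
    obtain ⟨x⟩ := x
    have hof : (PushoutI.of (φ := phi ω₁ ω₂) true) ⟨x⟩ = of₁ ω₁ ω₂ x := rfl
    show sig ω₁ ω₂ (inl x.g) = QuotientGroup.mk (of₁ ω₁ ω₂ x)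
    rw [of₁_decomp ω₁ ω₂ x, mk_j_mul]
    simp [sig, sig₁]

theorem ker_pr (q : Q ω₁ ω₂) (hq : pr ω₁ ω₂ q = 1) : ∃ c : C, j ω₁ ω₂ c = q := by
  have h1 : QuotientGroup.mk' (Z ω₁ ω₂) q = 1 := by
    rw [← sig_pr, MonoidHom.comp_apply, hq, map_one]
  have h2 : q ∈ Z ω₁ ω₂ := by
    rwa [QuotientGroup.mk'_apply, QuotientGroup.eq_one_iff] at h1
  obtain ⟨d, hd⟩ := h2
  exact ⟨Multiplicative.toAdd d, hd⟩

theorem pr_surj : Function.Surjective (pr ω₁ ω₂) := by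
  intro x
  induction x using Coprod.induction_on with
  | inl g => exact ⟨of₁ ω₁ ω₂ ⟨0, g⟩, by simp⟩
  | inr g => exact ⟨of₂ ω₁ ω₂ ⟨0, g⟩, by simp⟩
  | mul x y hx hy =>
    obtain ⟨q₁, rfl⟩ := hx
    obtain ⟨q₂, rfl⟩ := hy
    exact ⟨q₁ * q₂, map_mul _ _ _⟩

theorem main : ∃ Ω : Coprod Γ₁ Γ₂ → Coprod Γ₁ Γ₂ → C, IsCocycle Ω ∧
    IsCoboundary (fun g h : Γ₁ => ω₁ g h - Ω (inl g) (inl h)) ∧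
    IsCoboundary (fun g h : Γ₂ => ω₂ g h - Ω (inr g) (inr h)) := by
  classical
  haveI : Nonempty C := ⟨0⟩
  -- a set-theoretic section of `pr` sending 1 to 1
  let s : Coprod Γ₁ Γ₂ → Q ω₁ ω₂ := fun x =>
    if x = 1 then 1 else Classical.choose (pr_surj ω₁ ω₂ x)
  have hs : ∀ x, pr ω₁ ω₂ (s x) = x := by
    intro x
    by_cases h : x = 1
    · simp [s, h]
    · simp only [s, if_neg h]
      exact Classical.choose_spec (pr_surj ω₁ ω₂ x)
  have hs1 : s 1 = 1 := if_pos rfl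
  -- inverse of j on its range
  let invj : Q ω₁ ω₂ → C := Function.invFun (j ω₁ ω₂)
  have hinvj : ∀ c, invj (j ω₁ ω₂ c) = c :=
    Function.leftInverse_invFun (j_injective ω₁ ω₂)
  -- the cocycle
  let D : Coprod Γ₁ Γ₂ → Coprod Γ₁ Γ₂ → Q ω₁ ω₂ := fun x y => s x * s y * (s (x * y))⁻¹
  let Ω : Coprod Γ₁ Γ₂ → Coprod Γ₁ Γ₂ → C := fun x y => invj (D x y)
  have hjΩ : ∀ x y, j ω₁ ω₂ (Ω x y) = D x y := by
    intro x y
    have h1 : pr ω₁ ω₂ (D x y) = 1 := by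
      simp only [D, map_mul, map_inv, hs]
      group
    obtain ⟨c, hc⟩ := ker_pr ω₁ ω₂ _ h1
    show j ω₁ ω₂ (invj (D x y)) = D x y
    rw [← hc, hinvj]
  have key : ∀ x y, s x * s y = j ω₁ ω₂ (Ω x y) * s (x * y) := by
    intro x y
    rw [hjΩ]
    show s x * s y = s x * s y * (s (x * y))⁻¹ * s (x * y)
    group
  have hΩcancel : ∀ (a b : C) (t : Q ω₁ ω₂), j ω₁ ω₂ a * t = j ω₁ ω₂ b * t → a = b := by
    intro a b t h
    exact j_injective ω₁ ω₂ (mul_right_cancel h)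
  have hΩcocycle : IsCocycle Ω := by
    refine ⟨fun g h k => ?_, fun g => ?_, fun g => ?_⟩
    · apply hΩcancel _ _ (s (g * h * k))
      rw [j_add, j_add]
      calc j ω₁ ω₂ (Ω g h) * j ω₁ ω₂ (Ω (g * h) k) * s (g * h * k)
          = j ω₁ ω₂ (Ω g h) * (j ω₁ ω₂ (Ω (g * h) k) * s (g * h * k)) := by
            rw [mul_assoc]
        _ = j ω₁ ω₂ (Ω g h) * (s (g * h) * s k) := by rw [← key]
        _ = (j ω₁ ω₂ (Ω g h) * s (g * h)) * s k := by rw [mul_assoc]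
        _ = s g * s h * s k := by rw [← key]
        _ = s g * (s h * s k) := by rw [mul_assoc]
        _ = s g * (j ω₁ ω₂ (Ω h k) * s (h * k)) := by rw [← key]
        _ = j ω₁ ω₂ (Ω h k) * (s g * s (h * k)) := by
            rw [← mul_assoc, ← j_comm, mul_assoc]
        _ = j ω₁ ω₂ (Ω h k) * (j ω₁ ω₂ (Ω g (h * k)) * s (g * (h * k))) := by
            rw [← key]
        _ = j ω₁ ω₂ (Ω g (h * k)) * j ω₁ ω₂ (Ω h k) * s (g * (h * k)) := by
            rw [← mul_assoc, j_comm]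
        _ = j ω₁ ω₂ (Ω g (h * k)) * j ω₁ ω₂ (Ω h k) * s (g * h * k) := by
            rw [mul_assoc g h k]
    · apply hΩcancel _ _ (s g)
      have h0 : j ω₁ ω₂ 0 * s g = s g := by rw [j_zero, one_mul]
      rw [h0]
      have := key g 1
      rw [hs1, mul_one, mul_one] at this
      exact this.symm
    · apply hΩcancel _ _ (s g)
      have h0 : j ω₁ ω₂ 0 * s g = s g := by rw [j_zero, one_mul]
      rw [h0]
      have := key 1 g
      rw [hs1, one_mul, one_mul] at this
      exact this.symm
  -- the coboundary witnesses
  have hF₁ : ∀ g : Γ₁, ∃ c : C, j ω₁ ω₂ c = of₁ ω₁ ω₂ ⟨0, g⟩ * (s (inl g))⁻¹ := by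
    intro g
    apply ker_pr
    rw [map_mul, map_inv, hs, pr_of₁]
    group
  have hF₂ : ∀ g : Γ₂, ∃ c : C, j ω₁ ω₂ c = of₂ ω₁ ω₂ ⟨0, g⟩ * (s (inr g))⁻¹ := by
    intro g
    apply ker_pr
    rw [map_mul, map_inv, hs, pr_of₂]
    group
  let F₁ : Γ₁ → C := fun g => Classical.choose (hF₁ g)
  let F₂ : Γ₂ → C := fun g => Classical.choose (hF₂ g)
  have hjF₁ : ∀ g, of₁ ω₁ ω₂ ⟨0, g⟩ = j ω₁ ω₂ (F₁ g) * s (inl g) := by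
    intro g
    rw [Classical.choose_spec (hF₁ g)]
    group
  have hjF₂ : ∀ g, of₂ ω₁ ω₂ ⟨0, g⟩ = j ω₁ ω₂ (F₂ g) * s (inr g) := by
    intro g
    rw [Classical.choose_spec (hF₂ g)]
    group
  refine ⟨Ω, hΩcocycle, ⟨F₁, ?_, ?_⟩, ⟨F₂, ?_, ?_⟩⟩
  · -- F₁ 1 = 0
    apply j_injective ω₁ ω₂
    rw [j_zero]
    have h1 : (⟨0, 1⟩ : Ext ω₁) = 1 := rfl
    have := hjF₁ 1
    rw [h1, map_one, map_one inl, hs1, mul_one] at this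
    exact this.symm
  · -- coboundary identity for Γ₁
    intro g h
    have hmul : of₁ ω₁ ω₂ ⟨0, g⟩ * of₁ ω₁ ω₂ ⟨0, h⟩
        = j ω₁ ω₂ (ω₁ g h) * of₁ ω₁ ω₂ ⟨0, g * h⟩ := by
      rw [← map_mul]
      have hm : (⟨0, g⟩ : Ext ω₁) * ⟨0, h⟩ = ⟨0 + 0 + ω₁ g h, g * h⟩ := rfl
      rw [hm, of₁_decomp ω₁ ω₂ ⟨0 + 0 + ω₁ g h, g * h⟩]
      norm_num
    rw [hjF₁ g, hjF₁ h, hjF₁ (g * h)] at hmul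
    have hmul2 : j ω₁ ω₂ (F₁ g + F₁ h + Ω (inl g) (inl h)) * s (inl (g * h))
        = j ω₁ ω₂ (ω₁ g h + F₁ (g * h)) * s (inl (g * h)) := by
      rw [j_add, j_add, j_add]
      calc j ω₁ ω₂ (F₁ g) * j ω₁ ω₂ (F₁ h) * j ω₁ ω₂ (Ω (inl g) (inl h)) * s (inl (g * h))
          = j ω₁ ω₂ (F₁ g) * j ω₁ ω₂ (F₁ h) *
              (j ω₁ ω₂ (Ω (inl g) (inl h)) * s (inl g * inl h)) := by
            rw [← map_mul inl, mul_assoc]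
        _ = j ω₁ ω₂ (F₁ g) * j ω₁ ω₂ (F₁ h) * (s (inl g) * s (inl h)) := by rw [← key]
        _ = j ω₁ ω₂ (F₁ g) * (j ω₁ ω₂ (F₁ h) * s (inl g)) * s (inl h) := by group
        _ = j ω₁ ω₂ (F₁ g) * (s (inl g) * j ω₁ ω₂ (F₁ h)) * s (inl h) := by
            rw [j_comm ω₁ ω₂ (F₁ h) (s (inl g))]
        _ = (j ω₁ ω₂ (F₁ g) * s (inl g)) * (j ω₁ ω₂ (F₁ h) * s (inl h)) := by group
        _ = j ω₁ ω₂ (ω₁ g h) * (j ω₁ ω₂ (F₁ (g * h)) * s (inl (g * h))) := hmul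
        _ = j ω₁ ω₂ (ω₁ g h) * j ω₁ ω₂ (F₁ (g * h)) * s (inl (g * h)) := by group
    have := hΩcancel _ _ _ hmul2
    simp only []
    linear_combination (norm := abel) -this
  · -- F₂ 1 = 0
    apply j_injective ω₁ ω₂
    rw [j_zero]
    have h1 : (⟨0, 1⟩ : Ext ω₂) = 1 := rfl
    have := hjF₂ 1
    rw [h1, map_one, map_one inr, hs1, mul_one] at this
    exact this.symm
  · -- coboundary identity for Γ₂
    intro g h
    have hmul : of₂ ω₁ ω₂ ⟨0, g⟩ * of₂ ω₁ ω₂ ⟨0, h⟩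
        = j ω₁ ω₂ (ω₂ g h) * of₂ ω₁ ω₂ ⟨0, g * h⟩ := by
      rw [← map_mul]
      have hm : (⟨0, g⟩ : Ext ω₂) * ⟨0, h⟩ = ⟨0 + 0 + ω₂ g h, g * h⟩ := rfl
      rw [hm, of₂_decomp ω₁ ω₂ ⟨0 + 0 + ω₂ g h, g * h⟩]
      norm_num
    rw [hjF₂ g, hjF₂ h, hjF₂ (g * h)] at hmul
    have hmul2 : j ω₁ ω₂ (F₂ g + F₂ h + Ω (inr g) (inr h)) * s (inr (g * h))
        = j ω₁ ω₂ (ω₂ g h + F₂ (g * h)) * s (inr (g * h)) := by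
      rw [j_add, j_add, j_add]
      calc j ω₁ ω₂ (F₂ g) * j ω₁ ω₂ (F₂ h) * j ω₁ ω₂ (Ω (inr g) (inr h)) * s (inr (g * h))
          = j ω₁ ω₂ (F₂ g) * j ω₁ ω₂ (F₂ h) *
              (j ω₁ ω₂ (Ω (inr g) (inr h)) * s (inr g * inr h)) := by
            rw [← map_mul inr, mul_assoc]
        _ = j ω₁ ω₂ (F₂ g) * j ω₁ ω₂ (F₂ h) * (s (inr g) * s (inr h)) := by rw [← key]
        _ = j ω₁ ω₂ (F₂ g) * (j ω₁ ω₂ (F₂ h) * s (inr g)) * s (inr h) := by group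
        _ = j ω₁ ω₂ (F₂ g) * (s (inr g) * j ω₁ ω₂ (F₂ h)) * s (inr h) := by
            rw [j_comm ω₁ ω₂ (F₂ h) (s (inr g))]
        _ = (j ω₁ ω₂ (F₂ g) * s (inr g)) * (j ω₁ ω₂ (F₂ h) * s (inr h)) := by group
        _ = j ω₁ ω₂ (ω₂ g h) * (j ω₁ ω₂ (F₂ (g * h)) * s (inr (g * h))) := hmul
        _ = j ω₁ ω₂ (ω₂ g h) * j ω₁ ω₂ (F₂ (g * h)) * s (inr (g * h)) := by group
    have := hΩcancel _ _ _ hmul2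
    simp only []
    linear_combination (norm := abel) -this

end Part3

/-- The homomorphism `Θ₂ : H²(Γ₁ ∗ Γ₂, C) → H²(Γ₁,C) ⊕ H²(Γ₂,C)` given by restriction of
2-cocycles along the canonical embeddings `Γᵢ → Γ₁ ∗ Γ₂` is a group isomorphism.
Expressed at the level of cocycles: restrictions of a cocycle are cocycles; a cocycle on the
free product is a coboundary iff both restrictions are coboundaries (well-definedness and
injectivity); and, given cocycles `ω₁`, `ω₂`, there is a cocycle on the free product whose
restrictions are cohomologous to `ω₁` resp. `ω₂` (surjectivity). -/
theorem secondCohomology_coprod_iso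
    {Γ₁ Γ₂ C : Type*} [Group Γ₁] [Group Γ₂] [AddCommGroup C] :
    (∀ Ω : Monoid.Coprod Γ₁ Γ₂ → Monoid.Coprod Γ₁ Γ₂ → C, IsCocycle Ω →
      IsCocycle (fun g h : Γ₁ => Ω (Monoid.Coprod.inl g) (Monoid.Coprod.inl h)) ∧
      IsCocycle (fun g h : Γ₂ => Ω (Monoid.Coprod.inr g) (Monoid.Coprod.inr h)))
    ∧
    (∀ Ω : Monoid.Coprod Γ₁ Γ₂ → Monoid.Coprod Γ₁ Γ₂ → C, IsCocycle Ω →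
      (IsCoboundary Ω ↔
        (IsCoboundary (fun g h : Γ₁ => Ω (Monoid.Coprod.inl g) (Monoid.Coprod.inl h)) ∧
         IsCoboundary (fun g h : Γ₂ => Ω (Monoid.Coprod.inr g) (Monoid.Coprod.inr h)))))
    ∧
    (∀ (ω₁ : Γ₁ → Γ₁ → C) (ω₂ : Γ₂ → Γ₂ → C), IsCocycle ω₁ → IsCocycle ω₂ →
      ∃ Ω : Monoid.Coprod Γ₁ Γ₂ → Monoid.Coprod Γ₁ Γ₂ → C, IsCocycle Ω ∧
        IsCoboundary (fun g h : Γ₁ =>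
          ω₁ g h - Ω (Monoid.Coprod.inl g) (Monoid.Coprod.inl h)) ∧
        IsCoboundary (fun g h : Γ₂ =>
          ω₂ g h - Ω (Monoid.Coprod.inr g) (Monoid.Coprod.inr h))) := by
  refine ⟨SCA.part1, SCA.part2, ?_⟩
  intro ω₁ ω₂ h₁ h₂
  haveI : Fact (IsCocycle ω₁) := ⟨h₁⟩
  haveI : Fact (IsCocycle ω₂) := ⟨h₂⟩
  exact Part3.main ω₁ ω₂
end

section
/- Let a group Γ act by automorphisms α on a countable abelian group Σ in which every nontrivial element has order 2, and let G = Σ ⋊ Γ. Suppose Ω is a normalized 𝕋-valued 2-cocycle on G of finite type, i.e., there exist d ≥ 1 and a map π : G → U(d) into the group of unitary d×d complex matrices with π(g)π(h) = Ω(g,h) π(gh) for all g,h ∈ G. Then there exist a finite index subgroup Σ₀ ≤ Σ, a finite index subgroup Γ₀ ≤ Γ with α_g(Σ₀) = Σ₀ for all g ∈ Γ₀, and a finite-type 𝕋-valued 2-cocycle ω₀ on Γ₀, such that the restriction of Ω to the subgroup G₀ = Σ₀ ⋊ Γ₀ of G is cohomologous to the cocycle ((a,g),(b,h)) ↦ ω₀(g,h).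 -/
/-- A normalized `𝕋`-valued 2-cocycle on a group `G`. -/
def IsMulCocycle {G : Type*} [Group G] (Ω : G → G → Circle) : Prop :=
  (∀ g h k, Ω g h * Ω (g * h) k = Ω g (h * k) * Ω h k) ∧
  (∀ g, Ω g 1 = 1) ∧ (∀ g, Ω 1 g = 1)

/-- A `𝕋`-valued 2-cocycle on `G` is of finite type if it comes from a finite dimensional
projective unitary representation. -/
def IsFiniteType {G : Type*} [Group G] (Ω : G → G → Circle) : Prop :=
  ∃ (d : ℕ) (_ : 0 < d) (π : G → Matrix.unitaryGroup (Fin d) ℂ),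
    ∀ g h : G, (π g : Matrix (Fin d) (Fin d) ℂ) * (π h : Matrix (Fin d) (Fin d) ℂ) =
      (Ω g h : ℂ) • (π (g * h) : Matrix (Fin d) (Fin d) ℂ)


/-!
Write `χ(a, b) = Ω(b, a) / Ω(a, b)` for `a, b ∈ Σ`, so that `π(b) π(a) = χ(a, b) π(a) π(b)`; `χ` is
a `Γ`-invariant bicharacter. Since `Σ` has exponent two, `χ` is `±1`-valued, and conjugating by a
suitable `π(b)` shows that `tr(π(a) π(a')) = 0` whenever `χ(a, ·) ≠ χ(a', ·)`. So the `π(a)` with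
distinct `χ(a, ·)` are linearly independent, only finitely many `χ(a, ·)` occur, and the radical
`Σ₀` of `χ` has finite index. The `π(a)`, `a ∈ Σ₀`, commute; a character `μ` of the algebra they
generate gives `f(a) = μ(π(a))` with `f(a) f(b) = Ω(a, b) f(ab)` and `|f(a)|² = |Ω(a, a)| = 1`.
Conjugation by `π(g)`, `g ∈ Γ`, preserves this algebra, so `Γ` permutes its finitely many
characters; on the finite index kernel `Γ₀` of that action `f` is `Γ₀`-equivariant, and the
cochain `(a, g) ↦ f(a) / Ω(a, g)` makes `Ω` on `Σ₀ ⋊ Γ₀` cohomologous to its restriction to `Γ₀`.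
-/

open SemidirectProduct

-- Conjugating `π x` by `π g` gives `conjFactor Ω g x • π (g * x * g⁻¹)` (`IsProjRep.conj`).
noncomputable def conjFactor {G : Type*} [Group G] (Ω : G → G → Circle) (g x : G) : Circle :=
  Ω g x * (Ω (g * x * g⁻¹) g)⁻¹

section Group

variable {G : Type*} [Group G] {Ω : G → G → Circle}

theorem conjFactor_of_commute (Ω : G → G → Circle) {g x : G} (h : Commute g x) :
    conjFactor Ω g x = Ω g x * (Ω x g)⁻¹ := by
  rw [conjFactor, h.eq, mul_inv_cancel_right]

theorem conjFactor_comp {H : Type*} [Group H] (φ : H →* G) (g x : H) :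
    conjFactor (fun a b => Ω (φ a) (φ b)) g x = conjFactor Ω (φ g) (φ x) := by
  simp [conjFactor]

namespace IsMulCocycle

theorem comp (hΩ : IsMulCocycle Ω) {H : Type*} [Group H] (φ : H →* G) :
    IsMulCocycle fun a b => Ω (φ a) (φ b) :=
  ⟨fun a b c => by simpa only [map_mul] using hΩ.1 (φ a) (φ b) (φ c),
    fun a => by simpa only [map_one] using hΩ.2.1 (φ a),
    fun a => by simpa only [map_one] using hΩ.2.2 (φ a)⟩

theorem coe_cocycle (hΩ : IsMulCocycle Ω) (g h k : G) :
    (Ω g h : ℂ) * Ω (g * h) k = Ω g (h * k) * Ω h k := by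
  exact_mod_cast congrArg ((↑) : Circle → ℂ) (hΩ.1 g h k)

theorem conjFactor_mul_right (hΩ : IsMulCocycle Ω) (g x y : G) :
    conjFactor Ω g (x * y) * Ω x y =
      conjFactor Ω g x * conjFactor Ω g y * Ω (g * x * g⁻¹) (g * y * g⁻¹) := by
  have E₁ := hΩ.coe_cocycle g x y
  have E₂ := hΩ.coe_cocycle (g * x * g⁻¹) g y
  have E₃ := hΩ.coe_cocycle (g * x * g⁻¹) (g * y * g⁻¹) g
  rw [inv_mul_cancel_right] at E₂ E₃
  rw [show g * x * g⁻¹ * (g * y * g⁻¹) = g * (x * y) * g⁻¹ by group] at E₃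
  apply Circle.coe_injective
  simp only [conjFactor, Circle.coe_mul, Circle.coe_inv]
  field_simp
  linear_combination -(Ω (g * x * g⁻¹) g * Ω (g * y * g⁻¹) g : ℂ) * E₁
    + (Ω g x * Ω (g * y * g⁻¹) g : ℂ) * E₂ - (Ω g x * Ω g y : ℂ) * E₃

theorem conjFactor_conj_of_commute (hΩ : IsMulCocycle Ω) {x y : G} (hxy : Commute x y)
    (g : G) :
    conjFactor Ω (g * y * g⁻¹) (g * x * g⁻¹) = conjFactor Ω y x := by
  have E₁ := congrArg ((↑) : Circle → ℂ) (hΩ.conjFactor_mul_right g x y)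
  have E₂ := congrArg ((↑) : Circle → ℂ) (hΩ.conjFactor_mul_right g y x)
  rw [hxy.eq] at E₁
  have hxy' : Commute (g * x * g⁻¹) (g * y * g⁻¹) := hxy.map (MulAut.conj g)
  rw [conjFactor_of_commute Ω hxy.symm, conjFactor_of_commute Ω hxy'.symm]
  apply Circle.coe_injective
  push_cast at E₁ E₂ ⊢
  field_simp
  apply mul_left_cancel₀ (Circle.coe_ne_zero (conjFactor Ω g (y * x)))
  linear_combination (Ω (g * y * g⁻¹) (g * x * g⁻¹) : ℂ) * E₁
    - (Ω (g * x * g⁻¹) (g * y * g⁻¹) : ℂ) * E₂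

theorem apply_mul_mul_eq_conjFactor_mul (hΩ : IsMulCocycle Ω) (a g b h : G) :
    Ω a g * Ω b h * Ω (a * g) (b * h) =
      conjFactor Ω g b * Ω g h * Ω a (g * b * g⁻¹) * Ω (a * (g * b * g⁻¹)) (g * h) := by
  have E₁ := hΩ.coe_cocycle a g (b * h)
  have E₂ := hΩ.coe_cocycle g b h
  have E₃ := hΩ.coe_cocycle (g * b * g⁻¹) g h
  have E₄ := hΩ.coe_cocycle a (g * b * g⁻¹) (g * h)
  rw [inv_mul_cancel_right] at E₃
  rw [show g * b * g⁻¹ * (g * h) = g * (b * h) by group] at E₄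
  apply Circle.coe_injective
  simp only [conjFactor, Circle.coe_mul, Circle.coe_inv]
  field_simp
  linear_combination (Ω b h * Ω (g * b * g⁻¹) g : ℂ) * E₁
    - (Ω (g * b * g⁻¹) g * Ω a (g * (b * h)) : ℂ) * E₂
    + (Ω a (g * (b * h)) * Ω g b : ℂ) * E₃ - (Ω g b * Ω g h : ℂ) * E₄

end IsMulCocycle

variable {n : Type*} [Fintype n] [DecidableEq n]

def IsProjRep (Ω : G → G → Circle) (π : G → Matrix.unitaryGroup n ℂ) : Prop :=
  ∀ g h, (π g : Matrix n n ℂ) * π h = (Ω g h : ℂ) • (π (g * h) : Matrix n n ℂ)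

namespace IsProjRep

variable {Ω : G → G → Circle} {π : G → Matrix.unitaryGroup n ℂ}

theorem comp (hπ : IsProjRep Ω π) {H : Type*} [Group H] (φ : H →* G) :
    IsProjRep (fun a b => Ω (φ a) (φ b)) (π ∘ φ) :=
  fun a b => by simpa only [Function.comp, map_mul] using hπ (φ a) (φ b)

theorem map_one (hΩ : IsMulCocycle Ω) (hπ : IsProjRep Ω π) : π 1 = 1 :=
  mul_eq_left.mp <| Subtype.ext <| by simpa [hΩ.2.1] using hπ 1 1

theorem conj (hπ : IsProjRep Ω π) (g x : G) :
    (π g : Matrix n n ℂ) * π x * star (π g : Matrix n n ℂ) =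
      (conjFactor Ω g x : ℂ) • (π (g * x * g⁻¹) : Matrix n n ℂ) := by
  have h₁ := hπ g x
  have h₂ := hπ (g * x * g⁻¹) g
  rw [inv_mul_cancel_right, ← inv_smul_eq_iff₀ (Circle.coe_ne_zero _)] at h₂
  rw [h₁, ← h₂, smul_mul_assoc, smul_mul_assoc, Matrix.mul_assoc,
    Unitary.mul_star_self_of_mem (π g).2, Matrix.mul_one, smul_smul, conjFactor, Circle.coe_mul,
    Circle.coe_inv]

noncomputable def conjAut (hΩ : IsMulCocycle Ω) (hπ : IsProjRep Ω π) :
    G →* (Matrix n n ℂ ≃ₐ[ℂ] Matrix n n ℂ) where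
  toFun g := (Unitary.conjStarAlgAut ℂ (Matrix n n ℂ) (π g)).toAlgEquiv
  map_one' := by ext; simp [hπ.map_one hΩ]
  map_mul' g h := by
    have : Unitary.conjStarAlgAut ℂ (Matrix n n ℂ) (π (g * h)) =
        Unitary.conjStarAlgAut ℂ (Matrix n n ℂ) (π g * π h) :=
      (Unitary.conjStarAlgAut_ext_iff _ _).mpr ⟨(Ω g h : ℂ)⁻¹, by
        rw [Submonoid.coe_mul, hπ, inv_smul_smul₀ (Circle.coe_ne_zero _)]⟩
    rw [this, map_mul]
    rfl

theorem conjAut_apply (hΩ : IsMulCocycle Ω) (hπ : IsProjRep Ω π) (g : G) (M : Matrix n n ℂ) :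
    hπ.conjAut hΩ g M = π g * M * star (π g : Matrix n n ℂ) := rfl

end IsProjRep

theorem Matrix.trace_eq_zero_of_conj_eq_smul {U : Matrix.unitaryGroup n ℂ} {M : Matrix n n ℂ}
    {z : ℂ} (hz : z ≠ 1) (h : (U : Matrix n n ℂ) * M * star (U : Matrix n n ℂ) = z • M) :
    M.trace = 0 := by
  have hM : M.trace = z * M.trace := by
    rw [← smul_eq_mul, ← Matrix.trace_smul, ← h, Matrix.trace_mul_cycle,
      Unitary.star_mul_self_of_mem U.2, Matrix.one_mul]
  have : (1 - z) * M.trace = 0 := by linear_combination hM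
  exact (mul_eq_zero.mp this).resolve_left (sub_ne_zero.mpr hz.symm)

end Group

open IsMulCommutative in
theorem nonempty_algHom_of_finiteDimensional (B : Type*) [Ring B] [IsMulCommutative B]
    [Nontrivial B] [Algebra ℂ B] [FiniteDimensional ℂ B] : Nonempty (B →ₐ[ℂ] ℂ) := by
  obtain ⟨m, hm⟩ := Ideal.exists_maximal B
  let := Ideal.Quotient.field m
  let e : ℂ ≃ₐ[ℂ] B ⧸ m := AlgEquiv.ofBijective (Algebra.ofId ℂ _)
    IsAlgClosed.algebraMap_bijective_of_isIntegral
  exact ⟨e.symm.toAlgHom.comp (Ideal.Quotient.mkₐ ℂ m)⟩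

section AlgebraAction

variable {Γ K B : Type*} [Group Γ] [CommRing K] [Ring B] [Algebra K B]

def MonoidHom.restrictSubalgebra (ρ : Γ →* (B ≃ₐ[K] B)) (S : Subalgebra K B)
    (hS : ∀ g, ∀ x ∈ S, ρ g x ∈ S) : Γ →* (S ≃ₐ[K] S) where
  toFun g :=
    { toFun x := ⟨ρ g x, hS g x x.2⟩
      invFun x := ⟨(ρ g).symm x, by simpa using hS g⁻¹ x x.2⟩
      left_inv x := Subtype.ext ((ρ g).symm_apply_apply x)
      right_inv x := Subtype.ext ((ρ g).apply_symm_apply x)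
      map_mul' x y := Subtype.ext (map_mul (ρ g) (x : B) y)
      map_add' x y := Subtype.ext (map_add (ρ g) (x : B) y)
      commutes' r := Subtype.ext ((ρ g).commutes r) }
  map_one' := by ext; simp
  map_mul' g h := by ext; simp

def MonoidHom.algHomPerm (ρ : Γ →* (B ≃ₐ[K] B)) (L : Type*) [CommRing L] [Algebra K L] :
    Γ →* Equiv.Perm (B →ₐ[K] L) where
  toFun g := (ρ g).arrowCongr AlgEquiv.refl
  map_one' := by ext; simp [AlgEquiv.arrowCongr]; rfl
  map_mul' g h := by ext; simp [AlgEquiv.arrowCongr]; rfl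

theorem MonoidHom.apply_eq_of_mem_ker_algHomPerm (ρ : Γ →* (B ≃ₐ[K] B)) {L : Type*}
    [CommRing L] [Algebra K L] {g : Γ} (hg : g ∈ (ρ.algHomPerm L).ker) (μ : B →ₐ[K] L) (x : B) :
    μ (ρ g x) = μ x := by
  have : μ.comp (ρ g).symm.toAlgHom = μ := congrArg (· μ) hg
  simpa using (DFunLike.congr_fun this (ρ g x)).symm

end AlgebraAction

section CommGroup

variable {n : Type*} [Fintype n] [DecidableEq n] {A : Type*} [CommGroup A]
  {ω : A → A → Circle}

namespace IsMulCocycle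

-- For abelian `A`, `commChar hω a b = ω b a / ω a b` by `conjFactor_of_commute`.
noncomputable def commChar (hω : IsMulCocycle ω) : A →* (A → Circle) where
  toFun a b := conjFactor ω b a
  map_one' := funext fun b => by simp [conjFactor, hω.2.1, hω.2.2]
  map_mul' a a' := funext fun b =>
    mul_right_cancel (b := ω a a') <| by
      simpa [mul_inv_cancel_comm] using hω.conjFactor_mul_right b a a'

theorem commChar_apply (hω : IsMulCocycle ω) (a b : A) : hω.commChar a b = conjFactor ω b a :=
  rfl

noncomputable def radical (hω : IsMulCocycle ω) : Subgroup A := hω.commChar.ker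

theorem mem_radical (hω : IsMulCocycle ω) {a : A} :
    a ∈ hω.radical ↔ ∀ b, hω.commChar a b = 1 :=
  funext_iff

noncomputable def radicalAlgebra (hω : IsMulCocycle ω) (ρ : A → Matrix.unitaryGroup n ℂ) :
    Subalgebra ℂ (Matrix n n ℂ) :=
  Algebra.adjoin ℂ ((fun a => (ρ a : Matrix n n ℂ)) '' hω.radical)

def toRadicalAlgebra (hω : IsMulCocycle ω) (ρ : A → Matrix.unitaryGroup n ℂ)
    (a : hω.radical) : hω.radicalAlgebra ρ :=
  ⟨ρ a, Algebra.subset_adjoin ⟨a, a.2, rfl⟩⟩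

end IsMulCocycle

namespace IsProjRep

variable {ρ : A → Matrix.unitaryGroup n ℂ} (hω : IsMulCocycle ω) (hρ : IsProjRep ω ρ)
include hω hρ

theorem conj_eq_commChar_smul (a b : A) :
    (ρ b : Matrix n n ℂ) * ρ a * star (ρ b : Matrix n n ℂ) =
      (hω.commChar a b : ℂ) • (ρ a : Matrix n n ℂ) := by
  rw [hρ.conj, mul_inv_cancel_comm, hω.commChar_apply]

theorem trace_mul_eq_zero {a a' : A} (h : hω.commChar (a * a') ≠ 1) :
    (ρ a * ρ a' : Matrix n n ℂ).trace = 0 := by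
  obtain ⟨b, hb⟩ := Function.ne_iff.mp h
  refine Matrix.trace_eq_zero_of_conj_eq_smul (U := ρ b) (z := hω.commChar (a * a') b)
    (by rwa [Ne, ← Circle.coe_one, Circle.coe_inj]) ?_
  rw [← hρ.conjAut_apply hω, map_mul, hρ.conjAut_apply hω, hρ.conjAut_apply hω,
    hρ.conj_eq_commChar_smul hω, hρ.conj_eq_commChar_smul hω, smul_mul_smul_comm, map_mul,
    Pi.mul_apply, Circle.coe_mul]

theorem finiteIndex_radical [Nonempty n] (hA : ∀ a : A, a * a = 1) :
    hω.radical.FiniteIndex := by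
  let B : Matrix n n ℂ →ₗ[ℂ] Matrix n n ℂ →ₗ[ℂ] ℂ :=
    (LinearMap.mul ℂ (Matrix n n ℂ)).compr₂ (Matrix.traceLinearMap n ℂ ℂ)
  have hli : LinearIndependent ℂ fun q : A ⧸ hω.radical => (ρ q.out : Matrix n n ℂ) := by
    refine LinearMap.linearIndependent_of_isOrthoᵢ (B := B) (fun q q' hqq' => ?_) fun q => ?_
    · refine hρ.trace_mul_eq_zero hω fun h => hqq' ?_
      rw [← QuotientGroup.out_eq' q, ← QuotientGroup.out_eq' q', QuotientGroup.eq,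
        inv_eq_of_mul_eq_one_right (hA _)]
      exact h
    · change (ρ q.out * ρ q.out : Matrix n n ℂ).trace ≠ 0
      rw [hρ, hA, hρ.map_one hω]
      simp
  have := hli.finite
  exact Subgroup.finiteIndex_of_finite_quotient

theorem commute_of_mem_radical {a : A} (ha : a ∈ hω.radical) (b : A) :
    Commute (ρ a : Matrix n n ℂ) (ρ b) := by
  have h := hρ.conj_eq_commChar_smul hω a b
  rw [hω.mem_radical.mp ha b, Circle.coe_one, one_smul] at h
  calc (ρ a * ρ b : Matrix n n ℂ) = ρ b * ρ a * (star (ρ b : Matrix n n ℂ) * ρ b) := by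
        rw [← Matrix.mul_assoc, h]
    _ = ρ b * ρ a := by rw [Unitary.star_mul_self_of_mem (ρ b).2, Matrix.mul_one]

theorem nonempty_algHom_radicalAlgebra [Nonempty n] :
    Nonempty (hω.radicalAlgebra ρ →ₐ[ℂ] ℂ) := by
  have : IsMulCommutative (hω.radicalAlgebra ρ) := Algebra.isMulCommutative_adjoin ℂ <| by
    rintro _ ⟨a, ha, rfl⟩ _ ⟨b, -, rfl⟩
    exact hρ.commute_of_mem_radical hω ha b
  exact nonempty_algHom_of_finiteDimensional _

variable (μ : IsMulCocycle.radicalAlgebra hω ρ →ₐ[ℂ] ℂ)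

theorem algHom_toRadicalAlgebra_mul (a b : hω.radical) :
    μ (hω.toRadicalAlgebra ρ a) * μ (hω.toRadicalAlgebra ρ b) =
      ω a b * μ (hω.toRadicalAlgebra ρ (a * b)) := by
  have h : hω.toRadicalAlgebra ρ a * hω.toRadicalAlgebra ρ b =
      (ω a b : ℂ) • hω.toRadicalAlgebra ρ (a * b) :=
    Subtype.ext (hρ a b)
  rw [← map_mul, h, map_smul, smul_eq_mul]

theorem norm_algHom_toRadicalAlgebra (hA : ∀ a : A, a * a = 1) (a : hω.radical) :
    ‖μ (hω.toRadicalAlgebra ρ a)‖ = 1 := by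
  have h1 : hω.toRadicalAlgebra ρ (a * a) = 1 :=
    Subtype.ext (by simp [IsMulCocycle.toRadicalAlgebra, hA, hρ.map_one hω])
  refine (pow_eq_one_iff_of_nonneg (norm_nonneg _) two_ne_zero).mp ?_
  rw [sq, ← norm_mul, hρ.algHom_toRadicalAlgebra_mul hω μ, h1, _root_.map_one, mul_one,
    Circle.norm_coe]

-- Off the radical the value `1` is a junk value.
open scoped Classical in
noncomputable def radicalTrivialization (hA : ∀ a : A, a * a = 1) (a : A) : Circle :=
  if ha : a ∈ hω.radical then
    ⟨μ (hω.toRadicalAlgebra ρ ⟨a, ha⟩),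
      mem_sphere_zero_iff_norm.2 (hρ.norm_algHom_toRadicalAlgebra hω μ hA ⟨a, ha⟩)⟩
  else 1

variable (hA : ∀ a : A, a * a = 1)

theorem coe_radicalTrivialization {a : A} (ha : a ∈ hω.radical) :
    (hρ.radicalTrivialization hω μ hA a : ℂ) = μ (hω.toRadicalAlgebra ρ ⟨a, ha⟩) := by
  simp [radicalTrivialization, ha]

theorem radicalTrivialization_mul {a b : A} (ha : a ∈ hω.radical) (hb : b ∈ hω.radical) :
    hρ.radicalTrivialization hω μ hA a * hρ.radicalTrivialization hω μ hA b =
      ω a b * hρ.radicalTrivialization hω μ hA (a * b) := by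
  apply Circle.coe_injective
  push_cast
  rw [coe_radicalTrivialization hω hρ μ hA ha, coe_radicalTrivialization hω hρ μ hA hb,
    coe_radicalTrivialization hω hρ μ hA (mul_mem ha hb)]
  exact hρ.algHom_toRadicalAlgebra_mul hω μ ⟨a, ha⟩ ⟨b, hb⟩

theorem radicalTrivialization_one : hρ.radicalTrivialization hω μ hA 1 = 1 := by
  apply Circle.coe_injective
  rw [coe_radicalTrivialization hω hρ μ hA (one_mem _), Circle.coe_one, ← _root_.map_one μ]
  exact congrArg μ (Subtype.ext (by simp [IsMulCocycle.toRadicalAlgebra, hρ.map_one hω]))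

end IsProjRep

end CommGroup

section Semidirect

variable {n : Type*} [Fintype n] [DecidableEq n] {Γ Sg : Type*} [Group Γ] [CommGroup Sg]
  {α : Γ →* MulAut Sg} {Ω : Sg ⋊[α] Γ → Sg ⋊[α] Γ → Circle}

namespace IsMulCocycle

theorem commChar_inl_map (hΩ : IsMulCocycle Ω) (g : Γ) (a b : Sg) :
    (hΩ.comp inl).commChar (α g a) (α g b) = (hΩ.comp inl).commChar a b := by
  rw [commChar_apply, commChar_apply, conjFactor_comp, conjFactor_comp, inl_aut, inl_aut,
    map_inv]
  exact hΩ.conjFactor_conj_of_commute ((Commute.all a b).map inl) (inr g)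

theorem map_mem_radical_inl (hΩ : IsMulCocycle Ω) (g : Γ) {a : Sg}
    (ha : a ∈ (hΩ.comp inl).radical) : α g a ∈ (hΩ.comp inl).radical := by
  rw [(hΩ.comp inl).mem_radical] at ha ⊢
  intro b
  rw [← (α g).apply_symm_apply b, hΩ.commChar_inl_map]
  exact ha _

theorem map_radical_inl (hΩ : IsMulCocycle Ω) (g : Γ) :
    (hΩ.comp inl).radical.map (α g).toMonoidHom = (hΩ.comp inl).radical :=
  le_antisymm (Subgroup.map_le_iff_le_comap.2 fun _ => hΩ.map_mem_radical_inl g)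
    fun a ha => ⟨α g⁻¹ a, hΩ.map_mem_radical_inl g⁻¹ ha, by simp⟩

end IsMulCocycle

noncomputable def extendCochain (Ω : Sg ⋊[α] Γ → Sg ⋊[α] Γ → Circle) (f : Sg → Circle)
    (x : Sg ⋊[α] Γ) : Circle :=
  (Ω (inl x.left) (inr x.right))⁻¹ * f x.left

theorem IsMulCocycle.apply_eq_inr_mul_coboundary (hΩ : IsMulCocycle Ω) (f : Sg → Circle)
    {x y : Sg ⋊[α] Γ}
    (hmul : f x.left * f (α x.right y.left) =
      Ω (inl x.left) (inl (α x.right y.left)) * f (x.left * α x.right y.left))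
    (hconj : conjFactor Ω (inr x.right) (inl y.left) * f (α x.right y.left) = f y.left) :
    Ω x y = Ω (inr x.right) (inr y.right) *
      (extendCochain Ω f x * extendCochain Ω f y * (extendCochain Ω f (x * y))⁻¹) := by
  have h :=
    hΩ.apply_mul_mul_eq_conjFactor_mul (inl x.left) (inr x.right) (inl y.left) (inr y.right)
  rw [inl_left_mul_inr_right, inl_left_mul_inr_right, ← map_inv, ← inl_aut, ← map_mul inl,
    ← map_mul inr] at h
  simp only [extendCochain, mul_left, mul_right]
  apply Circle.coe_injective
  have h' := congrArg ((↑) : Circle → ℂ) h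
  have hmul' := congrArg ((↑) : Circle → ℂ) hmul
  have hconj' := congrArg ((↑) : Circle → ℂ) hconj
  push_cast at h' hmul' hconj' ⊢
  field_simp
  linear_combination (f (x.left * α x.right y.left) : ℂ) * h'
    - (conjFactor Ω (inr x.right) (inl y.left) * Ω (inr x.right) (inr y.right) *
        Ω (inl (x.left * α x.right y.left)) (inr (x.right * y.right)) : ℂ) * hmul'
    + (f x.left * Ω (inr x.right) (inr y.right) *
        Ω (inl (x.left * α x.right y.left)) (inr (x.right * y.right)) : ℂ) * hconj'

namespace IsProjRep

variable {π : Sg ⋊[α] Γ → Matrix.unitaryGroup n ℂ} (hΩ : IsMulCocycle Ω)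
  (hπ : IsProjRep Ω π)
include hΩ hπ

theorem conjAut_inr_inl (g : Γ) (b : Sg) :
    hπ.conjAut hΩ (inr g) (π (inl b)) =
      (conjFactor Ω (inr g) (inl b) : ℂ) • (π (inl (α g b)) : Matrix n n ℂ) := by
  rw [conjAut_apply, hπ.conj, inl_aut, map_inv]

theorem conjAut_inr_mem_radicalAlgebra (g : Γ) {M : Matrix n n ℂ}
    (hM : M ∈ (hΩ.comp inl).radicalAlgebra (π ∘ inl)) :
    hπ.conjAut hΩ (inr g) M ∈ (hΩ.comp inl).radicalAlgebra (π ∘ inl) := by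
  have : ((hΩ.comp inl).radicalAlgebra (π ∘ inl)).map (hπ.conjAut hΩ (inr g)).toAlgHom ≤
      (hΩ.comp inl).radicalAlgebra (π ∘ inl) := by
    rw [IsMulCocycle.radicalAlgebra, AlgHom.map_adjoin]
    refine Algebra.adjoin_le ?_
    rintro _ ⟨_, ⟨b, hb, rfl⟩, rfl⟩
    change hπ.conjAut hΩ (inr g) (π (inl b)) ∈ _
    rw [hπ.conjAut_inr_inl hΩ]
    exact Subalgebra.smul_mem _
      ((hΩ.comp inl).toRadicalAlgebra (π ∘ inl) ⟨_, hΩ.map_mem_radical_inl g hb⟩).2 _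
  exact this ⟨M, hM, rfl⟩

noncomputable def radicalAction : Γ →* ((hΩ.comp inl).radicalAlgebra (π ∘ inl) ≃ₐ[ℂ]
    (hΩ.comp inl).radicalAlgebra (π ∘ inl)) :=
  ((hπ.conjAut hΩ).comp inr).restrictSubalgebra _ fun g _ =>
    hπ.conjAut_inr_mem_radicalAlgebra hΩ g

theorem conjFactor_mul_radicalTrivialization (hA : ∀ a : Sg, a * a = 1)
    (μ : (hΩ.comp inl).radicalAlgebra (π ∘ inl) →ₐ[ℂ] ℂ) {g : Γ}
    (hg : g ∈ ((hπ.radicalAction hΩ).algHomPerm ℂ).ker) {b : Sg}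
    (hb : b ∈ (hΩ.comp inl).radical) :
    conjFactor Ω (inr g) (inl b) *
        (hπ.comp inl).radicalTrivialization (hΩ.comp inl) μ hA (α g b) =
      (hπ.comp inl).radicalTrivialization (hΩ.comp inl) μ hA b := by
  have hb' := hΩ.map_mem_radical_inl g hb
  set ι := (hΩ.comp inl).toRadicalAlgebra (π ∘ inl)
  have hact : hπ.radicalAction hΩ g (ι ⟨b, hb⟩) =
      (conjFactor Ω (inr g) (inl b) : ℂ) • ι ⟨_, hb'⟩ :=
    Subtype.ext (hπ.conjAut_inr_inl hΩ g b)
  apply Circle.coe_injective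
  rw [Circle.coe_mul, coe_radicalTrivialization _ _ _ _ hb, coe_radicalTrivialization _ _ _ _ hb',
    ← MonoidHom.apply_eq_of_mem_ker_algHomPerm _ hg μ (ι ⟨b, hb⟩), hact, map_smul, smul_eq_mul]

end IsProjRep

end Semidirect

theorem finiteType_cocycle_on_semidirect_exponentTwo_general
    {Γ Sg : Type*} [Group Γ] [CommGroup Sg]
    (hSg : ∀ a : Sg, a * a = 1) (α : Γ →* MulAut Sg)
    (Ω : (Sg ⋊[α] Γ) → (Sg ⋊[α] Γ) → Circle)
    (hΩ : IsMulCocycle Ω) (hft : IsFiniteType Ω) :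
    ∃ (S₀ : Subgroup Sg) (Γ₀ : Subgroup Γ), S₀.FiniteIndex ∧ Γ₀.FiniteIndex ∧
      (∀ g ∈ Γ₀, Subgroup.map (α g).toMonoidHom S₀ = S₀) ∧
      ∃ ω₀ : Γ₀ → Γ₀ → Circle, IsMulCocycle ω₀ ∧ IsFiniteType ω₀ ∧
        ∃ F : (Sg ⋊[α] Γ) → Circle, F 1 = 1 ∧
          ∀ (x y : Sg ⋊[α] Γ) (_ : x.left ∈ S₀) (hx₂ : x.right ∈ Γ₀)
            (_ : y.left ∈ S₀) (hy₂ : y.right ∈ Γ₀),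
            Ω x y = ω₀ ⟨x.right, hx₂⟩ ⟨y.right, hy₂⟩ * (F x * F y * (F (x * y))⁻¹) := by
  obtain ⟨d, hd, π, hπ⟩ := hft
  have : Nonempty (Fin d) := ⟨⟨0, hd⟩⟩
  replace hπ : IsProjRep Ω π := hπ
  obtain ⟨μ⟩ := (hπ.comp inl).nonempty_algHom_radicalAlgebra (hΩ.comp inl)
  set f := (hπ.comp inl).radicalTrivialization (hΩ.comp inl) μ hSg
  refine ⟨(hΩ.comp inl).radical, ((hπ.radicalAction hΩ).algHomPerm ℂ).ker,
    (hπ.comp inl).finiteIndex_radical (hΩ.comp inl) hSg, inferInstance,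
    fun g _ => hΩ.map_radical_inl g, fun g h => Ω (inr g) (inr h),
    hΩ.comp (inr.comp (Subgroup.subtype _)),
    ⟨d, hd, _, hπ.comp (inr.comp (Subgroup.subtype _))⟩,
    extendCochain Ω f, ?_, fun x y hx₁ hx₂ hy₁ _ => ?_⟩
  · simp [extendCochain, f, IsProjRep.radicalTrivialization_one, hΩ.2.1]
  · exact hΩ.apply_eq_inr_mul_coboundary f
      (IsProjRep.radicalTrivialization_mul _ _ μ hSg hx₁ (hΩ.map_mem_radical_inl _ hy₁))
      (hπ.conjFactor_mul_radicalTrivialization hΩ hSg μ hx₂ hy₁)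

/-- Let `Γ` act by automorphisms `α` on a countable abelian group `Σ` in which every
nontrivial element has order 2, and let `G = Σ ⋊ Γ`. If `Ω` is a normalized `𝕋`-valued
2-cocycle on `G` of finite type, then there are finite index subgroups `Σ₀ ≤ Σ` and
`Γ₀ ≤ Γ` with `α_g(Σ₀) = Σ₀` for `g ∈ Γ₀`, and a finite type 2-cocycle `ω₀` on `Γ₀`, such
that the restriction of `Ω` to `G₀ = Σ₀ ⋊ Γ₀` is cohomologous to `((a,g),(b,h)) ↦ ω₀(g,h)`. -/
theorem finiteType_cocycle_on_semidirect_exponentTwo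
    {Γ Sg : Type*} [Group Γ] [CommGroup Sg] [Countable Sg]
    (hSg : ∀ a : Sg, a * a = 1) (α : Γ →* MulAut Sg)
    (Ω : (Sg ⋊[α] Γ) → (Sg ⋊[α] Γ) → Circle)
    (hΩ : IsMulCocycle Ω) (hft : IsFiniteType Ω) :
    ∃ (S₀ : Subgroup Sg) (Γ₀ : Subgroup Γ), S₀.FiniteIndex ∧ Γ₀.FiniteIndex ∧
      (∀ g ∈ Γ₀, Subgroup.map (α g).toMonoidHom S₀ = S₀) ∧
      ∃ ω₀ : Γ₀ → Γ₀ → Circle, IsMulCocycle ω₀ ∧ IsFiniteType ω₀ ∧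
        ∃ F : (Sg ⋊[α] Γ) → Circle, F 1 = 1 ∧
          ∀ (x y : Sg ⋊[α] Γ) (_ : x.left ∈ S₀) (hx₂ : x.right ∈ Γ₀)
            (_ : y.left ∈ S₀) (hy₂ : y.right ∈ Γ₀),
            Ω x y = ω₀ ⟨x.right, hx₂⟩ ⟨y.right, hy₂⟩ * (F x * F y * (F (x * y))⁻¹) :=
  finiteType_cocycle_on_semidirect_exponentTwo_general hSg α Ω hΩ hft
end

section
/- Let 𝒫 be a set of prime numbers and let C = ℤ[𝒫⁻¹] be the subring of ℚ generated by {1/p : p ∈ 𝒫}, regarded as an additive abelian group. Then for every integer N ≥ 1, the subgroup N·C = {N·c : c ∈ C} has finite index in C, and this index equals the largest positive divisor of N having no prime divisor in 𝒫. -/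
/-!
Split `N = m * k` where `k` collects the prime powers of `N` with primes in `𝒫`. Since `1 / k ∈ C`,
`N·C = m·C`. Every denominator occurring in `C` is coprime to `m`, so by Bézout `C = ℤ + m·C`,
and `ℤ ∩ m·C = mℤ`; hence `C / m·C ≅ ℤ / mℤ` has order `m`, which is the largest divisor of `N`
prime to `𝒫`.
-/

noncomputable def PRing (P : Set ℕ) : Subring ℚ :=
  Subring.closure {x : ℚ | ∃ p ∈ P, x = (p : ℚ)⁻¹}

namespace Nat

theorem forall_prime_dvd_mul {Q : ℕ → Prop} {a b : ℕ} (ha : ∀ p, p.Prime → p ∣ a → Q p)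
    (hb : ∀ p, p.Prime → p ∣ b → Q p) : ∀ p, p.Prime → p ∣ a * b → Q p :=
  fun p hp h => (hp.dvd_mul.mp h).elim (ha p hp) (hb p hp)

theorem forall_prime_dvd_prime {Q : ℕ → Prop} {q : ℕ} (hq : q.Prime) (hQ : Q q) :
    ∀ p, p.Prime → p ∣ q → Q p :=
  fun _ hp h => (prime_dvd_prime_iff_eq hp hq).mp h ▸ hQ

theorem forall_prime_dvd_one (Q : ℕ → Prop) : ∀ p, p.Prime → p ∣ 1 → Q p :=
  fun _ hp h => absurd (eq_one_of_dvd_one h) hp.ne_one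

theorem exists_mul_eq_prime_dvd_notMem_prime_dvd_mem (P : Set ℕ) {N : ℕ} (hN : N ≠ 0) :
    ∃ m k, m * k = N ∧ (∀ p, p.Prime → p ∣ m → p ∉ P) ∧ (∀ p, p.Prime → p ∣ k → p ∈ P) := by
  induction N using induction_on_primes with
  | zero => exact absurd rfl hN
  | one => exact ⟨1, 1, rfl, forall_prime_dvd_one _, forall_prime_dvd_one _⟩
  | prime_mul q a hq ih =>
    obtain ⟨m, k, rfl, hm, hk⟩ := ih (right_ne_zero_of_mul hN)
    by_cases hqP : q ∈ P
    · exact ⟨m, q * k, by ring, hm, forall_prime_dvd_mul (forall_prime_dvd_prime hq hqP) hk⟩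
    · exact ⟨q * m, k, by ring, forall_prime_dvd_mul (forall_prime_dvd_prime hq hqP) hm, hk⟩

end Nat

section PRing

variable {P : Set ℕ}

theorem prime_dvd_den_mem_of_mem_PRing (hP : ∀ p ∈ P, p.Prime) {q : ℚ} (hq : q ∈ PRing P) :
    ∀ p, p.Prime → p ∣ q.den → p ∈ P := by
  induction hq using Subring.closure_induction with
  | mem x hx =>
    obtain ⟨r, hr, rfl⟩ := hx
    rw [Rat.inv_natCast_den_of_pos (hP r hr).pos]
    exact Nat.forall_prime_dvd_prime (hP r hr) hr
  | zero | one => exact Nat.forall_prime_dvd_one _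
  | add x y _ _ hx hy =>
    exact fun p hp h => Nat.forall_prime_dvd_mul hx hy p hp (h.trans (Rat.add_den_dvd x y))
  | neg x _ hx => rwa [Rat.neg_den]
  | mul x y _ _ hx hy =>
    exact fun p hp h => Nat.forall_prime_dvd_mul hx hy p hp (h.trans (Rat.mul_den_dvd x y))

theorem coprime_den_of_mem_PRing (hP : ∀ p ∈ P, p.Prime) {m : ℕ}
    (hm : ∀ p, p.Prime → p ∣ m → p ∉ P) {q : ℚ} (hq : q ∈ PRing P) : q.den.Coprime m :=
  Nat.coprime_of_dvd fun p hp hpq hpm => hm p hp hpm (prime_dvd_den_mem_of_mem_PRing hP hq p hp hpq)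

theorem inv_natCast_mem_PRing {k : ℕ} (hk : k ≠ 0) (hkP : ∀ p, p.Prime → p ∣ k → p ∈ P) :
    (k : ℚ)⁻¹ ∈ PRing P := by
  induction k using induction_on_primes with
  | zero => exact absurd rfl hk
  | one => simp
  | prime_mul p a hp ih =>
    rw [Nat.cast_mul, mul_inv]
    exact mul_mem (Subring.subset_closure ⟨p, hkP p hp (dvd_mul_right p a), rfl⟩)
      (ih (right_ne_zero_of_mul hk) fun r hr h => hkP r hr (h.mul_left p))

theorem map_mulLeft_PRing_eq_self {k : ℕ} (hk : k ≠ 0) (hkP : ∀ p, p.Prime → p ∣ k → p ∈ P) :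
    (PRing P).toAddSubgroup.map (AddMonoidHom.mulLeft (k : ℚ)) = (PRing P).toAddSubgroup := by
  refine le_antisymm ?_ fun q (hq : q ∈ PRing P) =>
    ⟨(k : ℚ)⁻¹ * q, (mul_mem (inv_natCast_mem_PRing hk hkP) hq : _ ∈ PRing P), ?_⟩
  · rintro _ ⟨q, hq : q ∈ PRing P, rfl⟩
    exact (mul_mem (natCast_mem _ k) hq : _ ∈ PRing P)
  · exact mul_inv_cancel_left₀ (Nat.cast_ne_zero.mpr hk) q

theorem map_mulLeft_mul_PRing (m : ℕ) {k : ℕ} (hk : k ≠ 0)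
    (hkP : ∀ p, p.Prime → p ∣ k → p ∈ P) :
    (PRing P).toAddSubgroup.map (AddMonoidHom.mulLeft ((m * k : ℕ) : ℚ)) =
      (PRing P).toAddSubgroup.map (AddMonoidHom.mulLeft (m : ℚ)) := by
  have hcomp : AddMonoidHom.mulLeft ((m * k : ℕ) : ℚ) =
      (AddMonoidHom.mulLeft (m : ℚ)).comp (AddMonoidHom.mulLeft (k : ℚ)) := by
    ext; simp [mul_assoc]
  rw [hcomp, ← AddSubgroup.map_map, map_mulLeft_PRing_eq_self hk hkP]

theorem comap_intCast_map_mulLeft_PRing (hP : ∀ p ∈ P, p.Prime) {m : ℕ}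
    (hm : ∀ p, p.Prime → p ∣ m → p ∉ P) :
    ((PRing P).toAddSubgroup.map (AddMonoidHom.mulLeft (m : ℚ))).comap (Int.castAddHom ℚ) =
      AddSubgroup.zmultiples (m : ℤ) := by
  ext n
  rw [Int.mem_zmultiples_iff]
  constructor
  · rintro ⟨a, ha : a ∈ PRing P, h⟩
    obtain rfl | hm0 := eq_or_ne m 0
    · simp_all [eq_comm]
    have hmQ : ((m : ℤ) : ℚ) ≠ 0 := by exact_mod_cast hm0
    have ha_eq : a = (n : ℚ) / (m : ℤ) := eq_div_of_mul_eq hmQ (by rw [mul_comm]; exact_mod_cast h)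
    have hden_dvd : a.den ∣ m := by
      rw [ha_eq, ← Rat.divInt_eq_div]
      exact_mod_cast Rat.den_dvd n m
    rw [← Rat.den_div_intCast_eq_one_iff n m (by exact_mod_cast hm0), ← ha_eq]
    exact (coprime_den_of_mem_PRing hP hm ha).eq_one_of_dvd hden_dvd
  · rintro ⟨t, rfl⟩
    exact ⟨t, (intCast_mem _ t : _ ∈ PRing P), by simp⟩

theorem range_intCast_sup_map_mulLeft_PRing (hP : ∀ p ∈ P, p.Prime) {m : ℕ}
    (hm : ∀ p, p.Prime → p ∣ m → p ∉ P) :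
    (Int.castAddHom ℚ).range ⊔ (PRing P).toAddSubgroup.map (AddMonoidHom.mulLeft (m : ℚ)) =
      (PRing P).toAddSubgroup := by
  refine le_antisymm (sup_le ?_ ?_) fun q (hq : q ∈ PRing P) => ?_
  · rintro _ ⟨n, rfl⟩
    exact (intCast_mem _ n : _ ∈ PRing P)
  · rintro _ ⟨a, ha : a ∈ PRing P, rfl⟩
    exact (mul_mem (natCast_mem _ m) ha : _ ∈ PRing P)
  obtain ⟨u, v, huv⟩ := Nat.isCoprime_iff_coprime.mpr (coprime_den_of_mem_PRing hP hm hq)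
  have hq_eq : q = ((q.num * u : ℤ) : ℚ) + m * (q * v) := by
    have huvQ : (u : ℚ) * q.den + v * m = 1 := by exact_mod_cast huv
    push_cast
    linear_combination (-q) * huvQ + u * Rat.mul_den_eq_num q
  rw [hq_eq]
  exact add_mem (AddSubgroup.mem_sup_left ⟨_, rfl⟩)
    (AddSubgroup.mem_sup_right ⟨q * v, (mul_mem hq (intCast_mem _ v) : _ ∈ PRing P), rfl⟩)

theorem relIndex_map_mulLeft_PRing (hP : ∀ p ∈ P, p.Prime) {m : ℕ}
    (hm : ∀ p, p.Prime → p ∣ m → p ∉ P) :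
    ((PRing P).toAddSubgroup.map (AddMonoidHom.mulLeft (m : ℚ))).relIndex
      (PRing P).toAddSubgroup = m := by
  set M := (PRing P).toAddSubgroup.map (AddMonoidHom.mulLeft (m : ℚ))
  calc M.relIndex (PRing P).toAddSubgroup = M.relIndex ((Int.castAddHom ℚ).range ⊔ M) := by
        rw [range_intCast_sup_map_mulLeft_PRing hP hm]
    _ = M.relIndex (Int.castAddHom ℚ).range := AddSubgroup.relIndex_sup_right _ _
    _ = m := by
      rw [← AddSubgroup.index_comap, comap_intCast_map_mulLeft_PRing hP hm, Int.index_zmultiples,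
        Int.natAbs_natCast]

end PRing

/-- For `C = ℤ[𝒫⁻¹]` and `N ≥ 1`, the subgroup `N·C` has finite index in `C`, and the index
is the largest positive divisor of `N` having no prime divisor in `𝒫`. -/
theorem index_nsmul_PRing (P : Set ℕ) (hP : ∀ p ∈ P, p.Prime) (N : ℕ) (hN : 1 ≤ N) :
    letI A : AddSubgroup ℚ := (PRing P).toAddSubgroup
    letI NA : AddSubgroup ℚ := A.map (AddMonoidHom.mulLeft (N : ℚ))
    0 < NA.relIndex A ∧ NA.relIndex A ∣ N ∧
      (∀ p : ℕ, p.Prime → p ∣ NA.relIndex A → p ∉ P) ∧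
      (∀ k : ℕ, k ∣ N → (∀ p : ℕ, p.Prime → p ∣ k → p ∉ P) → k ≤ NA.relIndex A) := by
  obtain ⟨m, k, rfl, hm, hk⟩ := Nat.exists_mul_eq_prime_dvd_notMem_prime_dvd_mem P
    (Nat.one_le_iff_ne_zero.mp hN)
  have hm0 : 0 < m := Nat.pos_of_mul_pos_right hN
  have hk0 : k ≠ 0 := (Nat.pos_of_mul_pos_left hN).ne'
  simp only [map_mulLeft_mul_PRing m hk0 hk, relIndex_map_mulLeft_PRing hP hm]
  refine ⟨hm0, dvd_mul_right m k, hm, fun j hj hjP => Nat.le_of_dvd hm0 ?_⟩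
  exact (Nat.coprime_of_dvd fun p hp hpj hpk => hjP p hp hpj (hk p hp hpk)).dvd_of_dvd_mul_right hj
end

section
/- Let 𝒫 be a set of prime numbers and let C = ℤ[𝒫⁻¹] be the subring of ℚ generated by {1/p : p ∈ 𝒫}, regarded as an additive abelian group. If D ≤ C is a finite index subgroup, then the index [C:D] has no prime divisor in 𝒫, and D = [C:D]·C. -/
open Function

theorem Nat.coprime_card_of_surjective_nsmul {G : Type*} [AddGroup G] [Finite G] {s : ℕ}
    (h : Surjective fun g : G => s • g) : s.Coprime (Nat.card G) := by
  refine Nat.coprime_of_dvd fun q hq hqs hqG => ?_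
  have : Fact q.Prime := ⟨hq⟩
  obtain ⟨g, hg⟩ := exists_prime_addOrderOf_dvd_card' q hqG
  have hsg : s • g = s • (0 : G) := by
    rw [smul_zero, ← addOrderOf_dvd_iff_nsmul_eq_zero, hg]
    exact hqs
  have hg0 : g = 0 := Finite.injective_iff_surjective.mpr h hsg
  rw [hg0, addOrderOf_zero] at hg
  exact hq.ne_one hg.symm

namespace AddSubgroup

variable {R : Type*} [CommRing R] (D : AddSubgroup R) [D.FiniteIndex]

theorem coprime_index_of_isUnit_natCast {s : ℕ} (hs : IsUnit (s : R)) : s.Coprime D.index := by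
  rw [index_eq_card]
  refine Nat.coprime_card_of_surjective_nsmul fun q => ?_
  induction q using QuotientAddGroup.induction_on with | H x => ?_
  obtain ⟨u, hu⟩ := hs
  refine ⟨((↑u⁻¹ * x : R) : R ⧸ D), ?_⟩
  dsimp only
  rw [← QuotientAddGroup.mk_nsmul, nsmul_eq_mul, ← hu, ← mul_assoc, Units.mul_inv, one_mul]

variable (hR : ∀ x : R, ∃ s : ℕ, IsUnit (s : R) ∧ ∃ a : ℤ, s * x = a)
include hR

theorem exists_intCast_sub_mem (x : R) : ∃ k : ℤ, x - k ∈ D := by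
  obtain ⟨s, hs, a, hsa⟩ := hR x
  obtain ⟨u, v, huv⟩ := Nat.isCoprime_iff_coprime.mpr (D.coprime_index_of_isUnit_natCast hs)
  refine ⟨u * a, ?_⟩
  have huvR : (u : R) * s + v * D.index = 1 := by
    simpa using congrArg (Int.cast : ℤ → R) huv
  have hx : x - ((u * a : ℤ) : R) = v • (D.index • x) := by
    rw [zsmul_eq_mul, nsmul_eq_mul, Int.cast_mul, ← hsa]
    linear_combination (-x) * huvR
  rw [hx]
  exact zsmul_mem (nsmul_index_mem D x) v

theorem addOrderOf_one_quotient : addOrderOf ((1 : R) : R ⧸ D) = D.index := by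
  rw [index_eq_card]
  refine addOrderOf_eq_card_of_forall_mem_zmultiples fun q => ?_
  induction q using QuotientAddGroup.induction_on with | H x => ?_
  obtain ⟨k, hk⟩ := D.exists_intCast_sub_mem hR x
  refine ⟨k, ?_⟩
  dsimp only
  rw [← QuotientAddGroup.mk_zsmul, zsmul_one, QuotientAddGroup.eq, neg_add_eq_sub]
  exact hk

theorem intCast_mem_iff_dvd (a : ℤ) : (a : R) ∈ D ↔ (D.index : ℤ) ∣ a := by
  rw [← D.addOrderOf_one_quotient hR, addOrderOf_dvd_iff_zsmul_eq_zero,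
    ← QuotientAddGroup.mk_zsmul, zsmul_one, QuotientAddGroup.eq_zero_iff]

theorem mem_iff_exists_index_mul (x : R) : x ∈ D ↔ ∃ y, D.index * y = x := by
  constructor
  · intro hx
    obtain ⟨s, ⟨u, hu⟩, a, hsa⟩ := hR x
    have ha : (a : R) ∈ D := by
      rw [← hsa, ← nsmul_eq_mul]
      exact nsmul_mem hx s
    obtain ⟨b, rfl⟩ := (D.intCast_mem_iff_dvd hR a).mp ha
    refine ⟨↑u⁻¹ * b, ?_⟩
    calc (D.index : R) * (↑u⁻¹ * b) = ↑u⁻¹ * ((D.index * b : ℤ) : R) := by push_cast; ring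
      _ = x := by rw [← hsa, ← hu, ← mul_assoc, Units.inv_mul, one_mul]
  · rintro ⟨y, rfl⟩
    rw [← nsmul_eq_mul]
    exact nsmul_index_mem D y

end AddSubgroup

theorem PRing.isUnit_natCast {P : Set ℕ} {p : ℕ} (hp : p ∈ P) (hp0 : p ≠ 0) :
    IsUnit (p : PRing P) :=
  IsUnit.of_mul_eq_one ⟨(p : ℚ)⁻¹, Subring.subset_closure ⟨p, hp, rfl⟩⟩
    (Subtype.ext (by simp [hp0]))

theorem PRing.exists_isUnit_natCast_mul_eq_intCast {P : Set ℕ} {x : ℚ} (hx : x ∈ PRing P) :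
    ∃ s : ℕ, IsUnit (s : PRing P) ∧ ∃ a : ℤ, (s : ℚ) * x = a := by
  induction hx using Subring.closure_induction with
  | mem x hx =>
    obtain ⟨p, hp, rfl⟩ := hx
    rcases eq_or_ne p 0 with rfl | hp0
    · exact ⟨1, by simp, 0, by simp⟩
    · exact ⟨p, PRing.isUnit_natCast hp hp0, 1, by simp [hp0]⟩
  | zero => exact ⟨1, by simp, 0, by simp⟩
  | one => exact ⟨1, by simp, 1, by simp⟩
  | add x y _ _ ihx ihy =>
    obtain ⟨s, hs, a, hsa⟩ := ihx
    obtain ⟨t, ht, b, htb⟩ := ihy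
    refine ⟨s * t, by simpa using hs.mul ht, a * t + b * s, ?_⟩
    push_cast
    linear_combination (t : ℚ) * hsa + (s : ℚ) * htb
  | neg x _ ih =>
    obtain ⟨s, hs, a, hsa⟩ := ih
    exact ⟨s, hs, -a, by push_cast; linear_combination -hsa⟩
  | mul x y _ _ ihx ihy =>
    obtain ⟨s, hs, a, hsa⟩ := ihx
    obtain ⟨t, ht, b, htb⟩ := ihy
    refine ⟨s * t, by simpa using hs.mul ht, a * b, ?_⟩
    push_cast
    linear_combination (t * y) * hsa + (a : ℚ) * htb

theorem finiteIndex_subgroup_PRing_general (P : Set ℕ)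
    (D : AddSubgroup ℚ) (hle : D ≤ (PRing P).toAddSubgroup)
    (hfi : D.relIndex (PRing P).toAddSubgroup ≠ 0) :
    (∀ p : ℕ, p.Prime → p ∣ D.relIndex (PRing P).toAddSubgroup → p ∉ P) ∧
    D = ((PRing P).toAddSubgroup).map
      (AddMonoidHom.mulLeft ((D.relIndex (PRing P).toAddSubgroup : ℚ))) := by
  set D' : AddSubgroup (PRing P) := D.addSubgroupOf (PRing P).toAddSubgroup
  have : D'.FiniteIndex := ⟨hfi⟩
  have hR : ∀ x : PRing P, ∃ s : ℕ, IsUnit (s : PRing P) ∧ ∃ a : ℤ, s * x = a := fun x => by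
    obtain ⟨s, hs, a, hsa⟩ := PRing.exists_isUnit_natCast_mul_eq_intCast x.2
    exact ⟨s, hs, a, Subtype.ext (by simpa using hsa)⟩
  refine ⟨fun p hp hpn hpP => hp.ne_one ?_, ?_⟩
  · exact Nat.Coprime.eq_one_of_dvd
      (D'.coprime_index_of_isUnit_natCast (PRing.isUnit_natCast hpP hp.ne_zero)) hpn
  ext d
  rw [AddSubgroup.mem_map]
  constructor
  · intro hd
    obtain ⟨y, hy⟩ := (D'.mem_iff_exists_index_mul hR ⟨d, hle hd⟩).mp hd
    exact ⟨y, y.2, congrArg Subtype.val hy⟩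
  · rintro ⟨c, hc, rfl⟩
    exact (D'.mem_iff_exists_index_mul hR ⟨_, _⟩).mpr ⟨⟨c, hc⟩, rfl⟩

/-- For `C = ℤ[𝒫⁻¹]`, every finite index subgroup `D ≤ C` has index without prime divisors
in `𝒫`, and `D = [C:D]·C`. -/
theorem finiteIndex_subgroup_PRing (P : Set ℕ) (hP : ∀ p ∈ P, p.Prime)
    (D : AddSubgroup ℚ) (hle : D ≤ (PRing P).toAddSubgroup)
    (hfi : D.relIndex (PRing P).toAddSubgroup ≠ 0) :
    (∀ p : ℕ, p.Prime → p ∣ D.relIndex (PRing P).toAddSubgroup → p ∉ P) ∧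
    D = ((PRing P).toAddSubgroup).map
      (AddMonoidHom.mulLeft ((D.relIndex (PRing P).toAddSubgroup : ℚ))) :=
  finiteIndex_subgroup_PRing_general P D hle hfi
end

section
/- Let 𝒫 be a set of prime numbers and let C = ℤ[𝒫⁻¹] be the subring of ℚ generated by {1/p : p ∈ 𝒫}, regarded as an additive abelian group. If D is a torsion-free abelian group that is virtually isomorphic to C, then D is isomorphic to C. -/
/-- Two additive groups are virtually isomorphic if they admit finite index subgroups which
become isomorphic after quotienting by finite normal subgroups. -/
def AddVirtuallyIsomorphic (G H : Type*) [AddGroup G] [AddGroup H] : Prop :=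
  ∃ (G₁ : AddSubgroup G) (H₁ : AddSubgroup H) (N : AddSubgroup G₁) (S : AddSubgroup H₁)
    (_ : N.Normal) (_ : S.Normal),
    G₁.FiniteIndex ∧ H₁.FiniteIndex ∧ Finite N ∧ Finite S ∧
    Nonempty ((G₁ ⧸ N) ≃+ (H₁ ⧸ S))

/-!
Torsion-freeness kills the finite normal subgroups, so `D` and `C = ℤ[𝒫⁻¹]` have isomorphic
finite-index subgroups; multiplying by the indices embeds `D` into `C` with an image `F` such that
`r • C ⊆ F` for some `r ≠ 0`. Writing `r = p ^ k * w` with `p ∤ w`, Bézout shows that `F` is stable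
under division by every `p ∈ 𝒫`, so `F` is an ideal of `C`. Subrings of `ℚ` are principal ideal
domains (if `a / b` in lowest terms lies in the ring, so does `1 / b`), hence `F = g • C ≅ C`.
-/

theorem AddSubgroup.eq_bot_of_finite {G : Type*} [AddGroup G] [IsAddTorsionFree G]
    (N : AddSubgroup G) [Finite N] : N = ⊥ := by
  refine (AddSubgroup.eq_bot_iff_forall N).mpr fun x hx => by_contra fun hx0 => ?_
  have hne : (⟨x, hx⟩ : N) ≠ 0 := fun h => hx0 (congrArg Subtype.val h)
  exact not_isOfFinAddOrder_of_isAddTorsionFree hne (isOfFinAddOrder_of_finite _)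

theorem AddSubgroup.mem_of_nsmul_mem_of_coprime {G : Type*} [AddGroup G] (H : AddSubgroup G)
    {a b : ℕ} (hab : a.Coprime b) {x : G} (ha : a • x ∈ H) (hb : b • x ∈ H) : x ∈ H := by
  obtain ⟨u, v, huv⟩ := Nat.isCoprime_iff_coprime.mpr hab
  have hx : x = u • (a • x) + v • (b • x) := by
    rw [← natCast_zsmul, ← natCast_zsmul, ← mul_zsmul, ← mul_zsmul, ← add_zsmul, huv, one_zsmul]
  rw [hx]
  exact H.add_mem (H.zsmul_mem ha u) (H.zsmul_mem hb v)

theorem AddVirtuallyIsomorphic.exists_addEquiv {G H : Type*} [AddGroup G] [AddGroup H]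
    [IsAddTorsionFree G] [IsAddTorsionFree H] (h : AddVirtuallyIsomorphic G H) :
    ∃ (G₁ : AddSubgroup G) (H₁ : AddSubgroup H),
      G₁.FiniteIndex ∧ H₁.FiniteIndex ∧ Nonempty (G₁ ≃+ H₁) := by
  obtain ⟨G₁, H₁, N, S, _, _, hG₁, hH₁, _, _, ⟨e⟩⟩ := h
  obtain rfl := N.eq_bot_of_finite
  obtain rfl := S.eq_bot_of_finite
  exact ⟨G₁, H₁, hG₁, hH₁,
    ⟨QuotientAddGroup.quotientBot.symm.trans (e.trans QuotientAddGroup.quotientBot)⟩⟩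

theorem AddEquiv.exists_injective_nsmul_mem_range {G H : Type*} [AddCommGroup G]
    [IsAddTorsionFree G] [AddCommGroup H] {G₁ : AddSubgroup G} {H₁ : AddSubgroup H}
    [G₁.FiniteIndex] [H₁.FiniteIndex] (e : G₁ ≃+ H₁) :
    ∃ (f : G →+ H) (r : ℕ), Function.Injective f ∧ r ≠ 0 ∧ ∀ y : H, r • y ∈ f.range := by
  let toG₁ : G →+ G₁ := (nsmulAddMonoidHom G₁.index).codRestrict G₁ G₁.nsmul_index_mem
  refine ⟨H₁.subtype.comp (e.toAddMonoidHom.comp toG₁), G₁.index * H₁.index, ?_,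
    mul_ne_zero AddSubgroup.FiniteIndex.index_ne_zero AddSubgroup.FiniteIndex.index_ne_zero,
    fun y => ?_⟩
  · rw [injective_iff_map_eq_zero]
    intro x hx
    have hx' : toG₁ x = 0 := e.map_eq_zero_iff.mp (by simpa using hx)
    exact (smul_eq_zero.mp (congrArg Subtype.val hx')).resolve_left
      AddSubgroup.FiniteIndex.index_ne_zero
  · let z : G₁ := e.symm ⟨H₁.index • y, H₁.nsmul_index_mem y⟩
    refine ⟨z, ?_⟩
    have hz : toG₁ z = G₁.index • z := rfl
    simp [hz, z, mul_nsmul']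

theorem Subring.inv_den_mem {R : Subring ℚ} {x : ℚ} (hx : x ∈ R) : (x.den : ℚ)⁻¹ ∈ R := by
  obtain ⟨a, b, hab⟩ := Rat.isCoprime_num_den x
  have hab' : (a : ℚ) * x.num + b * x.den = 1 := by exact_mod_cast hab
  have hinv : (x.den : ℚ)⁻¹ = a * x + b := by
    field_simp
    linear_combination -hab' - a * Rat.mul_den_eq_num x
  rw [hinv]
  exact R.add_mem (R.mul_mem (intCast_mem R a) hx) (intCast_mem R b)

instance Subring.isPrincipalIdealRing_of_rat (R : Subring ℚ) : IsPrincipalIdealRing R where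
  principal I := by
    let J := I.comap (Int.castRingHom R)
    refine ⟨((Submodule.IsPrincipal.generator J : ℤ) : R), le_antisymm (fun x hx => ?_) ?_⟩
    · have hnum : ((x : ℚ).num : R) ∈ I := by
        have : ((x : ℚ).num : R) = (x : ℚ).den * x := Subtype.ext (by
          push_cast; exact (Rat.den_mul_eq_num _).symm)
        exact this ▸ I.mul_mem_left _ hx
      obtain ⟨k, hk⟩ := (Submodule.IsPrincipal.mem_iff_generator_dvd J).mp hnum
      rw [Ideal.mem_span_singleton']
      refine ⟨k * ⟨_, R.inv_den_mem x.2⟩, Subtype.ext ?_⟩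
      have hk' : ((x : ℚ).num : ℚ) = (Submodule.IsPrincipal.generator J : ℤ) * k := by
        exact_mod_cast hk
      push_cast
      conv_rhs => rw [← Rat.num_div_den (x : ℚ), hk']
      ring
    · rw [Submodule.span_le, Set.singleton_subset_iff]
      exact Submodule.IsPrincipal.generator_mem J

theorem AddSubgroup.nonempty_addEquiv_of_mul_mem {R : Type*} [CommRing R] [IsDomain R]
    [IsPrincipalIdealRing R] (F : AddSubgroup R) (hF : ∀ (c : R) {x}, x ∈ F → c * x ∈ F)
    (hne : F ≠ ⊥) : Nonempty (F ≃+ R) := by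
  let I : Ideal R := { F.toAddSubmonoid with smul_mem' := fun c _ hx => hF c hx }
  have hg : Submodule.IsPrincipal.generator I ≠ 0 := by
    intro h
    refine hne ((AddSubgroup.eq_bot_iff_forall F).mpr fun x hx => ?_)
    have hI : I = ⊥ := (Submodule.IsPrincipal.eq_bot_iff_generator_eq_zero I).mpr h
    exact (Submodule.mem_bot R).mp (hI ▸ hx)
  exact ⟨((LinearEquiv.toSpanNonzeroSingleton R R _ hg).trans
    (LinearEquiv.ofEq _ _ (Submodule.IsPrincipal.span_singleton_generator I))).toAddEquiv.symm⟩

namespace PRing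

variable {P : Set ℕ}

theorem inv_mem {p : ℕ} (hp : p ∈ P) : (p : ℚ)⁻¹ ∈ PRing P :=
  Subring.subset_closure ⟨p, hp, rfl⟩

section NSmulStable

variable {F : AddSubgroup (PRing P)} {r : ℕ}

theorem inv_mul_mem_of_forall_nsmul_mem (hP : ∀ p ∈ P, p.Prime) (hr : r ≠ 0)
    (hF : ∀ c, r • c ∈ F) {p : ℕ} (hp : p ∈ P) {x : PRing P} (hx : x ∈ F) :
    ⟨(p : ℚ)⁻¹, inv_mem hp⟩ * x ∈ F := by
  have hp0 : (p : ℚ) ≠ 0 := Nat.cast_ne_zero.mpr (hP p hp).ne_zero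
  obtain ⟨k, w, hpw, rfl⟩ := Nat.exists_eq_pow_mul_and_not_dvd hr p (hP p hp).ne_one
  refine F.mem_of_nsmul_mem_of_coprime ((hP p hp).coprime_iff_not_dvd.mpr hpw) ?_ ?_
  · convert hx using 1
    ext
    push_cast [nsmul_eq_mul]
    field_simp
  · convert hF (⟨(p : ℚ)⁻¹, inv_mem hp⟩ ^ (k + 1) * x) using 1
    ext
    push_cast [nsmul_eq_mul, inv_pow]
    field_simp
    ring

theorem mul_mem_of_forall_nsmul_mem (hP : ∀ p ∈ P, p.Prime) (hr : r ≠ 0) (hF : ∀ c, r • c ∈ F)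
    {x : PRing P} (hx : x ∈ F) (c : PRing P) : c * x ∈ F := by
  obtain ⟨c, hc⟩ := c
  induction hc using Subring.closure_induction generalizing x with
  | mem q hq => obtain ⟨p, hp, rfl⟩ := hq; exact inv_mul_mem_of_forall_nsmul_mem hP hr hF hp hx
  | zero => exact (zero_mul x).symm ▸ F.zero_mem
  | one => exact (one_mul x).symm ▸ hx
  | add a b ha' hb' ha hb =>
    exact (add_mul (⟨a, ha'⟩ : PRing P) ⟨b, hb'⟩ x).symm ▸ F.add_mem (ha hx) (hb hx)
  | neg a ha' ha => exact (neg_mul (⟨a, ha'⟩ : PRing P) x).symm ▸ F.neg_mem (ha hx)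
  | mul a b ha' hb' ha hb => exact (mul_assoc (⟨a, ha'⟩ : PRing P) ⟨b, hb'⟩ x).symm ▸ ha (hb hx)

theorem nonempty_addEquiv_of_forall_nsmul_mem (hP : ∀ p ∈ P, p.Prime) (hr : r ≠ 0)
    (hF : ∀ c, r • c ∈ F) : Nonempty (F ≃+ PRing P) :=
  F.nonempty_addEquiv_of_mul_mem (fun c _ hx => mul_mem_of_forall_nsmul_mem hP hr hF hx c)
    fun hbot => smul_ne_zero hr one_ne_zero (AddSubgroup.mem_bot.mp (hbot ▸ hF 1))

end NSmulStable

end PRing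

/-- If `D` is a torsion-free abelian group which is virtually isomorphic to `C = ℤ[𝒫⁻¹]`,
then `D ≅ C`. -/
theorem addEquiv_PRing_of_virtuallyIsomorphic (P : Set ℕ) (hP : ∀ p ∈ P, p.Prime)
    (D : Type*) [AddCommGroup D] (htf : ∀ d : D, IsOfFinAddOrder d → d = 0)
    (hvi : AddVirtuallyIsomorphic D ↥(PRing P)) :
    Nonempty (D ≃+ ↥(PRing P)) := by
  have : IsAddTorsionFree D := .of_not_isOfFinAddOrder fun d hd hfin => hd (htf d hfin)
  obtain ⟨D₁, C₁, _, _, ⟨e⟩⟩ := hvi.exists_addEquiv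
  obtain ⟨f, r, hf, hr, hfr⟩ := e.exists_injective_nsmul_mem_range
  obtain ⟨e'⟩ := PRing.nonempty_addEquiv_of_forall_nsmul_mem hP hr hfr
  exact ⟨(AddMonoidHom.ofInjective hf).trans e'⟩
end

section
/- Let Γ be a countable group with a faithful transitive action Γ ↷ I on a countable set I such that for all i ≠ j in I the orbit (Stab_Γ(i))·j is infinite, where Stab_Γ(i) = {g ∈ Γ : g·i = i}. Let Σ₀ be a nontrivial abelian group, let Σ = Σ₀^(I) be the direct sum (the group of finitely supported functions I → Σ₀) with Γ acting by permuting coordinates, (g·a)_i = a_{g⁻¹·i}, and let G = Σ ⋊ Γ be the resulting generalized wreath product. Then for every automorphism δ of G and every i₀ ∈ I, there exist g₀ ∈ G and an automorphism δ₀ of Σ₀ such that g₀ · δ(π_{i₀}(b)) · g₀⁻¹ = π_{i₀}(δ₀(b)) for all b ∈ Σ₀, where π_{i₀} : Σ₀ → Σ ≤ G is the embedding placing b in position i₀. In particular, every automorphism of G maps the subgroup Σ onto Σ. -/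
/-- The action `φ` of `Γ` on the direct sum `Σ₀^(I)` (finitely supported functions `I → A`)
is the one permuting coordinates: `(g·a)_i = a_{g⁻¹·i}`. -/
def IsCoordinatePermutationAction {Γ I A : Type*} [Group Γ] [MulAction Γ I] [AddCommGroup A]
    (φ : Γ →* MulAut (Multiplicative (I →₀ A))) : Prop :=
  ∀ (g : Γ) (a : Multiplicative (I →₀ A)) (i : I),
    Multiplicative.toAdd (φ g a) i = Multiplicative.toAdd a (g⁻¹ • i)

/-!
If `x = (a, g)` commutes with each of its conjugates, it commutes with their products, among them
every `Γ`-translate of the commutator `[single i c, x]`. When `g` moves `i`, a `k ∈ Stab(i)` with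
`k • g • i ≠ g • i` (it exists since `Stab(i) • g • i` is infinite) turns this into `c = 0`. Hence `Σ` is exactly the set of elements commuting with all their conjugates,
so it is characteristic, and an automorphism `δ` restricts to an automorphism `θ` of `Σ` with
`θ (g • a) = d g • θ a`, where `d` is the automorphism induced on `Γ = G/Σ`.

Such a `θ` maps each coordinate copy of `Σ₀` into a single coordinate: if `θ (single i₀ b)` had
two points `j ≠ p` in its support, the stabiliser of `j` would move `i₀` only within a finite set,
and the part of it fixing `i₀` would preserve the finite support of `θ (single i₀ b)`, so
`Stab(j) • p` would be finite. Conjugating by an element of `Γ` moves the coordinate back to `i₀`.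
-/

open Finsupp

-- `Γ` acts on `I →₀ A` by permuting coordinates: `(g • a) i = a (g⁻¹ • i)`.
attribute [local instance] Finsupp.comapSMul Finsupp.comapMulAction Finsupp.comapDistribMulAction

namespace SemidirectProduct

variable {N G : Type*} [CommGroup N] [Group G] {φ : G →* MulAut N}

theorem conj_inl (y : N ⋊[φ] G) (n : N) : y * inl n * y⁻¹ = inl (φ y.right n) := by
  ext <;> simp [mul_comm]

theorem commute_inl_iff {x : N ⋊[φ] G} {n : N} : Commute x (inl n) ↔ φ x.right n = n := by
  rw [Commute, SemiconjBy, ← mul_inv_eq_iff_eq_mul, conj_inl, inl_injective.eq_iff]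

theorem commute_conj_inl (n : N) (y : N ⋊[φ] G) : Commute (inl n) (y * inl n * y⁻¹) := by
  rw [conj_inl]
  exact (Commute.all n _).map inl

theorem commute_inl_of_forall_commute_conj {x : N ⋊[φ] G}
    (hx : ∀ y, Commute x (y * x * y⁻¹)) (k : G) (n : N) :
    Commute x (inl (φ k (n * (φ x.right n)⁻¹))) := by
  have h : inl (φ k (n * (φ x.right n)⁻¹)) =
      (inr k * inl n) * x * (inr k * inl n)⁻¹ * (inr k * x * (inr k)⁻¹)⁻¹ := by
    calc inl (φ k (n * (φ x.right n)⁻¹))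
        = inr k * (inl n * (x * inl n⁻¹ * x⁻¹)) * (inr k)⁻¹ := by
          rw [conj_inl, map_inv, ← map_mul, conj_inl, right_inr]
      _ = _ := by rw [map_inv]; group
  rw [h]
  exact (hx _).mul_right (hx _).inv_right

theorem characteristic_range_inl_of_forall
    (h : ∀ x : N ⋊[φ] G, (∀ y, Commute x (y * x * y⁻¹)) → x.right = 1) :
    (inl : N →* N ⋊[φ] G).range.Characteristic := by
  have hmem : ∀ x : N ⋊[φ] G, x ∈ (inl : N →* N ⋊[φ] G).range ↔ ∀ y, Commute x (y * x * y⁻¹) := by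
    intro x
    refine ⟨?_, fun hx => ?_⟩
    · rintro ⟨n, rfl⟩
      exact commute_conj_inl n
    · rw [range_inl_eq_ker_rightHom, MonoidHom.mem_ker, rightHom_eq_right]
      exact h x hx
  refine Subgroup.characteristic_iff_le_comap.mpr fun δ x hx => ?_
  rw [Subgroup.mem_comap, hmem] at *
  intro y
  simpa using (hx (δ.symm y)).map δ

variable [(inl : N →* N ⋊[φ] G).range.Characteristic]

noncomputable def baseAut (δ : MulAut (N ⋊[φ] G)) : MulAut N :=
  (MonoidHom.ofInjective inl_injective).trans
    ((MulAut.characteristic _ δ).trans (MonoidHom.ofInjective inl_injective).symm)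

theorem inl_baseAut (δ : MulAut (N ⋊[φ] G)) (n : N) : inl (baseAut δ n) = δ (inl n) := by
  simp [baseAut, MonoidHom.ofInjective_apply]

theorem baseAut_apply (δ : MulAut (N ⋊[φ] G)) (y : N ⋊[φ] G) (n : N) :
    baseAut δ (φ y.right n) = φ (δ y).right (baseAut δ n) := by
  refine inl_injective (φ := φ) ?_
  rw [inl_baseAut, ← conj_inl, map_mul, map_mul, map_inv, ← inl_baseAut, conj_inl]

end SemidirectProduct

section Orbits

variable {K Γ X : Type*} [Group K] [Group Γ] [MulAction Γ X]

theorem finite_orbit_of_finite_stabilizer_orbit (ρ₁ ρ₂ : K →* Γ) (L : Subgroup K) {x y : X}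
    {U V : Set X} (hU : U.Finite) (hV : V.Finite) (hx : ∀ k ∈ L, ρ₁ k • x ∈ U)
    (hy : ∀ k, ρ₁ k • x = x → ρ₂ k • y ∈ V) :
    {z | ∃ k ∈ L, z = ρ₂ k • y}.Finite := by
  set W := {u | ∃ k ∈ L, ρ₁ k • x = u}
  have hrep : ∀ u ∈ W, ∃ k, ρ₁ k • x = u := fun _ ⟨k, _, hk⟩ => ⟨k, hk⟩
  choose! r hr using hrep
  have hW : W.Finite := hU.subset fun _ ⟨k, hk, hku⟩ => hku ▸ hx k hk
  refine (hW.biUnion fun u _ => hV.image (ρ₂ (r u) • ·)).subset ?_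
  rintro _ ⟨k, hk, rfl⟩
  have hu : ρ₁ k • x ∈ W := ⟨k, hk, rfl⟩
  refine Set.mem_biUnion hu ⟨ρ₂ ((r (ρ₁ k • x))⁻¹ * k) • y, hy _ ?_, ?_⟩
  · rw [map_mul, map_inv, mul_smul, inv_smul_eq_iff, hr _ hu]
  · simp only [map_mul, map_inv, mul_smul, smul_inv_smul]

end Orbits

section Coordinates

variable {K Γ I A : Type*} [Group K] [Group Γ] [MulAction Γ I] [AddCommGroup A]

theorem smul_mem_support_of_smul_eq {g : Γ} {a : I →₀ A} (h : g • a = a) {t : I}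
    (ht : t ∈ a.support) : g • t ∈ a.support := by
  rwa [mem_support_iff, ← h, comapSMul_apply, inv_smul_smul, ← mem_support_iff]

omit [MulAction Γ I] in
theorem symm_apply_smul {M : Type*} [Add M] [SMul Γ M] {ρ ρ' : K →* Γ} {θ : M ≃+ M}
    (hθ : ∀ k a, θ (ρ k • a) = ρ' k • θ a) (k : K) (a : M) :
    θ.symm (ρ' k • a) = ρ k • θ.symm a := by
  rw [θ.symm_apply_eq, hθ, θ.apply_symm_apply]

theorem support_map_single_subset_singleton (hstab : ∀ i j : I, i ≠ j →
      {x : I | ∃ g : Γ, g • i = i ∧ x = g • j}.Infinite)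
    {ρ ρ' : K →* Γ} (hρ' : Function.Surjective ρ') {θ : (I →₀ A) ≃+ (I →₀ A)}
    (hθ : ∀ k a, θ (ρ k • a) = ρ' k • θ a) (i₀ : I) (b : A) :
    ∃ j, (θ (single i₀ b)).support ⊆ {j} := by
  set v := θ (single i₀ b)
  have hv_stab : ∀ k, ρ k • i₀ = i₀ → ρ' k • v = v := fun k hk => by
    rw [← hθ, comapSMul_single, hk]
  rcases eq_or_ne b 0 with rfl | hb
  · exact ⟨i₀, by simp [v]⟩
  obtain ⟨j, -, hj⟩ : ∃ j ∈ v.support, θ.symm (single j (v j)) i₀ ≠ 0 := by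
    have h : (v.sum fun t c => θ.symm (single t c) i₀) ≠ 0 := by
      rw [← Finsupp.sum_apply, ← map_finsuppSum, Finsupp.sum_single]
      simpa [v] using hb
    exact Finset.exists_ne_zero_of_sum_ne_zero h
  refine ⟨j, fun p hp => by_contra fun hpj =>
    hstab j p (Ne.symm (Finset.mem_singleton.not.mp hpj)) ?_⟩
  set w := θ.symm (single j (v j))
  -- `Stab(j)` moves `i₀` within `supp w`; the part of it fixing `i₀` moves `p` within `supp v`.
  refine (finite_orbit_of_finite_stabilizer_orbit ρ ρ' ((MulAction.stabilizer Γ j).comap ρ')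
    w.support.finite_toSet v.support.finite_toSet (x := i₀) (fun k hk => ?_)
    (fun k hk => smul_mem_support_of_smul_eq (hv_stab k hk) hp)).subset ?_
  · refine smul_mem_support_of_smul_eq ?_ (mem_support_iff.mpr hj)
    rw [← symm_apply_smul hθ, comapSMul_single, (MulAction.mem_stabilizer_iff).mp hk]
  · rintro _ ⟨g, hg, rfl⟩
    obtain ⟨k, rfl⟩ := hρ' g
    exact ⟨k, hg, rfl⟩

theorem forall_support_subset_singleton {f : A →+ (I →₀ A)}
    (hf : ∀ b, ∃ j, (f b).support ⊆ {j}) {b₀ : A} {j : I} (hj : j ∈ (f b₀).support) (b : A) :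
    (f b).support ⊆ {j} := by
  classical
  intro t ht
  by_contra htj
  obtain ⟨t₀, ht₀⟩ := hf b
  obtain ⟨j₀, hj₀⟩ := hf b₀
  obtain ⟨s, hs⟩ := hf (b + b₀)
  obtain rfl := Finset.mem_singleton.mp (ht₀ ht)
  obtain rfl := Finset.mem_singleton.mp (hj₀ hj)
  have hdisj : Disjoint (f b).support (f b₀).support :=
    (Finset.disjoint_singleton.mpr (Finset.mem_singleton.not.mp htj)).mono ht₀ hj₀
  have hsupp : (f (b + b₀)).support = (f b).support ∪ (f b₀).support := by
    rw [map_add, support_add_eq hdisj]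
  have hts := hs (hsupp ▸ Finset.mem_union_left _ ht)
  have hjs := hs (hsupp ▸ Finset.mem_union_right _ hj)
  rw [Finset.mem_singleton] at hts hjs htj
  exact htj (hts.trans hjs.symm)

theorem exists_addAut_map_single_eq_single (hstab : ∀ i j : I, i ≠ j →
      {x : I | ∃ g : Γ, g • i = i ∧ x = g • j}.Infinite) [Nontrivial A]
    {ρ ρ' : K →* Γ} (hρ : Function.Surjective ρ) (hρ' : Function.Surjective ρ')
    {θ : (I →₀ A) ≃+ (I →₀ A)} (hθ : ∀ k a, θ (ρ k • a) = ρ' k • θ a) (i₀ : I) :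
    ∃ (j : I) (δ₀ : AddAut A), ∀ b, θ (single i₀ b) = single j (δ₀ b) := by
  obtain ⟨b₀, hb₀⟩ := exists_ne (0 : A)
  obtain ⟨j, hj⟩ : (θ (single i₀ b₀)).support.Nonempty := by simpa using hb₀
  have hθj : ∀ b, θ (single i₀ b) = single j (θ (single i₀ b) j) := fun b =>
    support_subset_singleton.mp <| forall_support_subset_singleton
      (f := θ.toAddMonoidHom.comp (singleAddHom i₀))
      (support_map_single_subset_singleton hstab hρ' hθ i₀) hj b
  have hi₀ : i₀ ∈ (θ.symm (single j (θ (single i₀ b₀) j))).support := by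
    simpa [← hθj] using hb₀
  have hθi : ∀ c, θ.symm (single j c) = single i₀ (θ.symm (single j c) i₀) := fun c =>
    support_subset_singleton.mp <| forall_support_subset_singleton
      (f := θ.symm.toAddMonoidHom.comp (singleAddHom j))
      (support_map_single_subset_singleton (θ := θ.symm) hstab hρ (symm_apply_smul hθ) j) hi₀ c
  refine ⟨j, { toFun := fun b => θ (single i₀ b) j
               invFun := fun c => θ.symm (single j c) i₀
               left_inv := fun b => ?_
               right_inv := fun c => ?_
               map_add' := fun b c => by simp }, fun b => hθj b⟩
  · simp only [← hθj, AddEquiv.symm_apply_apply, single_eq_same]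
  · simp only [← hθi, AddEquiv.apply_symm_apply, single_eq_same]

end Coordinates

open Multiplicative SemidirectProduct

section Wreath

variable {Γ I A : Type*} [Group Γ] [MulAction Γ I] [AddCommGroup A]
  {φ : Γ →* MulAut (Multiplicative (I →₀ A))}

theorem IsCoordinatePermutationAction.toAdd_apply (hφ : IsCoordinatePermutationAction φ)
    (g : Γ) (a : Multiplicative (I →₀ A)) : toAdd (φ g a) = g • toAdd a := by
  ext i
  rw [hφ, comapSMul_apply]

theorem IsCoordinatePermutationAction.apply_ofAdd (hφ : IsCoordinatePermutationAction φ)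
    (g : Γ) (a : I →₀ A) : φ g (ofAdd a) = ofAdd (g • a) :=
  toAdd.injective (hφ.toAdd_apply g (ofAdd a))

theorem IsCoordinatePermutationAction.right_eq_one_of_forall_commute_conj [Nontrivial A]
    (hφ : IsCoordinatePermutationAction φ) (hfaith : ∀ g : Γ, (∀ i : I, g • i = i) → g = 1)
    (hstab : ∀ i j : I, i ≠ j → {x : I | ∃ g : Γ, g • i = i ∧ x = g • j}.Infinite)
    {x : Multiplicative (I →₀ A) ⋊[φ] Γ} (hx : ∀ y, Commute x (y * x * y⁻¹)) : x.right = 1 := by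
  by_contra hg
  obtain ⟨i, hi⟩ : ∃ i, x.right • i ≠ i := by
    by_contra! h
    exact hg (hfaith _ h)
  obtain ⟨k, hki, hk⟩ : ∃ k : Γ, k • i = i ∧ k • x.right • i ≠ x.right • i := by
    by_contra! h
    refine hstab i _ (Ne.symm hi) ((Set.finite_singleton (x.right • i)).subset ?_)
    rintro _ ⟨k, hk, rfl⟩
    exact h k hk
  obtain ⟨c, hc⟩ := exists_ne (0 : A)
  have h := commute_inl_iff.mp (commute_inl_of_forall_commute_conj hx k (ofAdd (single i c)))
  replace h := congrArg (fun m : Multiplicative (I →₀ A) => toAdd m (x.right • i)) h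
  have hki' : k • x.right • i ≠ i := fun he => hi (smul_left_cancel k (he.trans hki.symm))
  have hgki : x.right • k • x.right • i ≠ x.right • i := fun he => hki' (smul_left_cancel _ he)
  simp [hφ.toAdd_apply, hki, hgki, hk, hi.symm] at h
  exact hc h

end Wreath

theorem aut_generalized_wreath_general
    {Γ I A : Type*} [Group Γ] [MulAction Γ I]
    (hfaith : ∀ g : Γ, (∀ i : I, g • i = i) → g = 1)
    (htrans : ∀ i j : I, ∃ g : Γ, g • i = j)
    (hstab : ∀ i j : I, i ≠ j → {x : I | ∃ g : Γ, g • i = i ∧ x = g • j}.Infinite)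
    [AddCommGroup A] [Nontrivial A]
    (φ : Γ →* MulAut (Multiplicative (I →₀ A))) (hφ : IsCoordinatePermutationAction φ) :
    (∀ (δ : MulAut ((Multiplicative (I →₀ A)) ⋊[φ] Γ)) (i₀ : I),
      ∃ (g₀ : (Multiplicative (I →₀ A)) ⋊[φ] Γ) (δ₀ : AddAut A),
        ∀ b : A,
          g₀ * δ ⟨Multiplicative.ofAdd (Finsupp.single i₀ b), 1⟩ * g₀⁻¹ =
            ⟨Multiplicative.ofAdd (Finsupp.single i₀ (δ₀ b)), 1⟩)
    ∧
    (∀ δ : MulAut ((Multiplicative (I →₀ A)) ⋊[φ] Γ),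
      Subgroup.map δ.toMonoidHom
          (SemidirectProduct.inl : Multiplicative (I →₀ A) →* _).range =
        (SemidirectProduct.inl : Multiplicative (I →₀ A) →* _).range) := by
  have hchar : (inl : Multiplicative (I →₀ A) →* _ ⋊[φ] Γ).range.Characteristic :=
    characteristic_range_inl_of_forall fun _ => hφ.right_eq_one_of_forall_commute_conj hfaith hstab
  refine ⟨fun δ i₀ => ?_, Subgroup.characteristic_iff_map_eq.mp hchar⟩
  set θ : (I →₀ A) ≃+ (I →₀ A) := AddEquiv.toMultiplicative.symm (baseAut δ)
  have hθ : ∀ y a, θ (rightHom y • a) = (rightHom.comp δ.toMonoidHom) y • θ a := by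
    intro y a
    change toAdd (baseAut δ (ofAdd (y.right • a))) = (δ y).right • toAdd (baseAut δ (ofAdd a))
    rw [← hφ.toAdd_apply, ← baseAut_apply, hφ.apply_ofAdd]
  obtain ⟨j, δ₀, hδ₀⟩ := exists_addAut_map_single_eq_single (ρ' := rightHom.comp δ.toMonoidHom)
    hstab rightHom_surjective (rightHom_surjective.comp δ.surjective) hθ i₀
  obtain ⟨g, rfl⟩ := htrans j i₀
  refine ⟨inr g, δ₀, fun b => ?_⟩
  change inr g * δ (inl (ofAdd (single (g • j) b))) * (inr g)⁻¹ =
    inl (ofAdd (single (g • j) (δ₀ b)))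
  rw [← inl_baseAut, conj_inl, right_inr]
  change inl (φ g (ofAdd (θ (single (g • j) b)))) = _
  rw [hδ₀, hφ.apply_ofAdd, comapSMul_single]

/-- Let `Γ ↷ I` be a faithful transitive action of a countable group on a countable set such
that `Stab(i)·j` is infinite whenever `i ≠ j`, let `Σ₀` be a nontrivial abelian group, and
let `G = Σ₀^(I) ⋊ Γ` be the generalized wreath product. Then every automorphism `δ` of `G`
sends, up to an inner automorphism, the copy of `Σ₀` in any position `i₀` to itself via an
automorphism of `Σ₀`; in particular every automorphism of `G` maps the base subgroup `Σ`
onto itself. -/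
theorem aut_generalized_wreath
    {Γ I A : Type*} [Group Γ] [Countable Γ] [Countable I] [MulAction Γ I]
    (hfaith : ∀ g : Γ, (∀ i : I, g • i = i) → g = 1)
    (htrans : ∀ i j : I, ∃ g : Γ, g • i = j)
    (hstab : ∀ i j : I, i ≠ j → {x : I | ∃ g : Γ, g • i = i ∧ x = g • j}.Infinite)
    [AddCommGroup A] [Nontrivial A]
    (φ : Γ →* MulAut (Multiplicative (I →₀ A))) (hφ : IsCoordinatePermutationAction φ) :
    (∀ (δ : MulAut ((Multiplicative (I →₀ A)) ⋊[φ] Γ)) (i₀ : I),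
      ∃ (g₀ : (Multiplicative (I →₀ A)) ⋊[φ] Γ) (δ₀ : AddAut A),
        ∀ b : A,
          g₀ * δ ⟨Multiplicative.ofAdd (Finsupp.single i₀ b), 1⟩ * g₀⁻¹ =
            ⟨Multiplicative.ofAdd (Finsupp.single i₀ (δ₀ b)), 1⟩)
    ∧
    (∀ δ : MulAut ((Multiplicative (I →₀ A)) ⋊[φ] Γ),
      Subgroup.map δ.toMonoidHom
          (SemidirectProduct.inl : Multiplicative (I →₀ A) →* _).range =
        (SemidirectProduct.inl : Multiplicative (I →₀ A) →* _).range) :=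
  aut_generalized_wreath_general hfaith htrans hstab φ hφ
end

section
/- Let 𝒫₂ ⊊ 𝒫₁ be sets of prime numbers (𝒫₂ a proper subset of 𝒫₁) and let Cᵢ = ℤ[𝒫ᵢ⁻¹] be the subring of ℚ generated by {1/p : p ∈ 𝒫ᵢ}, regarded as an additive abelian group. Then every automorphism φ of the additive group C₁ × C₂ is of the form φ(a,b) = (c·a + e·b, d·b) for some unit c of the ring C₁, some element e ∈ C₁, and some unit d of the ring C₂ (with products taken in ℚ). -/
theorem AddMonoidHom.apply_eq_mul_apply_one {C : Subring ℚ} (ψ : C →+ ℚ) (x : C) :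
    ψ x = x * ψ 1 := by
  have hden : ((x : ℚ).den : ℚ) ≠ 0 := by positivity
  have hx : ((x : ℚ).den : ℤ) • x = (x : ℚ).num • (1 : C) := by
    ext
    simp [zsmul_eq_mul, mul_comm]
  have hψ := congrArg ψ hx
  rw [map_zsmul, map_zsmul, zsmul_eq_mul, zsmul_eq_mul, Int.cast_natCast,
    ← Rat.mul_den_eq_num] at hψ
  apply mul_left_cancel₀ hden
  linear_combination hψ

theorem AddMonoidHom.coe_apply_eq_mul_apply_one {C D : Subring ℚ} (ψ : C →+ D) (x : C) :
    (ψ x : ℚ) = x * ψ 1 :=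
  (D.subtype.toAddMonoidHom.comp ψ).apply_eq_mul_apply_one x

namespace PRing

variable {P : Set ℕ}

theorem not_dvd_den (hP : ∀ p ∈ P, p.Prime) {q : ℕ} (hq : q.Prime) (hqP : q ∉ P)
    {x : ℚ} (hx : x ∈ PRing P) : ¬ q ∣ x.den := by
  induction hx using Subring.closure_induction with
  | mem y hy =>
    obtain ⟨p, hpP, rfl⟩ := hy
    rw [Rat.inv_natCast_den_of_pos (hP p hpP).pos]
    exact fun h => hqP (((Nat.prime_dvd_prime_iff_eq hq (hP p hpP)).mp h) ▸ hpP)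
  | zero => simp [hq.ne_one]
  | one => simp [hq.ne_one]
  | add x y _ _ ihx ihy =>
    exact fun h => (hq.dvd_mul.mp (h.trans (Rat.add_den_dvd x y))).elim ihx ihy
  | neg x _ ih => rwa [Rat.den_neg_eq_den]
  | mul x y _ _ ihx ihy =>
    exact fun h => (hq.dvd_mul.mp (h.trans (Rat.mul_den_dvd x y))).elim ihx ihy

theorem padicValRat_nonneg (hP : ∀ p ∈ P, p.Prime) {q : ℕ} (hq : q.Prime) (hqP : q ∉ P)
    {x : ℚ} (hx : x ∈ PRing P) : 0 ≤ padicValRat q x := by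
  rw [padicValRat_def, padicValNat.eq_zero_of_not_dvd (not_dvd_den hP hq hqP hx)]
  simp

theorem inv_pow_mem {p : ℕ} (hp : p ∈ P) (k : ℕ) : (p : ℚ)⁻¹ ^ k ∈ PRing P :=
  pow_mem (Subring.subset_closure (s := {x : ℚ | ∃ p ∈ P, x = (p : ℚ)⁻¹}) ⟨p, hp, rfl⟩) k

theorem addMonoidHom_eq_zero {P₁ P₂ : Set ℕ} (hP₂ : ∀ p ∈ P₂, p.Prime) {p : ℕ}
    (hp : p.Prime) (hp₁ : p ∈ P₁) (hp₂ : p ∉ P₂) (ψ : PRing P₁ →+ PRing P₂) : ψ = 0 := by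
  have : Fact p.Prime := ⟨hp⟩
  suffices hf : (ψ 1 : ℚ) = 0 by
    ext x
    simp [ψ.coe_apply_eq_mul_apply_one x, hf]
  by_contra hf
  set k := (padicValRat p (ψ 1)).toNat + 1
  have hval := padicValRat_nonneg hP₂ hp hp₂ (ψ ⟨_, inv_pow_mem hp₁ k⟩).2
  rw [ψ.coe_apply_eq_mul_apply_one, Subtype.coe_mk, padicValRat.mul (by simp [hp.ne_zero]) hf,
    padicValRat.pow, padicValRat.inv, padicValRat.self hp.one_lt] at hval
  omega

theorem prod_addMonoidHom_apply {P₁ P₂ : Set ℕ} (hP₁ : ∀ p ∈ P₁, p.Prime)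
    (hP₂ : ∀ p ∈ P₂, p.Prime) (hss : P₂ ⊂ P₁) (ψ : PRing P₁ × PRing P₂ →+ PRing P₁ × PRing P₂)
    (a : PRing P₁) (b : PRing P₂) :
    ((ψ (a, b)).1 : ℚ) = (ψ (1, 0)).1 * a + (ψ (0, 1)).1 * b ∧
      ((ψ (a, b)).2 : ℚ) = (ψ (0, 1)).2 * b := by
  let ψ₁ := (AddMonoidHom.fst _ _).comp (ψ.comp (AddMonoidHom.inl _ _))
  let ψ₂ := (AddMonoidHom.snd _ _).comp (ψ.comp (AddMonoidHom.inl _ _))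
  let ψ₃ := (AddMonoidHom.fst _ _).comp (ψ.comp (AddMonoidHom.inr _ _))
  let ψ₄ := (AddMonoidHom.snd _ _).comp (ψ.comp (AddMonoidHom.inr _ _))
  obtain ⟨p, hp₁, hp₂⟩ := Set.exists_of_ssubset hss
  have hψ₂ : ψ₂ = 0 := addMonoidHom_eq_zero hP₂ (hP₁ p hp₁) hp₁ hp₂ ψ₂
  have hsplit : ψ (a, b) = ψ (a, 0) + ψ (0, b) := by
    rw [← map_add, Prod.mk_add_mk, add_zero, zero_add]
  have h₁ := ψ₁.coe_apply_eq_mul_apply_one a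
  have h₂ : ψ₂ a = 0 := by rw [hψ₂]; rfl
  have h₃ := ψ₃.coe_apply_eq_mul_apply_one b
  have h₄ := ψ₄.coe_apply_eq_mul_apply_one b
  simp only [ψ₁, ψ₂, ψ₃, ψ₄, AddMonoidHom.comp_apply, AddMonoidHom.inl_apply,
    AddMonoidHom.inr_apply, AddMonoidHom.coe_fst, AddMonoidHom.coe_snd] at h₁ h₂ h₃ h₄
  rw [hsplit, Prod.fst_add, Prod.snd_add, Subring.coe_add, Subring.coe_add, h₁, h₂, h₃, h₄]
  constructor <;> push_cast <;> ring

end PRing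

theorem Subring.isUnit_of_coe_mul_eq_one {C : Subring ℚ} {x y : C} (h : (x : ℚ) * y = 1) :
    IsUnit y :=
  .of_mul_eq_one_right x (Subtype.ext h)

/-- Let `𝒫₂ ⊊ 𝒫₁` be sets of primes and `Cᵢ = ℤ[𝒫ᵢ⁻¹]`. Then every automorphism `φ` of the
additive group `C₁ × C₂` has the form `φ(a,b) = (c·a + e·b, d·b)` with `c` a unit of the
ring `C₁`, `e ∈ C₁` and `d` a unit of the ring `C₂`. -/
theorem aut_prod_PRing_triangular (P₁ P₂ : Set ℕ)
    (hP₁ : ∀ p ∈ P₁, p.Prime) (hP₂ : ∀ p ∈ P₂, p.Prime) (hss : P₂ ⊂ P₁)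
    (φ : (↥(PRing P₁) × ↥(PRing P₂)) ≃+ (↥(PRing P₁) × ↥(PRing P₂))) :
    ∃ (c e : ↥(PRing P₁)) (d : ↥(PRing P₂)), IsUnit c ∧ IsUnit d ∧
      ∀ (a : ↥(PRing P₁)) (b : ↥(PRing P₂)),
        ((φ (a, b)).1 : ℚ) = (c : ℚ) * (a : ℚ) + (e : ℚ) * (b : ℚ) ∧
        ((φ (a, b)).2 : ℚ) = (d : ℚ) * (b : ℚ) := by
  have hφ := PRing.prod_addMonoidHom_apply hP₁ hP₂ hss φ.toAddMonoidHom
  have hφinv := PRing.prod_addMonoidHom_apply hP₁ hP₂ hss φ.symm.toAddMonoidHom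
  simp only [AddEquiv.coe_toAddMonoidHom] at hφ hφinv
  have hφ₁₀ : φ (1, 0) = ((φ (1, 0)).1, 0) :=
    Prod.ext rfl (Subtype.ext (by simpa using (hφ 1 0).2))
  have hc : ((φ.symm (1, 0)).1 : ℚ) * (φ (1, 0)).1 = 1 := by
    simpa [← hφ₁₀] using ((hφinv (φ (1, 0)).1 0).1).symm
  have hd : ((φ.symm (0, 1)).2 : ℚ) * (φ (0, 1)).2 = 1 := by
    simpa using ((hφinv (φ (0, 1)).1 (φ (0, 1)).2).2).symm
  exact ⟨_, _, _, Subring.isUnit_of_coe_mul_eq_one hc, Subring.isUnit_of_coe_mul_eq_one hd, hφ⟩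
end
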